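/- arXiv:2310.06787 — 11 statements merged into one kernel-verified Lean document; each statement's English description precedes it below -/
import Mathlib

section
/- Let K be a nonempty compact Hausdorff space, V a linear subspace of C(K, ℝ) containing the constant functions, and f : V → ℝ a positive linear functional (meaning f(ψ) ≥ 0 whenever ψ ∈ V satisfies ψ(x) ≥ 0 for all x ∈ K) with f(1) = 1. Then for every φ ∈ C(K, ℝ) and every real number r, there exists a positive linear functional F : C(K, ℝ) → ℝ with F(ψ) = f(ψ) for all ψ ∈ V and F(φ) = r if and only if sup { f(ψ) : ψ ∈ V, ψ(x) ≤ φ(x) for all x } ≤ r ≤ inf { f(ψ) : ψ ∈ V, ψ(x) ≥ φ(x) for all x }. In other words, the set of possible values F(φ) over all positive linear extensions F of f is exactly this closed interval. -/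
open MeasureTheory

/-- The set of possible values of positive linear extensions of a positive linear
functional on a subspace of `C(K, ℝ)` containing the constants is exactly the
interval `[sup {f ψ : ψ ≤ φ}, inf {f ψ : ψ ≥ φ}]`. -/
theorem stmt0 {K : Type*} [TopologicalSpace K] [CompactSpace K] [T2Space K] [Nonempty K]
    (V : Submodule ℝ C(K, ℝ)) (h1 : (1 : C(K, ℝ)) ∈ V)
    (f : V →ₗ[ℝ] ℝ)
    (hfpos : ∀ ψ : V, (∀ x : K, 0 ≤ (ψ : C(K, ℝ)) x) → 0 ≤ f ψ)
    (hf1 : f ⟨1, h1⟩ = 1)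
    (φ : C(K, ℝ)) (r : ℝ) :
    (∃ F : C(K, ℝ) →ₗ[ℝ] ℝ,
      (∀ g : C(K, ℝ), (∀ x : K, 0 ≤ g x) → 0 ≤ F g) ∧
      (∀ ψ : V, F (ψ : C(K, ℝ)) = f ψ) ∧ F φ = r) ↔
    (sSup {t : ℝ | ∃ ψ : V, (∀ x : K, (ψ : C(K, ℝ)) x ≤ φ x) ∧ f ψ = t} ≤ r ∧
      r ≤ sInf {t : ℝ | ∃ ψ : V, (∀ x : K, φ x ≤ (ψ : C(K, ℝ)) x) ∧ f ψ = t}) := by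
  set S := {t : ℝ | ∃ ψ : V, (∀ x : K, (ψ : C(K, ℝ)) x ≤ φ x) ∧ f ψ = t} with hS
  set T := {t : ℝ | ∃ ψ : V, (∀ x : K, φ x ≤ (ψ : C(K, ℝ)) x) ∧ f ψ = t} with hT
  -- monotonicity of f
  have hmono : ∀ ψ₁ ψ₂ : V, (∀ x, (ψ₁ : C(K, ℝ)) x ≤ (ψ₂ : C(K, ℝ)) x) → f ψ₁ ≤ f ψ₂ := by
    intro ψ₁ ψ₂ h
    have := hfpos (ψ₂ - ψ₁) (by intro x; simp [sub_nonneg]; exact h x)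
    rw [map_sub] at this; linarith
  -- value of f on constants
  have hconst : ∀ c : ℝ, f ⟨c • (1 : C(K, ℝ)), V.smul_mem c h1⟩ = c := by
    intro c
    have : (⟨c • (1 : C(K, ℝ)), V.smul_mem c h1⟩ : V) = c • ⟨1, h1⟩ := rfl
    rw [this, LinearMap.map_smul, hf1, smul_eq_mul, mul_one]
  have hφle : ∀ x : K, φ x ≤ ‖φ‖ := fun x =>
    le_trans (le_abs_self _) (φ.norm_coe_le_norm x)
  have hφge : ∀ x : K, -‖φ‖ ≤ φ x := fun x =>
    neg_le_of_abs_le (φ.norm_coe_le_norm x)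
  have hSne : S.Nonempty := by
    refine ⟨f ⟨(-‖φ‖) • 1, V.smul_mem _ h1⟩, ⟨(-‖φ‖) • 1, V.smul_mem _ h1⟩, ?_, rfl⟩
    intro x; simpa using hφge x
  have hTne : T.Nonempty := by
    refine ⟨f ⟨‖φ‖ • 1, V.smul_mem _ h1⟩, ⟨‖φ‖ • 1, V.smul_mem _ h1⟩, ?_, rfl⟩
    intro x; simpa using hφle x
  have hSbdd : BddAbove S := by
    refine ⟨f ⟨‖φ‖ • 1, V.smul_mem _ h1⟩, ?_⟩
    rintro t ⟨ψ, hψ, rfl⟩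
    exact hmono _ _ fun x => by simpa using (hψ x).trans (hφle x)
  have hTbdd : BddBelow T := by
    refine ⟨f ⟨(-‖φ‖) • 1, V.smul_mem _ h1⟩, ?_⟩
    rintro t ⟨ψ, hψ, rfl⟩
    exact hmono _ _ fun x => by simpa using (hφge x).trans (hψ x)
  constructor
  · rintro ⟨F, hFpos, hFext, hFφ⟩
    constructor
    · refine csSup_le hSne ?_
      rintro t ⟨ψ, hψ, rfl⟩
      have := hFpos (φ - ψ) (by intro x; simp [sub_nonneg]; exact hψ x)
      rw [map_sub, hFext, hFφ] at this; linarith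
    · refine le_csInf hTne ?_
      rintro t ⟨ψ, hψ, rfl⟩
      have := hFpos ((ψ : C(K, ℝ)) - φ) (by intro x; simp [sub_nonneg]; exact hψ x)
      rw [map_sub, hFext, hFφ] at this; linarith
  · rintro ⟨hsup, hinf⟩
    -- key positivity
    have key : ∀ (ψ : V) (c : ℝ), (∀ x : K, 0 ≤ (ψ : C(K, ℝ)) x + c * φ x) →
        0 ≤ f ψ + c * r := by
      intro ψ c hpos
      rcases lt_trichotomy c 0 with hc | hc | hc
      · -- c < 0 : φ ≤ (-(1/c)) • ψ
        have hmem : f ((-(1/c)) • ψ) ∈ T := by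
          refine ⟨(-(1/c)) • ψ, ?_, rfl⟩
          intro x
          have := hpos x
          have hx : ((((-(1/c)) • ψ : V) : C(K, ℝ))) x = (-(1/c)) * (ψ : C(K, ℝ)) x := by
            simp
          rw [hx, show -(1/c) * (ψ : C(K, ℝ)) x = (ψ : C(K, ℝ)) x / (-c) from by ring,
            le_div_iff₀ (by linarith : (0:ℝ) < -c)]
          nlinarith [hpos x]
        have hr : r ≤ f ((-(1/c)) • ψ) := hinf.trans (csInf_le hTbdd hmem)
        rw [LinearMap.map_smul, smul_eq_mul] at hr
        have h4 : c * (-(1/c) * f ψ) ≤ c * r := mul_le_mul_of_nonpos_left hr (le_of_lt hc)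
        have h5 : c * (-(1/c) * f ψ) = -f ψ := by rw [show c * (-(1/c) * f ψ) = -((c * f ψ) / c) from by ring, mul_div_cancel_left₀ _ (ne_of_lt hc)]
        linarith
      · subst hc; simpa using hfpos ψ (by simpa using hpos)
      · have hmem : f ((-(1/c)) • ψ) ∈ S := by
          refine ⟨(-(1/c)) • ψ, ?_, rfl⟩
          intro x
          have hx : ((((-(1/c)) • ψ : V) : C(K, ℝ))) x = (-(1/c)) * (ψ : C(K, ℝ)) x := by
            simp
          rw [hx, show -(1/c) * (ψ : C(K, ℝ)) x = (-((ψ : C(K, ℝ)) x)) / c from by ring,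
            div_le_iff₀ hc]
          nlinarith [hpos x]
        have hr : f ((-(1/c)) • ψ) ≤ r := (le_csSup hSbdd hmem).trans hsup
        rw [LinearMap.map_smul, smul_eq_mul] at hr
        have h4 : c * (-(1/c) * f ψ) ≤ c * r := mul_le_mul_of_nonneg_left hr (le_of_lt hc)
        have h5 : c * (-(1/c) * f ψ) = -f ψ := by rw [show c * (-(1/c) * f ψ) = -((c * f ψ) / c) from by ring, mul_div_cancel_left₀ _ (ne_of_gt hc)]
        linarith
    -- the positive cone in C(K, ℝ)
    let s : PointedCone ℝ C(K, ℝ) :=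
      { carrier := {g : C(K, ℝ) | ∀ x : K, 0 ≤ g x}
        zero_mem' := fun x => le_refl (0 : ℝ)
        smul_mem' := fun c g hg x => by
          exact mul_nonneg c.2 (hg x)
        add_mem' := fun {g h} hg hh x => add_nonneg (hg x) (hh x) }
    have hsmem : ∀ g : C(K, ℝ), g ∈ s ↔ ∀ x : K, 0 ≤ g x := fun g => Iff.rfl
    by_cases hφV : φ ∈ V
    · -- φ ∈ V : the value r is forced to be f φ
      have hrS : f ⟨φ, hφV⟩ ∈ S := ⟨⟨φ, hφV⟩, fun x => le_refl _, rfl⟩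
      have hrT : f ⟨φ, hφV⟩ ∈ T := ⟨⟨φ, hφV⟩, fun x => le_refl _, rfl⟩
      have hr : r = f ⟨φ, hφV⟩ :=
        le_antisymm (hinf.trans (csInf_le hTbdd hrT)) ((le_csSup hSbdd hrS).trans hsup)
      obtain ⟨g, hg1, hg2⟩ := riesz_extension s ⟨V, f⟩
        (fun x hx => hfpos x hx)
        (fun y => ⟨⟨‖y‖ • 1, V.smul_mem _ h1⟩, fun x => by
          simp; linarith [neg_le_of_abs_le (y.norm_coe_le_norm x)]⟩)
      exact ⟨g, fun h hh => hg2 h hh, fun ψ => hg1 ψ, by rw [hr]; exact hg1 ⟨φ, hφV⟩⟩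
    · -- φ ∉ V : extend f to V ⊔ ℝ ∙ φ with value r at φ, then apply Riesz extension
      set pf := LinearPMap.supSpanSingleton (⟨V, f⟩ : C(K, ℝ) →ₗ.[ℝ] ℝ) φ r hφV with hpf
      have hdom : pf.domain = V ⊔ ℝ ∙ φ := rfl
      have hpfval : ∀ (ψ : C(K, ℝ)) (hψ : ψ ∈ V) (c : ℝ)
          (h : ψ + c • φ ∈ pf.domain), pf ⟨ψ + c • φ, h⟩ = f ⟨ψ, hψ⟩ + c * r := by
        intro ψ hψ c h
        have := LinearPMap.supSpanSingleton_apply_mk (⟨V, f⟩ : C(K, ℝ) →ₗ.[ℝ] ℝ) φ r hφV ψ hψ c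
        rw [show (⟨ψ + c • φ, h⟩ : pf.domain)
            = ⟨ψ + c • φ, Submodule.mem_sup.2 ⟨ψ, hψ, _,
                Submodule.mem_span_singleton.2 ⟨c, rfl⟩, rfl⟩⟩ from Subtype.ext rfl]
        rw [this]; rfl
      obtain ⟨g, hg1, hg2⟩ := riesz_extension s pf
        (by
          rintro ⟨x, hx⟩ hxs
          rw [hdom] at hx
          obtain ⟨ψ, hψ, w, hw, rfl⟩ := Submodule.mem_sup.1 hx
          obtain ⟨c, rfl⟩ := Submodule.mem_span_singleton.1 hw
          rw [hpfval ψ hψ c _]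
          exact key ⟨ψ, hψ⟩ c (fun x => by simpa using hxs x))
        (fun y => ⟨⟨‖y‖ • 1, Submodule.mem_sup_left (V.smul_mem _ h1)⟩, fun x => by
          simp; linarith [neg_le_of_abs_le (y.norm_coe_le_norm x)]⟩)
      refine ⟨g, fun h hh => hg2 h hh, ?_, ?_⟩
      · intro ψ
        have hmem : (ψ : C(K, ℝ)) ∈ pf.domain := Submodule.mem_sup_left ψ.2
        have h0 : (ψ : C(K, ℝ)) = (ψ : C(K, ℝ)) + (0 : ℝ) • φ := by simp
        calc g (ψ : C(K, ℝ)) = pf ⟨(ψ : C(K, ℝ)), hmem⟩ := hg1 ⟨_, hmem⟩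
          _ = pf ⟨(ψ : C(K, ℝ)) + (0 : ℝ) • φ, h0 ▸ hmem⟩ := by
              congr 1; exact Subtype.ext h0
          _ = f ⟨(ψ : C(K, ℝ)), ψ.2⟩ + 0 * r := hpfval _ ψ.2 0 _
          _ = f ψ := by simp
      · have hmem : φ ∈ pf.domain :=
          Submodule.mem_sup_right (Submodule.mem_span_singleton.2 ⟨1, one_smul ℝ φ⟩)
        have h0 : φ = 0 + (1 : ℝ) • φ := by simp
        calc g φ = pf ⟨φ, hmem⟩ := hg1 ⟨_, hmem⟩
          _ = pf ⟨0 + (1 : ℝ) • φ, h0 ▸ hmem⟩ := by congr 1; exact Subtype.ext h0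
          _ = f ⟨0, V.zero_mem⟩ + 1 * r := hpfval _ V.zero_mem 1 _
          _ = r := by
              rw [show (⟨0, V.zero_mem⟩ : V) = 0 from rfl, map_zero]; ring
end

section
/- Let p : K → L be a continuous surjection between compact Hausdorff spaces, μ a regular Borel probability measure on L, φ : K → ℝ continuous, and r ∈ ℝ. Then there exists a regular Borel probability measure ν on K such that ∫_K ψ(p(x)) dν(x) = ∫_L ψ dμ for every continuous ψ : L → ℝ and ∫_K φ dν = r, if and only if sup { ∫_L ψ dμ : ψ : L → ℝ continuous, ψ(p(x)) ≤ φ(x) for all x ∈ K } ≤ r ≤ inf { ∫_L ψ dμ : ψ : L → ℝ continuous, ψ(p(x)) ≥ φ(x) for all x ∈ K }. -/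
/-!
The upper integral `φ ↦ inf {∫ ψ dμ : φ ≤ ψ ∘ p}` is a sublinear functional on `C(K, ℝ)`, and the
supremum in the statement is minus the upper integral of `-φ`. If `ν` pushes forward to `μ`, then
`∫ φ dν ≤ ∫ ψ dμ` whenever `φ ≤ ψ ∘ p`, which gives the two bounds. Conversely, if `r` lies between
them, Hahn–Banach extends `a • φ ↦ a * r` to a linear functional `Λ` dominated by the upper
integral. Domination makes `Λ` positive and forces `Λ (ψ ∘ p) = ∫ ψ dμ`, and the
Riesz–Markov–Kakutani theorem represents `Λ` by a regular probability measure `ν`.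
-/

open MeasureTheory
open scoped CompactlySupported


theorem exists_linearMap_le_sublinear_apply_eq {E : Type*} [AddCommGroup E] [Module ℝ E]
    (N : E → ℝ) (N_hom : ∀ c : ℝ, 0 < c → ∀ x, N (c • x) = c * N x)
    (N_add : ∀ x y, N (x + y) ≤ N x + N y) {x : E} {t : ℝ}
    (h₁ : -N (-x) ≤ t) (h₂ : t ≤ N x) :
    ∃ Λ : E →ₗ[ℝ] ℝ, (∀ y, Λ y ≤ N y) ∧ Λ x = t := by
  have N_zero : N 0 = 0 := by grind [N_hom 2 (by norm_num) 0, smul_zero]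
  have hconsistent : ∀ c : ℝ, c • x = 0 → RingHom.id ℝ c • t = 0 := by
    intro c hc
    rcases eq_or_ne c 0 with rfl | hc0
    · exact zero_smul ℝ t
    · obtain rfl := (smul_eq_zero.1 hc).resolve_left hc0
      rw [neg_zero, N_zero] at h₁
      simp [le_antisymm (h₂.trans N_zero.le) (by linarith)]
  let F := LinearPMap.mkSpanSingleton' x t hconsistent
  have hF : ∀ y : F.domain, F y ≤ N y := by
    rintro ⟨y, hy⟩
    obtain ⟨c, rfl⟩ := Submodule.mem_span_singleton.1 hy
    rw [LinearPMap.mkSpanSingleton'_apply]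
    change c * t ≤ N (c • x)
    rcases lt_trichotomy c 0 with hc | rfl | hc
    · have hcx : c • x = (-c) • -x := by rw [smul_neg, neg_smul, neg_neg]
      rw [hcx, N_hom (-c) (neg_pos.2 hc)]
      linarith [mul_le_mul_of_nonneg_left h₁ (neg_nonneg.2 hc.le)]
    · simp [N_zero]
    · rw [N_hom c hc]
      exact mul_le_mul_of_nonneg_left h₂ hc.le
  obtain ⟨Λ, hΛF, hΛN⟩ := exists_extension_of_le_sublinear F N N_hom N_add hF
  exact ⟨Λ, hΛN, (hΛF ⟨x, Submodule.mem_span_singleton_self x⟩).trans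
    (LinearPMap.mkSpanSingleton'_apply_self x t hconsistent _)⟩

theorem exists_regular_isProbabilityMeasure_integral_eq {X : Type*} [TopologicalSpace X]
    [CompactSpace X] [T2Space X] [MeasurableSpace X] [BorelSpace X]
    (Λ : C(X, ℝ) →ₚ[ℝ] ℝ) (hone : Λ 1 = 1) :
    ∃ ν : Measure X, IsProbabilityMeasure ν ∧ ν.Regular ∧ ∀ f : C(X, ℝ), ∫ x, f x ∂ν = Λ f := by
  let Λc : C_c(X, ℝ) →ₚ[ℝ] ℝ :=
    { toFun f := Λ f
      map_add' f g := map_add Λ (f : C(X, ℝ)) g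
      map_smul' c f := map_smul Λ c (f : C(X, ℝ))
      monotone' f g hfg := Λ.monotone' hfg }
  have hΛc : ∀ f : C(X, ℝ), ∫ x, f x ∂(RealRMK.rieszMeasure Λc) = Λ f := fun f =>
    RealRMK.integral_rieszMeasure Λc (CompactlySupportedContinuousMap.continuousMapEquiv f)
  refine ⟨RealRMK.rieszMeasure Λc, ⟨?_⟩, inferInstance, hΛc⟩
  have h := hΛc 1
  simp only [hone, ContinuousMap.one_apply, integral_const, smul_eq_mul, mul_one,
    measureReal_def] at h
  exact (ENNReal.toReal_eq_one_iff _).1 h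

theorem ContinuousMap.integrable_of_compactSpace {X : Type*} [TopologicalSpace X]
    [CompactSpace X] [MeasurableSpace X] [OpensMeasurableSpace X] (μ : Measure X)
    [IsFiniteMeasure μ] (f : C(X, ℝ)) : Integrable f μ :=
  f.continuous.integrable_of_hasCompactSupport (.of_compactSpace f)

section UpperIntegral

variable {K L : Type*} [TopologicalSpace K] [TopologicalSpace L] [MeasurableSpace L]

noncomputable def upperIntegral (p : K → L) (μ : Measure L) (φ : C(K, ℝ)) : ℝ :=
  sInf {t : ℝ | ∃ ψ : C(L, ℝ), (∀ x : K, φ x ≤ ψ (p x)) ∧ ∫ y, ψ y ∂μ = t}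

theorem sSup_integral_le_eq_neg_upperIntegral_neg (p : K → L) (μ : Measure L) (φ : C(K, ℝ)) :
    sSup {t : ℝ | ∃ ψ : C(L, ℝ), (∀ x : K, ψ (p x) ≤ φ x) ∧ ∫ y, ψ y ∂μ = t} =
      -upperIntegral p μ (-φ) := by
  rw [upperIntegral, ← Real.sSup_neg]
  congr 1
  ext t
  constructor
  · rintro ⟨ψ, hψ, rfl⟩
    exact ⟨-ψ, fun x => neg_le_neg (hψ x), by simp [integral_neg]⟩
  · rintro ⟨ψ, hψ, ht⟩
    refine ⟨-ψ, fun x => neg_le.1 (hψ x), ?_⟩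
    simp [integral_neg, ht]

variable [CompactSpace K] {p : K → L} {μ : Measure L}

theorem le_upperIntegral {φ : C(K, ℝ)} {t : ℝ}
    (h : ∀ ψ : C(L, ℝ), (∀ x, φ x ≤ ψ (p x)) → t ≤ ∫ y, ψ y ∂μ) :
    t ≤ upperIntegral p μ φ := by
  refine le_csInf ⟨_, .const L ‖φ‖, fun x => ?_, rfl⟩ ?_
  · exact (le_abs_self _).trans (φ.norm_coe_le_norm x)
  · rintro _ ⟨ψ, hψ, rfl⟩
    exact h ψ hψ

theorem integral_le_upperIntegral [MeasurableSpace K] [OpensMeasurableSpace K] {ν : Measure K}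
    [IsFiniteMeasure ν] (hpc : Continuous p)
    (hpush : ∀ ψ : C(L, ℝ), ∫ x, ψ (p x) ∂ν = ∫ y, ψ y ∂μ) (φ : C(K, ℝ)) :
    ∫ x, φ x ∂ν ≤ upperIntegral p μ φ :=
  le_upperIntegral fun ψ hψ => hpush ψ ▸ integral_mono (φ.integrable_of_compactSpace ν)
    ((ψ.comp ⟨p, hpc⟩).integrable_of_compactSpace ν) hψ

variable [CompactSpace L] [OpensMeasurableSpace L] [IsProbabilityMeasure μ]

theorem upperIntegral_le (hp : Function.Surjective p) {φ : C(K, ℝ)} {ψ : C(L, ℝ)}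
    (h : ∀ x, φ x ≤ ψ (p x)) : upperIntegral p μ φ ≤ ∫ y, ψ y ∂μ := by
  refine csInf_le ⟨-‖φ‖, ?_⟩ ⟨ψ, h, rfl⟩
  rintro _ ⟨ψ', hψ', rfl⟩
  have hbound : ∀ y, -‖φ‖ ≤ ψ' y := by
    intro y
    obtain ⟨x, rfl⟩ := hp y
    exact (neg_le_of_abs_le (φ.norm_coe_le_norm x)).trans (hψ' x)
  simpa using integral_mono (integrable_const _) (ψ'.integrable_of_compactSpace μ) hbound

theorem upperIntegral_add_le (hp : Function.Surjective p) (φ₁ φ₂ : C(K, ℝ)) :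
    upperIntegral p μ (φ₁ + φ₂) ≤ upperIntegral p μ φ₁ + upperIntegral p μ φ₂ := by
  rw [← sub_le_iff_le_add]
  refine le_upperIntegral fun ψ₁ hψ₁ => ?_
  rw [sub_le_comm]
  refine le_upperIntegral fun ψ₂ hψ₂ => ?_
  rw [sub_le_iff_le_add, ← integral_add (ψ₂.integrable_of_compactSpace μ)
    (ψ₁.integrable_of_compactSpace μ)]
  exact upperIntegral_le hp (ψ := ψ₂ + ψ₁) fun x =>
    (add_le_add (hψ₁ x) (hψ₂ x)).trans_eq (add_comm _ _)

theorem upperIntegral_smul_le (hp : Function.Surjective p) {c : ℝ} (hc : 0 < c)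
    (φ : C(K, ℝ)) : upperIntegral p μ (c • φ) ≤ c * upperIntegral p μ φ := by
  rw [← div_le_iff₀' hc]
  refine le_upperIntegral fun ψ hψ => ?_
  rw [div_le_iff₀' hc, ← integral_const_mul]
  exact upperIntegral_le hp (ψ := c • ψ) fun x => mul_le_mul_of_nonneg_left (hψ x) hc.le

theorem upperIntegral_smul (hp : Function.Surjective p) {c : ℝ} (hc : 0 < c)
    (φ : C(K, ℝ)) : upperIntegral p μ (c • φ) = c * upperIntegral p μ φ := by
  refine le_antisymm (upperIntegral_smul_le hp hc φ) ?_
  have h := upperIntegral_smul_le (μ := μ) hp (inv_pos.2 hc) (c • φ)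
  rw [inv_smul_smul₀ hc.ne'] at h
  exact (le_inv_mul_iff₀ hc).1 h

theorem exists_positiveLinearMap_comp_eq_integral (hpc : Continuous p)
    (hp : Function.Surjective p) {φ : C(K, ℝ)} {r : ℝ}
    (h₁ : -upperIntegral p μ (-φ) ≤ r) (h₂ : r ≤ upperIntegral p μ φ) :
    ∃ Λ : C(K, ℝ) →ₚ[ℝ] ℝ, (∀ ψ : C(L, ℝ), Λ (ψ.comp ⟨p, hpc⟩) = ∫ y, ψ y ∂μ) ∧ Λ φ = r := by
  obtain ⟨Λ, hΛN, hΛφ⟩ := exists_linearMap_le_sublinear_apply_eq (upperIntegral p μ)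
    (fun c hc => upperIntegral_smul hp hc) (upperIntegral_add_le hp) h₁ h₂
  have hΛ_le {f : C(K, ℝ)} {ψ : C(L, ℝ)} (h : ∀ x, f x ≤ ψ (p x)) : Λ f ≤ ∫ y, ψ y ∂μ :=
    (hΛN f).trans (upperIntegral_le hp h)
  have hpos (f : C(K, ℝ)) (hf : 0 ≤ f) : 0 ≤ Λ f := by
    simpa using hΛ_le (f := -f) (ψ := 0) fun x => by simpa using hf x
  refine ⟨.mk₀ Λ hpos, fun ψ => le_antisymm (hΛ_le fun _ => le_rfl) ?_, hΛφ⟩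
  have h := hΛ_le (f := -ψ.comp ⟨p, hpc⟩) (ψ := -ψ) fun _ => le_rfl
  simp only [map_neg, ContinuousMap.neg_apply, integral_neg, neg_le_neg_iff] at h
  exact h

end UpperIntegral

theorem stmt2_general {K L : Type*}
    [TopologicalSpace K] [CompactSpace K] [T2Space K] [MeasurableSpace K] [BorelSpace K]
    [TopologicalSpace L] [CompactSpace L] [MeasurableSpace L] [BorelSpace L]
    (p : K → L) (hpc : Continuous p) (hps : Function.Surjective p)
    (μ : Measure L) [IsProbabilityMeasure μ]
    (φ : C(K, ℝ)) (r : ℝ) :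
    (∃ ν : Measure K, IsProbabilityMeasure ν ∧ ν.Regular ∧
      (∀ ψ : C(L, ℝ), ∫ x, ψ (p x) ∂ν = ∫ y, ψ y ∂μ) ∧
      ∫ x, φ x ∂ν = r) ↔
    (sSup {t : ℝ | ∃ ψ : C(L, ℝ), (∀ x : K, ψ (p x) ≤ φ x) ∧ ∫ y, ψ y ∂μ = t} ≤ r ∧
      r ≤ sInf {t : ℝ | ∃ ψ : C(L, ℝ), (∀ x : K, φ x ≤ ψ (p x)) ∧ ∫ y, ψ y ∂μ = t}) := by
  rw [sSup_integral_le_eq_neg_upperIntegral_neg]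
  constructor
  · rintro ⟨ν, hν, -, hpush, rfl⟩
    have h := integral_le_upperIntegral hpc hpush (-φ)
    simp only [ContinuousMap.neg_apply, integral_neg] at h
    exact ⟨neg_le.1 h, integral_le_upperIntegral hpc hpush φ⟩
  · rintro ⟨h₁, h₂⟩
    obtain ⟨Λ, hΛp, hΛφ⟩ := exists_positiveLinearMap_comp_eq_integral hpc hps h₁ h₂
    obtain ⟨ν, hν, hreg, hνΛ⟩ :=
      exists_regular_isProbabilityMeasure_integral_eq Λ (by simpa using hΛp 1)
    exact ⟨ν, hν, hreg, fun ψ => (hνΛ _).trans (hΛp ψ), (hνΛ φ).trans hΛφ⟩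

/-- Given a continuous surjection `p : K → L` of compact Hausdorff spaces and a regular
Borel probability measure `μ` on `L`, the possible values of `∫ φ dν` over all regular
Borel probability measures `ν` on `K` pushing forward to `μ` form exactly the interval
`[sup {∫ ψ dμ : ψ ∘ p ≤ φ}, inf {∫ ψ dμ : ψ ∘ p ≥ φ}]`. -/
theorem stmt2 {K L : Type*}
    [TopologicalSpace K] [CompactSpace K] [T2Space K] [MeasurableSpace K] [BorelSpace K]
    [TopologicalSpace L] [CompactSpace L] [T2Space L] [MeasurableSpace L] [BorelSpace L]
    (p : K → L) (hpc : Continuous p) (hps : Function.Surjective p)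
    (μ : Measure L) [IsProbabilityMeasure μ] [μ.Regular]
    (φ : C(K, ℝ)) (r : ℝ) :
    (∃ ν : Measure K, IsProbabilityMeasure ν ∧ ν.Regular ∧
      (∀ ψ : C(L, ℝ), ∫ x, ψ (p x) ∂ν = ∫ y, ψ y ∂μ) ∧
      ∫ x, φ x ∂ν = r) ↔
    (sSup {t : ℝ | ∃ ψ : C(L, ℝ), (∀ x : K, ψ (p x) ≤ φ x) ∧ ∫ y, ψ y ∂μ = t} ≤ r ∧
      r ≤ sInf {t : ℝ | ∃ ψ : C(L, ℝ), (∀ x : K, φ x ≤ ψ (p x)) ∧ ∫ y, ψ y ∂μ = t}) :=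
  stmt2_general p hpc hps μ φ r
end

section
/- Let K, K_1, …, K_n be compact Hausdorff spaces, π_i : K → K_i continuous maps, and μ_i a regular Borel probability measure on K_i for each i. Suppose μ_1, …, μ_n are weakly orthogonal, and let θ_i : K_i → [0, 1] be Borel measurable functions with ∫ θ_i dμ_i > 0 for each i. Then the localizations (μ_1)_{θ_1}, …, (μ_n)_{θ_n} are also weakly orthogonal. -/
open MeasureTheory

/-- The localization `μ_θ` of a measure `μ` by a `[0,1]`-valued Borel density `θ`:
`μ_θ(S) = (∫_S θ dμ) / (∫ θ dμ)`. -/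
noncomputable def localize {X : Type*} [MeasurableSpace X] (μ : Measure X) (θ : X → ℝ) :
    Measure X :=
  ((μ.withDensity fun x => ENNReal.ofReal (θ x)) Set.univ)⁻¹ •
    μ.withDensity fun x => ENNReal.ofReal (θ x)

/-- `ω` is a product measure of the `μ i` along the maps `π i`. -/
def IsProductMeasure {n : ℕ} {K : Type*} [TopologicalSpace K] [MeasurableSpace K]
    {Ki : Fin n → Type*} [∀ i, TopologicalSpace (Ki i)] [∀ i, MeasurableSpace (Ki i)]
    (π : ∀ i, K → Ki i) (μ : ∀ i, Measure (Ki i)) (ω : Measure K) : Prop :=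
  IsProbabilityMeasure ω ∧ ω.Regular ∧
    ∀ f : ∀ i, C(Ki i, ℝ), ∫ x, ∏ i, (f i) (π i x) ∂ω = ∏ i, ∫ y, (f i) y ∂(μ i)

/-- The measures `μ i` are weakly orthogonal: they admit a unique product measure. -/
def WeaklyOrthogonal {n : ℕ} {K : Type*} [TopologicalSpace K] [MeasurableSpace K]
    {Ki : Fin n → Type*} [∀ i, TopologicalSpace (Ki i)] [∀ i, MeasurableSpace (Ki i)]
    (π : ∀ i, K → Ki i) (μ : ∀ i, Measure (Ki i)) : Prop :=
  ∃! ω : Measure K, IsProductMeasure π μ ω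

section Helpers
open Set ENNReal

variable {X : Type*} [TopologicalSpace X] [MeasurableSpace X]

lemma bdd_integrable {μ : Measure X} [IsFiniteMeasure μ] {f : X → ℝ} (hf : Measurable f)
    {C : ℝ} (hC : ∀ x, |f x| ≤ C) : Integrable f μ :=
  (integrable_const C).mono' hf.aestronglyMeasurable (Filter.Eventually.of_forall fun x => by
    simpa using hC x)

lemma regular_of_le [T2Space X] [BorelSpace X] {μ ν : Measure X} [IsFiniteMeasure μ]
    [μ.Regular] (h : ν ≤ μ) : ν.Regular := by
  have hfin : IsFiniteMeasure ν := ⟨lt_of_le_of_lt (h _) (measure_lt_top μ _)⟩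
  have hIR : ν.InnerRegular := by
    constructor
    intro A hA r hr
    obtain ⟨m, hm1, hm2⟩ := exists_between hr
    set δ : ℝ≥0∞ := m - r with hδdef
    have hδ0 : 0 < δ := tsub_pos_of_lt hm1
    have hδtop : δ ≠ ∞ := (lt_of_le_of_lt (tsub_le_self) (hm2.trans (measure_lt_top ν A))).ne
    have hrδ : r + δ < ν A := by rwa [add_tsub_cancel_of_le hm1.le]
    have hμA : μ A ≠ ∞ := measure_ne_top μ A
    have hμA0 : μ A ≠ 0 := by
      intro h0
      have h1 : ν A = 0 := le_antisymm ((h A).trans h0.le) bot_le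
      rw [h1] at hr
      exact (not_lt_bot hr)
    have hlt : μ A - δ < μ A := ENNReal.sub_lt_self hμA hμA0 hδ0.ne'
    obtain ⟨Kc, hKA, hKcomp, hK⟩ := hA.exists_lt_isCompact hlt
    have hKmeas : MeasurableSet Kc := hKcomp.isClosed.measurableSet
    have hdiff : μ (A \ Kc) ≤ δ := by
      rw [measure_diff hKA hKmeas.nullMeasurableSet (measure_ne_top μ Kc)]
      rw [tsub_le_iff_right]
      rcases le_total (μ A) δ with hc | hc
      · exact hc.trans (le_add_right le_rfl)
      · exact le_of_lt (by rw [add_comm]; exact (ENNReal.sub_lt_iff_lt_right hδtop hc).1 hK)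
    have hsub : ν A ≤ ν Kc + δ := by
      calc ν A ≤ ν (A \ Kc) + ν Kc := (measure_mono (subset_diff_union A Kc)).trans (measure_union_le _ _)
        _ ≤ δ + ν Kc := add_le_add ((h _).trans hdiff) le_rfl
        _ = ν Kc + δ := add_comm _ _
    refine ⟨Kc, hKA, hKcomp, ?_⟩
    have := hrδ.trans_le hsub
    exact (ENNReal.add_lt_add_iff_right hδtop).1 this
  exact inferInstance

lemma regular_add [T2Space X] [BorelSpace X] {μ ν : Measure X} [IsFiniteMeasure μ]
    [IsFiniteMeasure ν] [μ.Regular] [ν.Regular] : (μ + ν).Regular := by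
  have hfin : IsFiniteMeasure (μ + ν) := by infer_instance
  have hμ : μ.InnerRegular := inferInstance
  have hν : ν.InnerRegular := inferInstance
  have hIR : (μ + ν).InnerRegular := by
    constructor
    intro A hA r hr
    rw [Measure.add_apply] at hr
    rcases eq_or_ne (μ A) 0 with h0 | h0
    · rw [h0, zero_add] at hr
      obtain ⟨K, hKA, hKc, hK⟩ := hA.exists_lt_isCompact hr
      exact ⟨K, hKA, hKc, hK.trans_le (le_add_left le_rfl)⟩
    rcases eq_or_ne (ν A) 0 with h1 | h1
    · rw [h1, add_zero] at hr
      obtain ⟨K, hKA, hKc, hK⟩ := hA.exists_lt_isCompact hr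
      exact ⟨K, hKA, hKc, hK.trans_le (le_add_right le_rfl)⟩
    obtain ⟨r₁, hr₁, r₂, hr₂, hrr⟩ := ENNReal.exists_lt_add_of_lt_add hr h0 h1
    obtain ⟨K₁, hK₁A, hK₁c, hK₁⟩ := hA.exists_lt_isCompact hr₁
    obtain ⟨K₂, hK₂A, hK₂c, hK₂⟩ := hA.exists_lt_isCompact hr₂
    refine ⟨K₁ ∪ K₂, union_subset hK₁A hK₂A, hK₁c.union hK₂c, ?_⟩
    rw [Measure.add_apply]
    exact hrr.trans (ENNReal.add_lt_add (hK₁.trans_le (measure_mono subset_union_left))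
      (hK₂.trans_le (measure_mono subset_union_right)))
  exact inferInstance

lemma ext_of_integral_continuous [CompactSpace X] [T2Space X] [BorelSpace X]
    {μ ν : Measure X} [IsFiniteMeasure μ] [IsFiniteMeasure ν] [μ.Regular] [ν.Regular]
    (h : ∀ f : C(X, ℝ), (∀ x, f x ∈ Icc (0:ℝ) 1) → ∫ x, f x ∂μ = ∫ x, f x ∂ν) :
    μ = ν := by
  have key : ∀ (μ ν : Measure X), IsFiniteMeasure μ → IsFiniteMeasure ν → μ.Regular → ν.Regular →
      (∀ f : C(X, ℝ), (∀ x, f x ∈ Icc (0:ℝ) 1) → ∫ x, f x ∂μ = ∫ x, f x ∂ν) →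
      ∀ U : Set X, IsOpen U → μ U ≤ ν U := by
    intro μ ν hμf hνf hμr hνr h U hU
    rw [hU.measure_eq_iSup_isCompact]
    refine iSup₂_le fun K hKU => iSup_le fun hKc => ?_
    obtain ⟨f, hf0, hf1, hf01⟩ := exists_continuous_zero_one_of_isClosed
      hU.isClosed_compl hKc.isClosed (disjoint_compl_left_iff.2 hKU)
    have hintμ : Integrable (fun x => f x) μ := f.continuous.integrable_of_hasCompactSupport
      (HasCompactSupport.of_compactSpace _)
    have hintν : Integrable (fun x => f x) ν := f.continuous.integrable_of_hasCompactSupport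
      (HasCompactSupport.of_compactSpace _)
    have hKm : MeasurableSet K := hKc.isClosed.measurableSet
    have hUm : MeasurableSet U := hU.measurableSet
    have h1 : (μ K).toReal ≤ ∫ x, f x ∂μ := by
      change μ.real K ≤ _
      rw [← integral_indicator_one hKm]
      refine integral_mono (by
        exact (integrable_const (1:ℝ)).indicator hKm) hintμ fun x => ?_
      by_cases hx : x ∈ K
      · simp [indicator_of_mem hx, hf1 hx]
      · simp only [indicator_of_notMem hx]
        exact (hf01 x).1
    have h2 : ∫ x, f x ∂ν ≤ (ν U).toReal := by
      change _ ≤ ν.real U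
      rw [← integral_indicator_one hUm]
      refine integral_mono hintν (by exact (integrable_const (1:ℝ)).indicator hUm) fun x => ?_
      by_cases hx : x ∈ U
      · simp only [indicator_of_mem hx]
        exact (hf01 x).2
      · have : f x = 0 := hf0 hx
        simp [indicator_of_notMem hx, this]
    have := (h1.trans ((h f hf01).le)).trans h2
    exact (ENNReal.toReal_le_toReal (measure_ne_top μ K) (measure_ne_top ν U)).1 this
  have heq : ∀ U : Set X, IsOpen U → μ U = ν U := fun U hU =>
    le_antisymm (key μ ν ‹_› ‹_› ‹_› ‹_› h U hU)
      (key ν μ ‹_› ‹_› ‹_› ‹_› (fun f hf => (h f hf).symm) U hU)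
  ext A hA
  rw [Set.measure_eq_iInf_isOpen A μ, Set.measure_eq_iInf_isOpen A ν]
  exact iInf_congr fun U => iInf_congr fun _ => iInf_congr fun hU => heq U hU

lemma wd_univ {μ : Measure X} [IsFiniteMeasure μ] {θ : X → ℝ} (hθm : Measurable θ)
    (hθ01 : ∀ x, θ x ∈ Icc (0:ℝ) 1) :
    (μ.withDensity fun x => ENNReal.ofReal (θ x)) univ = ENNReal.ofReal (∫ x, θ x ∂μ) := by
  rw [withDensity_apply _ MeasurableSet.univ, Measure.restrict_univ,
    ← ofReal_integral_eq_lintegral_ofReal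
      (bdd_integrable hθm (C := 1) fun x => abs_le.2 ⟨by linarith [(hθ01 x).1], (hθ01 x).2⟩)
      (Filter.Eventually.of_forall fun x => (hθ01 x).1)]

lemma integral_withDensity_ofReal {μ : Measure X} {θ : X → ℝ} (hθm : Measurable θ)
    (hθ0 : ∀ x, 0 ≤ θ x) (f : X → ℝ) :
    ∫ x, f x ∂(μ.withDensity fun x => ENNReal.ofReal (θ x)) = ∫ x, θ x * f x ∂μ := by
  have hd : (fun x => ENNReal.ofReal (θ x)) = fun x => ((θ x).toNNReal : ℝ≥0∞) := rfl
  rw [hd, integral_withDensity_eq_integral_smul hθm.real_toNNReal]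
  congr 1
  ext x
  rw [NNReal.smul_def, Real.coe_toNNReal _ (hθ0 x), smul_eq_mul]

lemma integral_localize {μ : Measure X} [IsFiniteMeasure μ] {θ : X → ℝ} (hθm : Measurable θ)
    (hθ01 : ∀ x, θ x ∈ Icc (0:ℝ) 1) (hpos : 0 < ∫ x, θ x ∂μ) (f : X → ℝ) :
    ∫ x, f x ∂(localize μ θ) = (∫ x, θ x ∂μ)⁻¹ * ∫ x, θ x * f x ∂μ := by
  rw [localize, integral_smul_measure, wd_univ hθm hθ01,
    integral_withDensity_ofReal hθm (fun x => (hθ01 x).1) f, ENNReal.toReal_inv,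
    ENNReal.toReal_ofReal hpos.le, smul_eq_mul]

lemma isProbabilityMeasure_localize {μ : Measure X} [IsFiniteMeasure μ] {θ : X → ℝ}
    (hθm : Measurable θ) (hθ01 : ∀ x, θ x ∈ Icc (0:ℝ) 1) (hpos : 0 < ∫ x, θ x ∂μ) :
    IsProbabilityMeasure (localize μ θ) := by
  constructor
  rw [localize, Measure.smul_apply, smul_eq_mul, wd_univ hθm hθ01]
  exact ENNReal.inv_mul_cancel (by simpa using (ENNReal.ofReal_pos.2 hpos).ne') ofReal_ne_top

lemma withDensity_le_of_le_one {μ : Measure X} {θ : X → ℝ} (hθ1 : ∀ x, θ x ≤ 1) :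
    (μ.withDensity fun x => ENNReal.ofReal (θ x)) ≤ μ := by
  intro s
  calc (μ.withDensity fun x => ENNReal.ofReal (θ x)) s
      ≤ (μ.withDensity fun _ => (1:ℝ≥0∞)) s := by
        refine Measure.le_iff'.1 (withDensity_mono ?_) s
        exact Filter.Eventually.of_forall fun x => by
          simpa using ENNReal.ofReal_le_one.2 (hθ1 x)
    _ = μ s := by rw [show (fun _ : X => (1:ℝ≥0∞)) = 1 from rfl, withDensity_one]

lemma regular_localize [T2Space X] [BorelSpace X] {μ : Measure X} [IsFiniteMeasure μ]
    [μ.Regular] {θ : X → ℝ} (hθm : Measurable θ) (hθ01 : ∀ x, θ x ∈ Icc (0:ℝ) 1)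
    (hpos : 0 < ∫ x, θ x ∂μ) : (localize μ θ).Regular := by
  have h1 : (μ.withDensity fun x => ENNReal.ofReal (θ x)).Regular :=
    regular_of_le (withDensity_le_of_le_one fun x => (hθ01 x).2)
  have h2 : ((μ.withDensity fun x => ENNReal.ofReal (θ x)) univ)⁻¹ ≠ ∞ := by
    rw [wd_univ hθm hθ01]
    simpa using (ENNReal.ofReal_pos.2 hpos).ne'
  exact Measure.Regular.smul h2

end Helpers

section ProdExt
open Set ENNReal
variable {n : ℕ} {K : Type*} [TopologicalSpace K] [CompactSpace K] [T2Space K]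
    [MeasurableSpace K] [BorelSpace K]
    {Ki : Fin n → Type*} [∀ i, TopologicalSpace (Ki i)] [∀ i, CompactSpace (Ki i)]
    [∀ i, T2Space (Ki i)] [∀ i, MeasurableSpace (Ki i)] [∀ i, BorelSpace (Ki i)]

lemma prod_ext_nonneg (π : ∀ i, K → Ki i) (hπ : ∀ i, Continuous (π i))
    (μ : ∀ i, Measure (Ki i)) (hprob : ∀ i, IsProbabilityMeasure (μ i))
    (hreg : ∀ i, (μ i).Regular)
    (ω : Measure K) (hω : IsProductMeasure π μ ω)
    (f : ∀ i, C(Ki i, ℝ)) (hf : ∀ i x, 0 ≤ f i x)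
    (ψ : ∀ i, Ki i → ℝ) (hψm : ∀ i, Measurable (ψ i))
    (hψ01 : ∀ i x, ψ i x ∈ Icc (0:ℝ) 1) :
    ∫ x, ∏ i, (f i (π i x) * ψ i (π i x)) ∂ω = ∏ i, ∫ y, f i y * ψ i y ∂(μ i) := by
  haveI hωP : IsProbabilityMeasure ω := hω.1
  haveI hωR : ω.Regular := hω.2.1
  have hπm : ∀ i, Measurable (π i) := fun i => (hπ i).measurable
  suffices H : ∀ s : Finset (Fin n), ∀ f : ∀ i, C(Ki i, ℝ), (∀ i x, 0 ≤ f i x) →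
      ∀ ψ : ∀ i, Ki i → ℝ, (∀ i, Measurable (ψ i)) → (∀ i x, ψ i x ∈ Icc (0:ℝ) 1) →
      (∀ i ∉ s, ψ i = fun _ => 1) →
      ∫ x, ∏ i, (f i (π i x) * ψ i (π i x)) ∂ω = ∏ i, ∫ y, f i y * ψ i y ∂(μ i) by
    exact H Finset.univ f hf ψ hψm hψ01 (fun i hi => absurd (Finset.mem_univ i) hi)
  intro s
  induction s using Finset.induction_on with
  | empty =>
    intro f hf ψ hψm hψ01 hψs
    have hψ1 : ∀ i y, ψ i y = 1 := fun i y => by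
      rw [hψs i (Finset.notMem_empty i)]
    simp only [hψ1, mul_one]
    exact hω.2.2 f
  | @insert j s hj IH =>
    intro f hf ψ hψm hψ01 hψs
    classical
    set ψ' : ∀ i, Ki i → ℝ := Function.update ψ j (fun _ => (1:ℝ)) with hψ'def
    have hψ'm : ∀ i, Measurable (ψ' i) := by
      intro i
      rcases eq_or_ne i j with rfl | hij
      · simpa [hψ'def] using (measurable_const : Measurable fun _ : Ki i => (1:ℝ))
      · simpa [hψ'def, Function.update_of_ne hij] using hψm i
    have hψ'01 : ∀ i x, ψ' i x ∈ Icc (0:ℝ) 1 := by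
      intro i x
      rcases eq_or_ne i j with rfl | hij
      · simp [hψ'def, Function.update_self]
      · simp only [hψ'def, Function.update_of_ne hij]
        exact hψ01 i x
    have hψ's : ∀ i ∉ s, ψ' i = fun _ => 1 := by
      intro i hi
      rcases eq_or_ne i j with rfl | hij
      · simp [hψ'def]
      · simp only [hψ'def, Function.update_of_ne hij]
        exact hψs i (by simp [Finset.mem_insert, hij, hi])
    -- density on K
    set ρ : K → ℝ := fun x => ∏ i ∈ Finset.univ.erase j, (f i (π i x) * ψ i (π i x)) with hρdef
    have hρ0 : ∀ x, 0 ≤ ρ x := fun x =>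
      Finset.prod_nonneg fun i _ => mul_nonneg (hf i _) (hψ01 i _).1
    have hρm : Measurable ρ :=
      Finset.measurable_prod _ fun i _ =>
        ((f i).continuous.measurable.comp (hπm i)).mul ((hψm i).comp (hπm i))
    set C : ℝ := ∏ i ∈ Finset.univ.erase j, ‖f i‖ with hCdef
    have hfact : ∀ (i : Fin n) (y : Ki i), f i y * ψ i y ≤ ‖f i‖ := by
      intro i y
      calc f i y * ψ i y ≤ f i y * 1 := by
            exact mul_le_mul_of_nonneg_left (hψ01 i y).2 (hf i y)
        _ = f i y := mul_one _
        _ ≤ ‖f i‖ := (abs_le.1 ((f i).norm_coe_le_norm y)).2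
    have hρC : ∀ x, ρ x ≤ C := fun x =>
      Finset.prod_le_prod (fun i _ => mul_nonneg (hf i _) (hψ01 i _).1)
        (fun i _ => hfact i _)
    set D : Measure K := ω.withDensity (fun x => ENNReal.ofReal (ρ x)) with hDdef
    have hDle : D ≤ (ENNReal.ofReal C) • ω := by
      intro t
      calc D t ≤ (ω.withDensity fun _ => ENNReal.ofReal C) t := by
            refine Measure.le_iff'.1 (withDensity_mono ?_) t
            exact Filter.Eventually.of_forall fun x => ENNReal.ofReal_le_ofReal (hρC x)
        _ = ((ENNReal.ofReal C) • ω) t := by rw [withDensity_const]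
    haveI : IsFiniteMeasure ((ENNReal.ofReal C) • ω) := by
      constructor
      rw [Measure.smul_apply, smul_eq_mul]
      exact ENNReal.mul_lt_top ofReal_lt_top (measure_lt_top ω _)
    haveI : ((ENNReal.ofReal C) • ω).Regular := Measure.Regular.smul ofReal_ne_top
    haveI hDreg : D.Regular := regular_of_le hDle
    haveI hDfin : IsFiniteMeasure D :=
      ⟨lt_of_le_of_lt (hDle _) (measure_lt_top _ _)⟩
    set ν₁ : Measure (Ki j) := D.map (π j) with hν₁def
    haveI : IsFiniteMeasure ν₁ := by
      constructor
      rw [hν₁def, Measure.map_apply (hπm j) MeasurableSet.univ]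
      exact lt_of_le_of_lt (measure_mono (subset_univ _)) (measure_lt_top D _)
    haveI : ν₁.InnerRegular := Measure.InnerRegular.map_of_continuous (hπ j)
    haveI : ν₁.Regular := inferInstance
    set c : ℝ := ∏ i ∈ Finset.univ.erase j, ∫ y, f i y * ψ i y ∂(μ i) with hcdef
    have hc0 : 0 ≤ c := Finset.prod_nonneg fun i _ =>
      integral_nonneg fun y => mul_nonneg (hf i _) (hψ01 i _).1
    set ν₂ : Measure (Ki j) := (ENNReal.ofReal c) • μ j with hν₂def
    haveI : IsFiniteMeasure ν₂ := by
      constructor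
      rw [hν₂def, Measure.smul_apply, smul_eq_mul]
      exact ENNReal.mul_lt_top ofReal_lt_top (measure_lt_top _ _)
    haveI : (μ j).Regular := hreg j
    haveI : ν₂.Regular := Measure.Regular.smul ofReal_ne_top
    -- integral against ν₁ in terms of ω
    have hν₁int : ∀ u : Ki j → ℝ, Measurable u →
        ∫ y, u y ∂ν₁ = ∫ x, ρ x * u (π j x) ∂ω := by
      intro u hu
      rw [hν₁def, integral_map (hπm j).aemeasurable hu.aestronglyMeasurable, hDdef,
        integral_withDensity_ofReal hρm hρ0]
    -- integral against ν₂
    have hν₂int : ∀ u : Ki j → ℝ, ∫ y, u y ∂ν₂ = c * ∫ y, u y ∂(μ j) := by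
      intro u
      rw [hν₂def, integral_smul_measure, ENNReal.toReal_ofReal hc0, smul_eq_mul]
    -- the ω-side identity from IH
    have hIHid : ∀ h : C(Ki j, ℝ), (∀ y, 0 ≤ h y) →
        ∫ x, ρ x * h (π j x) ∂ω = c * ∫ y, h y ∂(μ j) := by
      intro h hh
      set F : ∀ i, C(Ki i, ℝ) := Function.update f j h with hFdef
      have hF : ∀ i x, 0 ≤ F i x := by
        intro i x
        rcases eq_or_ne i j with rfl | hij
        · simp only [hFdef, Function.update_self]; exact hh x
        · simp only [hFdef, Function.update_of_ne hij]; exact hf i x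
      have key := IH F hF ψ' hψ'm hψ'01 hψ's
      have hpt : ∀ x, (∏ i, (F i (π i x) * ψ' i (π i x))) = ρ x * h (π j x) := by
        intro x
        rw [← Finset.mul_prod_erase Finset.univ _ (Finset.mem_univ j)]
        have h1 : F j (π j x) * ψ' j (π j x) = h (π j x) := by
          simp [hFdef, hψ'def]
        have h2 : ∏ i ∈ Finset.univ.erase j, (F i (π i x) * ψ' i (π i x)) = ρ x := by
          refine Finset.prod_congr rfl fun i hi => ?_
          have hij : i ≠ j := Finset.ne_of_mem_erase hi
          simp [hFdef, hψ'def, Function.update_of_ne hij]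
        rw [h1, h2, mul_comm]
      have hrhs : (∏ i, ∫ y, F i y * ψ' i y ∂(μ i)) = (∫ y, h y ∂(μ j)) * c := by
        rw [← Finset.mul_prod_erase Finset.univ _ (Finset.mem_univ j)]
        have h1 : ∫ y, F j y * ψ' j y ∂(μ j) = ∫ y, h y ∂(μ j) := by
          simp [hFdef, hψ'def]
        have h2 : ∏ i ∈ Finset.univ.erase j, ∫ y, F i y * ψ' i y ∂(μ i) = c := by
          refine Finset.prod_congr rfl fun i hi => ?_
          have hij : i ≠ j := Finset.ne_of_mem_erase hi
          simp [hFdef, hψ'def, Function.update_of_ne hij]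
        rw [h1, h2]
      calc ∫ x, ρ x * h (π j x) ∂ω
          = ∫ x, ∏ i, (F i (π i x) * ψ' i (π i x)) ∂ω := by simp only [hpt]
        _ = ∏ i, ∫ y, F i y * ψ' i y ∂(μ i) := key
        _ = c * ∫ y, h y ∂(μ j) := by rw [hrhs, mul_comm]
    -- ν₁ = ν₂
    have hνeq : ν₁ = ν₂ := by
      refine ext_of_integral_continuous fun h h01 => ?_
      rw [hν₁int h h.continuous.measurable, hν₂int h, hIHid h (fun y => (h01 y).1)]
    -- conclude
    set g : Ki j → ℝ := fun y => f j y * ψ j y with hgdef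
    have hgm : Measurable g := (f j).continuous.measurable.mul (hψm j)
    have hpt2 : ∀ x, (∏ i, (f i (π i x) * ψ i (π i x))) = ρ x * g (π j x) := by
      intro x
      rw [← Finset.mul_prod_erase Finset.univ _ (Finset.mem_univ j), mul_comm]
    calc ∫ x, ∏ i, (f i (π i x) * ψ i (π i x)) ∂ω
        = ∫ x, ρ x * g (π j x) ∂ω := by simp only [hpt2]
      _ = ∫ y, g y ∂ν₁ := (hν₁int g hgm).symm
      _ = ∫ y, g y ∂ν₂ := by rw [hνeq]
      _ = c * ∫ y, g y ∂(μ j) := hν₂int g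
      _ = ∏ i, ∫ y, f i y * ψ i y ∂(μ i) := by
          rw [← Finset.mul_prod_erase Finset.univ
            (fun i => ∫ y, f i y * ψ i y ∂(μ i)) (Finset.mem_univ j), mul_comm]

lemma prod_ext (π : ∀ i, K → Ki i) (hπ : ∀ i, Continuous (π i))
    (μ : ∀ i, Measure (Ki i)) (hprob : ∀ i, IsProbabilityMeasure (μ i))
    (hreg : ∀ i, (μ i).Regular)
    (ω : Measure K) (hω : IsProductMeasure π μ ω)
    (f : ∀ i, C(Ki i, ℝ))
    (ψ : ∀ i, Ki i → ℝ) (hψm : ∀ i, Measurable (ψ i))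
    (hψ01 : ∀ i x, ψ i x ∈ Icc (0:ℝ) 1) :
    ∫ x, ∏ i, (f i (π i x) * ψ i (π i x)) ∂ω = ∏ i, ∫ y, f i y * ψ i y ∂(μ i) := by
  classical
  haveI hωP : IsProbabilityMeasure ω := hω.1
  have hπm : ∀ i, Measurable (π i) := fun i => (hπ i).measurable
  set g : ∀ i, C(Ki i, ℝ) := fun i => f i + ContinuousMap.const _ ‖f i‖ with hgdef
  have hg0 : ∀ i y, 0 ≤ g i y := by
    intro i y
    have := (abs_le.1 ((f i).norm_coe_le_norm y)).1
    simp only [hgdef, ContinuousMap.add_apply, ContinuousMap.const_apply]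
    linarith
  -- the family used for subset t
  set G : Finset (Fin n) → ∀ i, C(Ki i, ℝ) :=
    fun t i => if i ∈ t then g i else ContinuousMap.const _ 1 with hGdef
  have hG0 : ∀ t i y, 0 ≤ G t i y := by
    intro t i y
    by_cases hi : i ∈ t <;> simp [hGdef, hi, hg0]
  set c : Finset (Fin n) → ℝ := fun t => ∏ i ∈ Finset.univ \ t, (-‖f i‖) with hcdef
  -- integrability helper
  have hint : ∀ (F : ∀ i, C(Ki i, ℝ)),
      Integrable (fun x => ∏ i, (F i (π i x) * ψ i (π i x))) ω := by
    intro F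
    refine bdd_integrable (Finset.measurable_prod _ fun i _ =>
      ((F i).continuous.measurable.comp (hπm i)).mul ((hψm i).comp (hπm i)))
      (C := ∏ i, ‖F i‖) fun x => ?_
    rw [Finset.abs_prod]
    refine Finset.prod_le_prod (fun i _ => abs_nonneg _) fun i _ => ?_
    rw [abs_mul]
    calc |F i (π i x)| * |ψ i (π i x)| ≤ ‖F i‖ * 1 := by
          refine mul_le_mul ((F i).norm_coe_le_norm _) ?_ (abs_nonneg _) (norm_nonneg _)
          rw [abs_le]
          exact ⟨by linarith [(hψ01 i (π i x)).1], (hψ01 i (π i x)).2⟩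
      _ = ‖F i‖ := mul_one _
    -- pointwise decomposition
  have hpt : ∀ x, (∏ i, (f i (π i x) * ψ i (π i x)))
      = ∑ t ∈ Finset.univ.powerset, c t * ∏ i, (G t i (π i x) * ψ i (π i x)) := by
    intro x
    have h1 : ∀ i, f i (π i x) * ψ i (π i x)
        = g i (π i x) * ψ i (π i x) + (-‖f i‖) * ψ i (π i x) := by
      intro i
      simp only [hgdef, ContinuousMap.add_apply, ContinuousMap.const_apply]
      ring
    rw [Finset.prod_congr rfl fun i _ => h1 i, Finset.prod_add]
    refine Finset.sum_congr rfl fun t ht => ?_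
    rw [Finset.mem_powerset] at ht
    have h2 : ∏ i ∈ Finset.univ \ t, ((-‖f i‖) * ψ i (π i x))
        = c t * ∏ i ∈ Finset.univ \ t, ψ i (π i x) := by
      rw [Finset.prod_mul_distrib]
    have h3 : ∏ i, (G t i (π i x) * ψ i (π i x))
        = (∏ i ∈ t, (g i (π i x) * ψ i (π i x))) * ∏ i ∈ Finset.univ \ t, ψ i (π i x) := by
      rw [← Finset.prod_sdiff ht (f := fun i => G t i (π i x) * ψ i (π i x))]
      rw [mul_comm]
      congr 1
      · exact Finset.prod_congr rfl fun i hi => by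
          simp [hGdef, hi]
      · exact Finset.prod_congr rfl fun i hi => by
          simp [hGdef, (Finset.mem_sdiff.1 hi).2]
    rw [h2, h3]
    ring
  -- integral-level decomposition of RHS factors
  have hrhs : ∀ i, ∫ y, f i y * ψ i y ∂(μ i)
      = ∫ y, g i y * ψ i y ∂(μ i) + (-‖f i‖) * ∫ y, ψ i y ∂(μ i) := by
    intro i
    haveI := hprob i
    have hgint : Integrable (fun y => g i y * ψ i y) (μ i) :=
      bdd_integrable ((g i).continuous.measurable.mul (hψm i)) (C := ‖g i‖) fun y => by
        rw [abs_mul]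
        calc |g i y| * |ψ i y| ≤ ‖g i‖ * 1 := by
              refine mul_le_mul ((g i).norm_coe_le_norm _) ?_ (abs_nonneg _) (norm_nonneg _)
              rw [abs_le]; exact ⟨by linarith [(hψ01 i y).1], (hψ01 i y).2⟩
          _ = ‖g i‖ := mul_one _
    have hψint : Integrable (fun y => ψ i y) (μ i) :=
      bdd_integrable (hψm i) (C := 1) fun y => by
        rw [abs_le]; exact ⟨by linarith [(hψ01 i y).1], (hψ01 i y).2⟩
    have h1 : ∀ y, f i y * ψ i y = g i y * ψ i y + (-‖f i‖) * ψ i y := by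
      intro y
      simp only [hgdef, ContinuousMap.add_apply, ContinuousMap.const_apply]
      ring
    simp only [h1]
    rw [integral_add hgint (hψint.const_mul _), integral_const_mul]
  calc ∫ x, ∏ i, (f i (π i x) * ψ i (π i x)) ∂ω
      = ∑ t ∈ Finset.univ.powerset, c t * ∏ i, ∫ y, G t i y * ψ i y ∂(μ i) := by
        simp only [hpt]
        rw [integral_finset_sum _ fun t _ => ((hint (G t)).const_mul (c t))]
        refine Finset.sum_congr rfl fun t _ => ?_
        rw [integral_const_mul,
          prod_ext_nonneg π hπ μ hprob hreg ω hω (G t) (hG0 t) ψ hψm hψ01]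
    _ = ∏ i, ∫ y, f i y * ψ i y ∂(μ i) := by
        simp only [hrhs]
        rw [Finset.prod_add]
        refine Finset.sum_congr rfl fun t ht => ?_
        rw [Finset.mem_powerset] at ht
        have h3 : ∏ i, ∫ y, G t i y * ψ i y ∂(μ i)
            = (∏ i ∈ t, ∫ y, g i y * ψ i y ∂(μ i))
              * ∏ i ∈ Finset.univ \ t, ∫ y, ψ i y ∂(μ i) := by
          rw [← Finset.prod_sdiff ht (f := fun i => ∫ y, G t i y * ψ i y ∂(μ i)), mul_comm]
          congr 1
          · exact Finset.prod_congr rfl fun i hi => by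
              simp [hGdef, hi]
          · exact Finset.prod_congr rfl fun i hi => by
              simp [hGdef, (Finset.mem_sdiff.1 hi).2]
        have h2 : ∏ i ∈ Finset.univ \ t, ((-‖f i‖) * ∫ y, ψ i y ∂(μ i))
            = c t * ∏ i ∈ Finset.univ \ t, ∫ y, ψ i y ∂(μ i) :=
          Finset.prod_mul_distrib
        rw [h3, h2]
        ring

end ProdExt

open Set ENNReal in
/-- Weak orthogonality is preserved by localization at `[0,1]`-valued Borel functions
of positive integral. -/
theorem stmt5 {n : ℕ} {K : Type*} [TopologicalSpace K] [CompactSpace K] [T2Space K]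
    [MeasurableSpace K] [BorelSpace K]
    {Ki : Fin n → Type*} [∀ i, TopologicalSpace (Ki i)] [∀ i, CompactSpace (Ki i)]
    [∀ i, T2Space (Ki i)] [∀ i, MeasurableSpace (Ki i)] [∀ i, BorelSpace (Ki i)]
    (π : ∀ i, K → Ki i) (hπ : ∀ i, Continuous (π i))
    (μ : ∀ i, Measure (Ki i)) (hprob : ∀ i, IsProbabilityMeasure (μ i))
    (hreg : ∀ i, (μ i).Regular)
    (hWO : WeaklyOrthogonal π μ)
    (θ : ∀ i, Ki i → ℝ) (hθm : ∀ i, Measurable (θ i))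
    (hθ01 : ∀ i x, θ i x ∈ Set.Icc (0 : ℝ) 1)
    (hθpos : ∀ i, 0 < ∫ y, θ i y ∂(μ i)) :
    WeaklyOrthogonal π (fun i => localize (μ i) (θ i)) := by
  classical
  obtain ⟨ω, hω, huniq⟩ := hWO
  haveI hωP : IsProbabilityMeasure ω := hω.1
  haveI hωR : ω.Regular := hω.2.1
  haveI : ∀ i, IsFiniteMeasure (μ i) := fun i => by haveI := hprob i; infer_instance
  have hπm : ∀ i, Measurable (π i) := fun i => (hπ i).measurable
  set a : Fin n → ℝ := fun i => ∫ y, θ i y ∂(μ i) with hadef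
  set A : ℝ := ∏ i, a i with hAdef
  have hApos : 0 < A := Finset.prod_pos fun i _ => hθpos i
  have hai1 : ∀ i, a i ≤ 1 := by
    intro i
    have h1 : ∫ y, θ i y ∂(μ i) ≤ ∫ y, (1:ℝ) ∂(μ i) :=
      integral_mono (bdd_integrable (hθm i) (C := 1) fun y => abs_le.2
        ⟨by linarith [(hθ01 i y).1], (hθ01 i y).2⟩) (integrable_const 1)
        (fun y => (hθ01 i y).2)
    simpa [hadef] using h1
  have hA1 : A ≤ 1 :=
    Finset.prod_le_one (fun i _ => (hθpos i).le) (fun i _ => hai1 i)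
  set Θ : K → ℝ := fun x => ∏ i, θ i (π i x) with hΘdef
  have hΘm : Measurable Θ :=
    Finset.measurable_prod _ fun i _ => (hθm i).comp (hπm i)
  have hΘ01 : ∀ x, Θ x ∈ Icc (0:ℝ) 1 := fun x =>
    ⟨Finset.prod_nonneg fun i _ => (hθ01 i _).1,
     Finset.prod_le_one (fun i _ => (hθ01 i _).1) (fun i _ => (hθ01 i _).2)⟩
  -- key identity
  have hkey : ∀ f : ∀ i, C(Ki i, ℝ),
      ∫ x, (∏ i, f i (π i x)) * Θ x ∂ω = ∏ i, ∫ y, f i y * θ i y ∂(μ i) := by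
    intro f
    have h1 := prod_ext π hπ μ hprob hreg ω hω f θ hθm hθ01
    have h2 : ∀ x, (∏ i, f i (π i x)) * Θ x = ∏ i, (f i (π i x) * θ i (π i x)) := by
      intro x
      rw [hΘdef, ← Finset.prod_mul_distrib]
    simp only [h2]
    exact h1
  have hΘint : ∫ x, Θ x ∂ω = A := by
    have h1 := hkey (fun _ => ContinuousMap.const _ 1)
    simpa [hadef, hAdef] using h1
  have hΘpos : 0 < ∫ x, Θ x ∂ω := by rw [hΘint]; exact hApos
  set μ' : ∀ i, Measure (Ki i) := fun i => localize (μ i) (θ i) with hμ'def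
  -- integrals against μ' i
  have hμ'int : ∀ (i : Fin n) (u : Ki i → ℝ),
      ∫ y, u y ∂(μ' i) = (a i)⁻¹ * ∫ y, θ i y * u y ∂(μ i) := fun i u =>
    integral_localize (hθm i) (hθ01 i) (hθpos i) u
  set W : Measure K := ω.withDensity (fun x => ENNReal.ofReal (Θ x)) with hWdef
  have hWuniv : W univ = ENNReal.ofReal A := by
    rw [hWdef, wd_univ hΘm hΘ01, hΘint]
  have hloc : localize ω Θ = ((ENNReal.ofReal A)⁻¹ : ℝ≥0∞) • W := by
    rw [localize, ← hWdef, hWuniv]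
  have hA0 : (ENNReal.ofReal A) ≠ 0 := by
    simpa using (ENNReal.ofReal_pos.2 hApos).ne'
  -- the candidate product measure
  have hprod0 : IsProductMeasure π μ' (localize ω Θ) := by
    refine ⟨isProbabilityMeasure_localize hΘm hΘ01 hΘpos,
      regular_localize hΘm hΘ01 hΘpos, fun f => ?_⟩
    have h1 : ∫ x, ∏ i, f i (π i x) ∂(localize ω Θ)
        = (∫ x, Θ x ∂ω)⁻¹ * ∫ x, Θ x * ∏ i, f i (π i x) ∂ω :=
      integral_localize hΘm hΘ01 hΘpos _
    have h2 : ∫ x, Θ x * ∏ i, f i (π i x) ∂ω = ∏ i, ∫ y, f i y * θ i y ∂(μ i) := by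
      rw [← hkey f]
      congr 1
      ext x
      ring
    rw [h1, h2, hΘint]
    rw [Finset.prod_congr rfl fun i _ => hμ'int i (f i), Finset.prod_mul_distrib,
      Finset.prod_inv_distrib]
    have hAe : (∏ i, a i) = A := rfl
    rw [hAe]
    congr 1
    exact Finset.prod_congr rfl fun i _ => by
      congr 1
      ext y
      ring
  refine ⟨localize ω Θ, hprod0, ?_⟩
  intro ω' hω'
  haveI hω'P : IsProbabilityMeasure ω' := hω'.1
  haveI hω'R : ω'.Regular := hω'.2.1
  set V : Measure K := ω.withDensity (fun x => ENNReal.ofReal (1 - Θ x)) with hVdef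
  have hVle : V ≤ ω := withDensity_le_of_le_one (fun x => by linarith [(hΘ01 x).1])
  haveI hVfin : IsFiniteMeasure V := ⟨lt_of_le_of_lt (hVle _) (measure_lt_top ω _)⟩
  haveI hVreg : V.Regular := regular_of_le hVle
  have h1Θm : Measurable (fun x => 1 - Θ x) := measurable_const.sub hΘm
  have h1Θ01 : ∀ x, (1 - Θ x) ∈ Icc (0:ℝ) 1 :=
    fun x => ⟨by linarith [(hΘ01 x).2], by linarith [(hΘ01 x).1]⟩
  set ωt : Measure K := V + (ENNReal.ofReal A) • ω' with hωtdef
  haveI : IsFiniteMeasure ((ENNReal.ofReal A) • ω') := by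
    constructor
    rw [Measure.smul_apply, smul_eq_mul]
    exact ENNReal.mul_lt_top ofReal_lt_top (measure_lt_top _ _)
  haveI : ((ENNReal.ofReal A) • ω').Regular := Measure.Regular.smul ofReal_ne_top
  have hωtprod : IsProductMeasure π μ ωt := by
    refine ⟨?_, ?_, ?_⟩
    · constructor
      have hsub : ∫ x, (1 - Θ x) ∂ω = 1 - A := by
        rw [integral_sub (integrable_const 1) (bdd_integrable hΘm (C := 1) fun x => abs_le.2
          ⟨by linarith [(hΘ01 x).1], (hΘ01 x).2⟩), hΘint]
        simp
      have hVuniv : V univ = ENNReal.ofReal (1 - A) := by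
        rw [hVdef, wd_univ h1Θm h1Θ01, hsub]
      rw [hωtdef, Measure.add_apply, hVuniv, Measure.smul_apply, smul_eq_mul,
        measure_univ, mul_one, ← ENNReal.ofReal_add (by linarith) hApos.le]
      norm_num
    · exact regular_add
    · intro f
      have hfint : ∀ (ν : Measure K) , IsFiniteMeasure ν →
          Integrable (fun x => ∏ i, f i (π i x)) ν := by
        intro ν hν
        exact bdd_integrable (Finset.measurable_prod _ fun i _ =>
          (f i).continuous.measurable.comp (hπm i)) (C := ∏ i, ‖f i‖) fun x => by
            rw [Finset.abs_prod]
            exact Finset.prod_le_prod (fun i _ => abs_nonneg _)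
              (fun i _ => (f i).norm_coe_le_norm _)
      rw [hωtdef, integral_add_measure (hfint V hVfin) (hfint _ inferInstance),
        integral_smul_measure, ENNReal.toReal_ofReal hApos.le]
      have hV : ∫ x, ∏ i, f i (π i x) ∂V
          = ∫ x, ∏ i, f i (π i x) ∂ω - ∏ i, ∫ y, f i y * θ i y ∂(μ i) := by
        rw [hVdef, integral_withDensity_ofReal h1Θm (fun x => (h1Θ01 x).1)]
        have hpt : ∀ x, (1 - Θ x) * ∏ i, f i (π i x)
            = ∏ i, f i (π i x) - (∏ i, f i (π i x)) * Θ x := by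
          intro x; ring
        simp only [hpt]
        rw [integral_sub (hfint ω inferInstance)
          (by
            refine bdd_integrable ((Finset.measurable_prod _ fun i _ =>
              (f i).continuous.measurable.comp (hπm i)).mul hΘm) (C := ∏ i, ‖f i‖) fun x => ?_
            rw [abs_mul, Finset.abs_prod]
            calc (∏ i, |f i (π i x)|) * |Θ x| ≤ (∏ i, ‖f i‖) * 1 := by
                  refine mul_le_mul (Finset.prod_le_prod (fun i _ => abs_nonneg _)
                    (fun i _ => (f i).norm_coe_le_norm _)) ?_ (abs_nonneg _)
                    (Finset.prod_nonneg fun i _ => norm_nonneg _)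
                  exact abs_le.2 ⟨by linarith [(hΘ01 x).1], (hΘ01 x).2⟩
              _ = ∏ i, ‖f i‖ := mul_one _), hkey f]
      have hω'id : A * ∫ x, ∏ i, f i (π i x) ∂ω' = ∏ i, ∫ y, f i y * θ i y ∂(μ i) := by
        rw [hω'.2.2 f]
        rw [Finset.prod_congr rfl fun i _ => hμ'int i (f i), Finset.prod_mul_distrib,
          Finset.prod_inv_distrib]
        have hAe : (∏ i, a i) = A := rfl
        rw [hAe, ← mul_assoc, mul_inv_cancel₀ hApos.ne', one_mul]
        exact Finset.prod_congr rfl fun i _ => by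
          congr 1
          ext y
          ring
      rw [hV, smul_eq_mul, hω'id, hω.2.2 f]
      ring
  have hωteq : ωt = ω := huniq ωt hωtprod
  have hsplit : ω = V + W := by
    have hadd : (fun x => ENNReal.ofReal (1 - Θ x)) + (fun x => ENNReal.ofReal (Θ x))
        = fun _ => (1:ℝ≥0∞) := by
      funext x
      simp only [Pi.add_apply]
      rw [← ENNReal.ofReal_add (by linarith [(hΘ01 x).2]) (hΘ01 x).1]
      norm_num
    calc ω = ω.withDensity (fun _ => (1:ℝ≥0∞)) := by
          rw [show (fun _ : K => (1:ℝ≥0∞)) = 1 from rfl, withDensity_one]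
      _ = V + W := by
          rw [← hadd, withDensity_add_left (h1Θm.ennreal_ofReal), hVdef, hWdef]
  have hcancel : (ENNReal.ofReal A) • ω' = W := by
    have h := hωteq
    rw [hsplit, hωtdef] at h
    ext s hs
    have h2 := congrArg (fun m : Measure K => m s) h
    simp only [Measure.add_apply] at h2
    have hVs : V s ≠ ∞ := (lt_of_le_of_lt (hVle s) (measure_lt_top ω s)).ne
    exact (ENNReal.add_right_inj hVs).1 h2
  calc ω' = (ENNReal.ofReal A)⁻¹ • ((ENNReal.ofReal A) • ω') := by
        rw [smul_smul, ENNReal.inv_mul_cancel hA0 ofReal_ne_top, one_smul]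
    _ = (ENNReal.ofReal A)⁻¹ • W := by rw [hcancel]
    _ = localize ω Θ := hloc.symm
end

section
/- Let K, K_1, …, K_n be compact Hausdorff spaces, π_i : K → K_i continuous maps such that the combined map x ↦ (π_1(x), …, π_n(x)) is surjective onto K_1 × ⋯ × K_n, and μ_i a regular Borel probability measure on K_i for each i. Let φ : K → ℝ be continuous, ε > 0, and suppose ψ⁻, ψ⁺ : K → ℝ are functions of the form ψ^±(x) = Σ_{j=1}^m ∏_{i=1}^n θ^±_{ij}(π_i(x)) with θ^±_{ij} : K_i → ℝ continuous, satisfying ψ⁻(x) ≤ φ(x) ≤ ψ⁺(x) for all x ∈ K and Σ_{j=1}^m ∏_{i=1}^n ∫ θ⁺_{ij} dμ_i − Σ_{j=1}^m ∏_{i=1}^n ∫ θ⁻_{ij} dμ_i ≤ ε. Then there exist, for each i, a finite family of continuous functions u_{i,k} : K_i → [0, 1] (k ∈ F_i) with Σ_{k ∈ F_i} u_{i,k} = 1 pointwise, such that, setting for each κ ∈ ∏_{i=1}^n F_i: π_κ(x) = ∏_{i=1}^n u_{i,κ(i)}(π_i(x)), and for each κ with nonempty support { x ∈ K : π_κ(x)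 > 0 }: r_κ⁻ = inf { φ(x) : π_κ(x) > 0 } and r_κ⁺ = sup { φ(x) : π_κ(x) > 0 }, the functions χ^± = Σ_{κ : support of π_κ nonempty} r_κ^± · π_κ satisfy χ⁻(x) ≤ φ(x) ≤ χ⁺(x) for all x ∈ K, and Σ_{κ : support of π_κ nonempty} (r_κ⁺ − r_κ⁻) · ∏_{i=1}^n ∫ u_{i,κ(i)} dμ_i ≤ 2ε. -/
open MeasureTheory Function
open scoped Classical

/-!
Each `ψ^±` is a uniformly continuous function of the finitely many values `θ^±_{ij}(π_i x)`, so
there is `δ > 0` such that `ψ^±` moves by less than `ε / 2` whenever every `θ^±_{ij}` moves by less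
than `δ`. By compactness each `K_i` carries a finite partition of unity whose members have supports
on which every `θ^±_{ij}` oscillates by less than `δ`. Then on the support of a grid cell
`π_κ`, the sandwich `ψ⁻ ≤ φ ≤ ψ⁺` makes the oscillation `r⁺_κ - r⁻_κ` at most `ψ⁺ - ψ⁻ + ε`
evaluated at any point of the cell; by surjectivity this holds at every point of `∏ K_i` where
`π_κ` is positive. Integrating this pointwise bound against `∏ μ_i` gives `ε + ε`.
-/

theorem exists_pos_forall_dist_sum_prod_lt {ι J : Type*} [Fintype ι] [Fintype J]
    {X : ι → Type*} [∀ i, TopologicalSpace (X i)] [∀ i, CompactSpace (X i)]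
    (θ : ∀ i, J → C(X i, ℝ)) {η : ℝ} (hη : 0 < η) :
    ∃ δ > 0, ∀ p q : ∀ i, X i, (∀ i j, dist (θ i j (p i)) (θ i j (q i)) < δ) →
      dist (∑ j, ∏ i, θ i j (p i)) (∑ j, ∏ i, θ i j (q i)) < η := by
  let Θ : (∀ i, X i) → ι → J → ℝ := fun p i j => θ i j (p i)
  have hΘ : Continuous Θ := by fun_prop
  have hΦ : Continuous fun a : ι → J → ℝ => ∑ j, ∏ i, a i j := by fun_prop
  obtain ⟨δ, hδ, h⟩ := Metric.uniformContinuousOn_iff.1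
    ((isCompact_range hΘ).uniformContinuousOn_of_continuous hΦ.continuousOn) η hη
  refine ⟨δ, hδ, fun p q hpq => h _ ⟨p, rfl⟩ _ ⟨q, rfl⟩ ?_⟩
  exact (dist_pi_lt_iff hδ).2 fun i => (dist_pi_lt_iff hδ).2 (hpq i)

section PartitionOfUnity

variable {X : Type*} [TopologicalSpace X] [CompactSpace X] [T2Space X]

theorem exists_fin_partitionOfUnity_support_subset (V : X → Set X) (hV : ∀ y, IsOpen (V y))
    (hmem : ∀ y, y ∈ V y) :
    ∃ (F : ℕ) (u : Fin F → C(X, ℝ)), (∀ k x, u k x ∈ Set.Icc (0 : ℝ) 1) ∧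
      (∀ x, ∑ k, u k x = 1) ∧ ∀ k, ∃ y, support (u k) ⊆ V y := by
  obtain ⟨t, ht⟩ := isCompact_univ.elim_finite_subcover V hV
    fun x _ => Set.mem_iUnion.2 ⟨x, hmem x⟩
  obtain ⟨f, hf⟩ := PartitionOfUnity.exists_isSubordinate isClosed_univ
    (fun y : t => V y) (fun y => hV y) fun x _ => by simpa using ht (Set.mem_univ x)
  let e := (Fintype.equivFin t).symm
  refine ⟨Fintype.card t, fun k => f (e k), fun k x => ⟨f.nonneg _ x, f.le_one _ x⟩,
    fun x => ?_, fun k => ⟨e k, (subset_tsupport _).trans (hf _)⟩⟩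
  rw [e.sum_comp (fun y => f y x), ← finsum_eq_sum_of_fintype, f.sum_eq_one (Set.mem_univ x)]

theorem exists_fin_partitionOfUnity_forall_dist_lt {J : Type*} [Finite J] (f : J → C(X, ℝ))
    {δ : ℝ} (hδ : 0 < δ) :
    ∃ (F : ℕ) (u : Fin F → C(X, ℝ)), (∀ k x, u k x ∈ Set.Icc (0 : ℝ) 1) ∧
      (∀ x, ∑ k, u k x = 1) ∧
      ∀ k x x', 0 < u k x → 0 < u k x' → ∀ j, dist (f j x) (f j x') < δ := by
  obtain ⟨F, u, hu01, hu1, hsub⟩ := exists_fin_partitionOfUnity_support_subset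
    (fun y => ⋂ j, f j ⁻¹' Metric.ball (f j y) (δ / 2))
    (fun y => isOpen_iInter_of_finite fun j => Metric.isOpen_ball.preimage (f j).continuous)
    (fun y => Set.mem_iInter.2 fun j => Metric.mem_ball_self (half_pos hδ))
  refine ⟨F, u, hu01, hu1, fun k x x' hx hx' j => ?_⟩
  obtain ⟨y, hy⟩ := hsub k
  have hxy : dist (f j x) (f j y) < δ / 2 := Set.mem_iInter.1 (hy hx.ne') j
  have hx'y : dist (f j x') (f j y) < δ / 2 := Set.mem_iInter.1 (hy hx'.ne') j
  linarith [dist_triangle_right (f j x) (f j x') (f j y)]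

end PartitionOfUnity

section ConvexCombination

variable {Λ : Type*} [Fintype Λ] {a w : Λ → ℝ} {B : ℝ}

theorem sum_mul_le_of_sum_eq_one (hw0 : ∀ κ, 0 ≤ w κ) (hw1 : ∑ κ, w κ = 1)
    (ha : ∀ κ, 0 < w κ → a κ ≤ B) : ∑ κ, a κ * w κ ≤ B :=
  calc ∑ κ, a κ * w κ ≤ ∑ κ, B * w κ := Finset.sum_le_sum fun κ _ => by
        rcases (hw0 κ).eq_or_lt with h | h
        · simp [← h]
        · exact mul_le_mul_of_nonneg_right (ha κ h) h.le
    _ = B := by rw [← Finset.mul_sum, hw1, mul_one]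

theorem le_sum_mul_of_sum_eq_one (hw0 : ∀ κ, 0 ≤ w κ) (hw1 : ∑ κ, w κ = 1)
    (ha : ∀ κ, 0 < w κ → B ≤ a κ) : B ≤ ∑ κ, a κ * w κ := by
  have := sum_mul_le_of_sum_eq_one (a := fun κ => -a κ) hw0 hw1 fun κ h => neg_le_neg (ha κ h)
  simpa [neg_mul, Finset.sum_neg_distrib] using this

end ConvexCombination

theorem sum_prod_eq_one {ι : Type*} [Fintype ι] [DecidableEq ι] {F : ι → Type*}
    [∀ i, Fintype (F i)] {w : ∀ i, F i → ℝ} (hw : ∀ i, ∑ k, w i k = 1) :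
    ∑ κ : ∀ i, F i, ∏ i, w i (κ i) = 1 := by
  rw [← Fintype.prod_sum]
  simp [hw]

theorem dist_lt_of_prod_pos {ι J : Type*} [Fintype ι] {X Λ : ι → Type*}
    {u : ∀ i, Λ i → X i → ℝ} (hu0 : ∀ i k x, 0 ≤ u i k x) {f : ∀ i, J → X i → ℝ} {δ : ℝ}
    (hfine : ∀ i k x x', 0 < u i k x → 0 < u i k x' → ∀ j, dist (f i j x) (f i j x') < δ)
    {κ : ∀ i, Λ i} {p q : ∀ i, X i} (hp : 0 < ∏ i, u i (κ i) (p i))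
    (hq : 0 < ∏ i, u i (κ i) (q i)) (i : ι) (j : J) : dist (f i j (p i)) (f i j (q i)) < δ := by
  have hpos : ∀ {r : ∀ i, X i}, 0 < ∏ i, u i (κ i) (r i) → 0 < u i (κ i) (r i) := fun h =>
    (hu0 i _ _).lt_of_ne' (Finset.prod_ne_zero_iff.1 h.ne' i (Finset.mem_univ i))
  exact hfine i (κ i) (p i) (q i) (hpos hp) (hpos hq) j

theorem csSup_image_sub_csInf_image_le {K : Type*} {φ : K → ℝ} {S : Set K} (hS : S.Nonempty)
    {a b : ℝ} (hle : ∀ y ∈ S, φ y ≤ a) (hge : ∀ y ∈ S, b ≤ φ y) :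
    sSup (φ '' S) - sInf (φ '' S) ≤ a - b :=
  sub_le_sub (csSup_le (hS.image φ) (Set.forall_mem_image.2 hle))
    (le_csInf (hS.image φ) (Set.forall_mem_image.2 hge))

section StepFunctions

variable {K Λ : Type*} [Fintype Λ] {φ : K → ℝ}

theorem sum_ite_csInf_mul_le (hφ : BddBelow (Set.range φ)) {w : Λ → K → ℝ}
    (hw0 : ∀ κ x, 0 ≤ w κ x) (hw1 : ∀ x, ∑ κ, w κ x = 1) (x : K) :
    ∑ κ, (if ∃ z, 0 < w κ z then sInf (φ '' {y | 0 < w κ y}) * w κ x else 0) ≤ φ x := by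
  simp_rw [← ite_zero_mul]
  refine sum_mul_le_of_sum_eq_one (hw0 · x) (hw1 x) fun κ hκ => ?_
  rw [if_pos ⟨x, hκ⟩]
  exact csInf_le (hφ.mono (Set.image_subset_range _ _)) ⟨x, hκ, rfl⟩

theorem le_sum_ite_csSup_mul (hφ : BddAbove (Set.range φ)) {w : Λ → K → ℝ}
    (hw0 : ∀ κ x, 0 ≤ w κ x) (hw1 : ∀ x, ∑ κ, w κ x = 1) (x : K) :
    φ x ≤ ∑ κ, (if ∃ z, 0 < w κ z then sSup (φ '' {y | 0 < w κ y}) * w κ x else 0) := by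
  simp_rw [← ite_zero_mul]
  refine le_sum_mul_of_sum_eq_one (hw0 · x) (hw1 x) fun κ hκ => ?_
  rw [if_pos ⟨x, hκ⟩]
  exact le_csSup (hφ.mono (Set.image_subset_range _ _)) ⟨x, hκ, rfl⟩

theorem sum_ite_oscillation_mul_le {P : Type*} {g : K → P} (hg : Surjective g)
    {ψm ψp : P → ℝ} (hsand : ∀ y, ψm (g y) ≤ φ y ∧ φ y ≤ ψp (g y)) {w : Λ → P → ℝ}
    (hw0 : ∀ κ p, 0 ≤ w κ p) (hw1 : ∀ p, ∑ κ, w κ p = 1) {η : ℝ}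
    (hψm : ∀ κ p q, 0 < w κ p → 0 < w κ q → dist (ψm p) (ψm q) < η)
    (hψp : ∀ κ p q, 0 < w κ p → 0 < w κ q → dist (ψp p) (ψp q) < η) (p : P) :
    ∑ κ, (if ∃ z, 0 < w κ (g z) then
        sSup (φ '' {y | 0 < w κ (g y)}) - sInf (φ '' {y | 0 < w κ (g y)}) else 0) * w κ p ≤
      ψp p - ψm p + 2 * η := by
  refine sum_mul_le_of_sum_eq_one (hw0 · p) (hw1 p) fun κ hκ => ?_
  obtain ⟨z, rfl⟩ := hg p
  rw [if_pos ⟨z, hκ⟩]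
  calc _ ≤ (ψp (g z) + η) - (ψm (g z) - η) := by
        refine csSup_image_sub_csInf_image_le ⟨z, hκ⟩ (fun y hy => ?_) fun y hy => ?_
        · have := (abs_sub_lt_iff.1 (hψp κ _ _ hy hκ)).1
          linarith [hsand y]
        · have := (abs_sub_lt_iff.1 (hψm κ _ _ hy hκ)).2
          linarith [hsand y]
    _ = _ := by ring

end StepFunctions

section ProductMeasure

variable {ι : Type*} [Fintype ι] {X : ι → Type*} [∀ i, MeasurableSpace (X i)]
  {μ : ∀ i, Measure (X i)} {A : Type*} (s : Finset A) (c : A → ℝ) {f : A → ∀ i, X i → ℝ}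

theorem integrable_pi_sum_mul_prod [∀ i, SigmaFinite (μ i)]
    (hf : ∀ a i, Integrable (f a i) (μ i)) :
    Integrable (fun p => ∑ a ∈ s, c a * ∏ i, f a i (p i)) (Measure.pi μ) :=
  integrable_finsetSum _ fun a _ => (Integrable.fintype_prod_dep (hf a)).const_mul _

theorem integral_pi_sum_mul_prod [∀ i, SigmaFinite (μ i)]
    (hf : ∀ a i, Integrable (f a i) (μ i)) :
    ∫ p, ∑ a ∈ s, c a * ∏ i, f a i (p i) ∂Measure.pi μ =
      ∑ a ∈ s, c a * ∏ i, ∫ x, f a i x ∂μ i := by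
  rw [integral_finsetSum _ fun a _ => (Integrable.fintype_prod_dep (hf a)).const_mul _]
  simp_rw [integral_const_mul, integral_fintype_prod_eq_prod]

theorem sum_mul_prod_integral_le_of_forall_le [∀ i, IsProbabilityMeasure (μ i)]
    {Λ J : Type*} [Fintype Λ] [Fintype J] (T : Λ → ℝ) {u : Λ → ∀ i, X i → ℝ}
    {θm θp : J → ∀ i, X i → ℝ} (hu : ∀ κ i, Integrable (u κ i) (μ i))
    (hθm : ∀ j i, Integrable (θm j i) (μ i)) (hθp : ∀ j i, Integrable (θp j i) (μ i)) {η : ℝ}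
    (h : ∀ p : ∀ i, X i, ∑ κ, T κ * ∏ i, u κ i (p i) ≤
      ∑ j, ∏ i, θp j i (p i) - ∑ j, ∏ i, θm j i (p i) + η) :
    ∑ κ, T κ * ∏ i, ∫ x, u κ i x ∂μ i ≤
      ∑ j, ∏ i, ∫ x, θp j i x ∂μ i - ∑ j, ∏ i, ∫ x, θm j i x ∂μ i + η := by
  have hψ : ∀ θ : J → ∀ i, X i → ℝ, (∀ j i, Integrable (θ j i) (μ i)) →
      Integrable (fun p => ∑ j, ∏ i, θ j i (p i)) (Measure.pi μ) ∧
      ∫ p, ∑ j, ∏ i, θ j i (p i) ∂Measure.pi μ = ∑ j, ∏ i, ∫ x, θ j i x ∂μ i := fun θ hθ => by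
    simpa using And.intro (integrable_pi_sum_mul_prod Finset.univ 1 hθ)
      (integral_pi_sum_mul_prod Finset.univ 1 hθ)
  obtain ⟨hp_int, hp_eq⟩ := hψ θp hθp
  obtain ⟨hm_int, hm_eq⟩ := hψ θm hθm
  calc ∑ κ, T κ * ∏ i, ∫ x, u κ i x ∂μ i
      = ∫ p, ∑ κ, T κ * ∏ i, u κ i (p i) ∂Measure.pi μ :=
        (integral_pi_sum_mul_prod _ T hu).symm
    _ ≤ ∫ p, (∑ j, ∏ i, θp j i (p i) - ∑ j, ∏ i, θm j i (p i) + η) ∂Measure.pi μ :=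
        integral_mono (integrable_pi_sum_mul_prod _ T hu)
          ((hp_int.sub hm_int).add (integrable_const η)) h
    _ = _ := by
        rw [integral_add ?_ (integrable_const η), integral_sub hp_int hm_int, hp_eq, hm_eq,
          integral_const]
        · simp
        · exact hp_int.sub hm_int

end ProductMeasure

theorem stmt6_general {n : ℕ} {K : Type*} [TopologicalSpace K] [CompactSpace K]
    {Ki : Fin n → Type*} [∀ i, TopologicalSpace (Ki i)] [∀ i, CompactSpace (Ki i)]
    [∀ i, T2Space (Ki i)] [∀ i, MeasurableSpace (Ki i)] [∀ i, BorelSpace (Ki i)]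
    (π : ∀ i, K → Ki i)
    (hsurj : Function.Surjective (fun x : K => (fun i => π i x : ∀ i, Ki i)))
    (μ : ∀ i, Measure (Ki i)) (hprob : ∀ i, IsProbabilityMeasure (μ i))
    (φ : C(K, ℝ)) (ε : ℝ) (hε : 0 < ε)
    (m : ℕ) (θm θp : ∀ i, Fin m → C(Ki i, ℝ))
    (hsand : ∀ x : K, (∑ j : Fin m, ∏ i : Fin n, θm i j (π i x)) ≤ φ x ∧
      φ x ≤ ∑ j : Fin m, ∏ i : Fin n, θp i j (π i x))
    (hgap : (∑ j : Fin m, ∏ i : Fin n, ∫ y, θp i j y ∂(μ i)) -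
      (∑ j : Fin m, ∏ i : Fin n, ∫ y, θm i j y ∂(μ i)) ≤ ε) :
    ∃ (F : Fin n → ℕ) (u : ∀ i, Fin (F i) → C(Ki i, ℝ)),
      (∀ i k x, u i k x ∈ Set.Icc (0 : ℝ) 1) ∧
      (∀ i x, (∑ k : Fin (F i), u i k x) = 1) ∧
      (∀ x : K,
        (∑ κ : ∀ i, Fin (F i),
          if ∃ z : K, 0 < ∏ i : Fin n, u i (κ i) (π i z) then
            sInf {t : ℝ | ∃ y : K, (0 < ∏ i : Fin n, u i (κ i) (π i y)) ∧ φ y = t} *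
              ∏ i : Fin n, u i (κ i) (π i x)
          else 0) ≤ φ x ∧
        φ x ≤ ∑ κ : ∀ i, Fin (F i),
          if ∃ z : K, 0 < ∏ i : Fin n, u i (κ i) (π i z) then
            sSup {t : ℝ | ∃ y : K, (0 < ∏ i : Fin n, u i (κ i) (π i y)) ∧ φ y = t} *
              ∏ i : Fin n, u i (κ i) (π i x)
          else 0) ∧
      (∑ κ : ∀ i, Fin (F i),
        if ∃ z : K, 0 < ∏ i : Fin n, u i (κ i) (π i z) then
          (sSup {t : ℝ | ∃ y : K, (0 < ∏ i : Fin n, u i (κ i) (π i y)) ∧ φ y = t} -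
            sInf {t : ℝ | ∃ y : K, (0 < ∏ i : Fin n, u i (κ i) (π i y)) ∧ φ y = t}) *
            ∏ i : Fin n, ∫ y, u i (κ i) y ∂(μ i)
        else 0) ≤ 2 * ε := by
  obtain ⟨δm, hδm, hψm⟩ := exists_pos_forall_dist_sum_prod_lt θm (half_pos hε)
  obtain ⟨δp, hδp, hψp⟩ := exists_pos_forall_dist_sum_prod_lt θp (half_pos hε)
  choose F u hu01 hu1 hfine using fun i =>
    exists_fin_partitionOfUnity_forall_dist_lt (Sum.elim (θm i) (θp i)) (lt_min hδm hδp)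
  have hu0 : ∀ i k x, 0 ≤ u i k x := fun i k x => (hu01 i k x).1
  have hcell0 : ∀ (κ : ∀ i, Fin (F i)) (p : ∀ i, Ki i), 0 ≤ ∏ i, u i (κ i) (p i) :=
    fun κ p => Finset.prod_nonneg fun i _ => hu0 i (κ i) (p i)
  have hcell1 : ∀ p : ∀ i, Ki i, ∑ κ : ∀ i, Fin (F i), ∏ i, u i (κ i) (p i) = 1 :=
    fun p => sum_prod_eq_one fun i => hu1 i (p i)
  refine ⟨F, u, hu01, hu1, fun x => ⟨?_, ?_⟩, ?_⟩
  · exact sum_ite_csInf_mul_le (isCompact_range φ.continuous).bddBelow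
      (fun κ x => hcell0 κ _) (fun x => hcell1 _) x
  · exact le_sum_ite_csSup_mul (isCompact_range φ.continuous).bddAbove
      (fun κ x => hcell0 κ _) (fun x => hcell1 _) x
  have hint : ∀ i (f : C(Ki i, ℝ)), Integrable f (μ i) :=
    fun i f => (BoundedContinuousFunction.mkOfCompact f).integrable (μ i)
  simp_rw [← ite_zero_mul]
  calc _ ≤ (∑ j, ∏ i, ∫ y, θp i j y ∂μ i - ∑ j, ∏ i, ∫ y, θm i j y ∂μ i) + 2 * (ε / 2) :=
        sum_mul_prod_integral_le_of_forall_le _ (u := fun (κ : ∀ i, Fin (F i)) i => u i (κ i))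
          (θm := fun j i => θm i j) (θp := fun j i => θp i j) (fun κ i => hint i _)
          (fun j i => hint i _) (fun j i => hint i _) <|
          sum_ite_oscillation_mul_le hsurj hsand hcell0 hcell1
            (fun κ p q hp hq => hψm p q fun i j =>
              (dist_lt_of_prod_pos hu0 hfine hp hq i (.inl j)).trans_le (min_le_left _ _))
            (fun κ p q hp hq => hψp p q fun i j =>
              (dist_lt_of_prod_pos hu0 hfine hp hq i (.inr j)).trans_le (min_le_right _ _))
    _ ≤ 2 * ε := by linarith

/-- From a sandwich of `φ` between sums of products of continuous functions of the
separate coordinates with small integral gap, one can build grid partitions of unity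
`u i` on the coordinate spaces so that the corresponding step functions `χ⁻, χ⁺` built
from the infima and suprema of `φ` on the supports of the grid cells sandwich `φ`, with
total weighted oscillation at most `2ε`. -/
theorem stmt6 {n : ℕ} {K : Type*} [TopologicalSpace K] [CompactSpace K] [T2Space K]
    [MeasurableSpace K] [BorelSpace K]
    {Ki : Fin n → Type*} [∀ i, TopologicalSpace (Ki i)] [∀ i, CompactSpace (Ki i)]
    [∀ i, T2Space (Ki i)] [∀ i, MeasurableSpace (Ki i)] [∀ i, BorelSpace (Ki i)]
    (π : ∀ i, K → Ki i) (hπ : ∀ i, Continuous (π i))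
    (hsurj : Function.Surjective (fun x : K => (fun i => π i x : ∀ i, Ki i)))
    (μ : ∀ i, Measure (Ki i)) (hprob : ∀ i, IsProbabilityMeasure (μ i))
    (hreg : ∀ i, (μ i).Regular)
    (φ : C(K, ℝ)) (ε : ℝ) (hε : 0 < ε)
    (m : ℕ) (θm θp : ∀ i, Fin m → C(Ki i, ℝ))
    (hsand : ∀ x : K, (∑ j : Fin m, ∏ i : Fin n, θm i j (π i x)) ≤ φ x ∧
      φ x ≤ ∑ j : Fin m, ∏ i : Fin n, θp i j (π i x))
    (hgap : (∑ j : Fin m, ∏ i : Fin n, ∫ y, θp i j y ∂(μ i)) -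
      (∑ j : Fin m, ∏ i : Fin n, ∫ y, θm i j y ∂(μ i)) ≤ ε) :
    ∃ (F : Fin n → ℕ) (u : ∀ i, Fin (F i) → C(Ki i, ℝ)),
      (∀ i k x, u i k x ∈ Set.Icc (0 : ℝ) 1) ∧
      (∀ i x, (∑ k : Fin (F i), u i k x) = 1) ∧
      (∀ x : K,
        (∑ κ : ∀ i, Fin (F i),
          if ∃ z : K, 0 < ∏ i : Fin n, u i (κ i) (π i z) then
            sInf {t : ℝ | ∃ y : K, (0 < ∏ i : Fin n, u i (κ i) (π i y)) ∧ φ y = t} *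
              ∏ i : Fin n, u i (κ i) (π i x)
          else 0) ≤ φ x ∧
        φ x ≤ ∑ κ : ∀ i, Fin (F i),
          if ∃ z : K, 0 < ∏ i : Fin n, u i (κ i) (π i z) then
            sSup {t : ℝ | ∃ y : K, (0 < ∏ i : Fin n, u i (κ i) (π i y)) ∧ φ y = t} *
              ∏ i : Fin n, u i (κ i) (π i x)
          else 0) ∧
      (∑ κ : ∀ i, Fin (F i),
        if ∃ z : K, 0 < ∏ i : Fin n, u i (κ i) (π i z) then
          (sSup {t : ℝ | ∃ y : K, (0 < ∏ i : Fin n, u i (κ i) (π i y)) ∧ φ y = t} -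
            sInf {t : ℝ | ∃ y : K, (0 < ∏ i : Fin n, u i (κ i) (π i y)) ∧ φ y = t}) *
            ∏ i : Fin n, ∫ y, u i (κ i) y ∂(μ i)
        else 0) ≤ 2 * ε :=
  stmt6_general π hsurj μ hprob φ ε hε m θm θp hsand hgap
end

section
/- Let n, m ≥ 1 be integers, let A_1, …, A_n be sets, let θ_{ij} : A_i → [0, 1] be functions for 1 ≤ i ≤ n and 1 ≤ j ≤ m, and define Θ : A_1 × ⋯ × A_n → ℝ by Θ(a_1, …, a_n) = Σ_{j=1}^m ∏_{i=1}^n θ_{ij}(a_i). Then for every ε > 0 and every integer N ≥ 1 with m·((1 + 1/N)^n − 1) ≤ ε, each set A_i admits a partition P_i into at most (N + 1)^m pieces such that for every choice of pieces C_1 ∈ P_1, …, C_n ∈ P_n and all tuples a = (a_1,…,a_n), a' = (a'_1,…,a'_n) with a_i ∈ C_i and a'_i ∈ C_i for every i, one has |Θ(a) − Θ(a')| ≤ ε. -/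
lemma abs_prod_sub_prod_le' {ι : Type*} [DecidableEq ι] (s : Finset ι) (x y : ι → ℝ)
    (hx : ∀ i, x i ∈ Set.Icc (0:ℝ) 1) (hy : ∀ i, y i ∈ Set.Icc (0:ℝ) 1) :
    |(∏ i ∈ s, x i) - ∏ i ∈ s, y i| ≤ ∑ i ∈ s, |x i - y i| := by
  induction s using Finset.induction with
  | empty => simp
  | @insert a s ha ih =>
    rw [Finset.prod_insert ha, Finset.prod_insert ha, Finset.sum_insert ha]
    have key : x a * (∏ i ∈ s, x i) - y a * (∏ i ∈ s, y i)
        = x a * ((∏ i ∈ s, x i) - ∏ i ∈ s, y i) + (x a - y a) * ∏ i ∈ s, y i := by ring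
    have hya : |∏ i ∈ s, y i| ≤ 1 := by
      rw [abs_of_nonneg (Finset.prod_nonneg fun i _ => (hy i).1)]
      exact Finset.prod_le_one (fun i _ => (hy i).1) (fun i _ => (hy i).2)
    have hxa : |x a| ≤ 1 := abs_le.2 ⟨by linarith [(hx a).1], (hx a).2⟩
    calc |x a * (∏ i ∈ s, x i) - y a * (∏ i ∈ s, y i)|
        ≤ |x a| * |(∏ i ∈ s, x i) - ∏ i ∈ s, y i| + |x a - y a| * |∏ i ∈ s, y i| := by
          rw [key]; refine (abs_add_le _ _).trans ?_; rw [abs_mul, abs_mul]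
      _ ≤ 1 * (∑ i ∈ s, |x i - y i|) + |x a - y a| * 1 := by
          exact add_le_add (mul_le_mul hxa ih (abs_nonneg _) one_pos.le)
            (mul_le_mul_of_nonneg_left hya (abs_nonneg _))
      _ = |x a - y a| + ∑ i ∈ s, |x i - y i| := by ring

/-- For a sum `Θ` of `m` products of `[0,1]`-valued functions of `n` separate
coordinates, each coordinate set admits a partition (encoded as a coloring) into at
most `(N+1)^m` pieces whose grid cells are `(Θ, ε)`-homogeneous, provided
`m·((1 + 1/N)^n − 1) ≤ ε`. -/
theorem stmt7 {n m : ℕ} (hn : 1 ≤ n) (hm : 1 ≤ m)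
    {A : Fin n → Type*}
    (θ : ∀ i, Fin m → A i → ℝ)
    (hθ : ∀ i j a, θ i j a ∈ Set.Icc (0 : ℝ) 1)
    (ε : ℝ) (hε : 0 < ε) (N : ℕ) (hN : 1 ≤ N)
    (hNε : (m : ℝ) * ((1 + 1 / (N : ℝ)) ^ n - 1) ≤ ε) :
    ∃ c : ∀ i, A i → Fin ((N + 1) ^ m),
      ∀ a a' : ∀ i, A i, (∀ i, c i (a i) = c i (a' i)) →
        |(∑ j : Fin m, ∏ i : Fin n, θ i j (a i)) -
          (∑ j : Fin m, ∏ i : Fin n, θ i j (a' i))| ≤ ε := by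
  have hNpos : (0:ℝ) < N := by exact_mod_cast hN
  have hfl : ∀ i (j : Fin m) a, ⌊(N:ℝ) * θ i j a⌋₊ < N + 1 := by
    intro i j a
    have h1 : (N:ℝ) * θ i j a ≤ (N:ℝ) := by
      nlinarith [(hθ i j a).2, (hθ i j a).1]
    have : ⌊(N:ℝ) * θ i j a⌋₊ ≤ ⌊(N:ℝ)⌋₊ := Nat.floor_le_floor h1
    simpa [Nat.lt_succ_iff] using this
  refine ⟨fun i a => finFunctionFinEquiv (fun j => ⟨⌊(N:ℝ) * θ i j a⌋₊, hfl i j a⟩), ?_⟩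
  intro a a' hc
  have hclose : ∀ i j, |θ i j (a i) - θ i j (a' i)| ≤ 1 / (N:ℝ) := by
    intro i j
    have h := congrFun (finFunctionFinEquiv.injective (hc i)) j
    have hk : ⌊(N:ℝ) * θ i j (a i)⌋₊ = ⌊(N:ℝ) * θ i j (a' i)⌋₊ := by
      simpa using congrArg Fin.val h
    set x := θ i j (a i) with hxdef
    set y := θ i j (a' i) with hydef
    have h0x : (0:ℝ) ≤ (N:ℝ) * x := by have := (hθ i j (a i)).1; positivity
    have h0y : (0:ℝ) ≤ (N:ℝ) * y := by have := (hθ i j (a' i)).1; positivity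
    have A1 : (⌊(N:ℝ) * x⌋₊ : ℝ) ≤ (N:ℝ) * x := Nat.floor_le h0x
    have A2 : (N:ℝ) * x < ⌊(N:ℝ) * x⌋₊ + 1 := Nat.lt_floor_add_one _
    have B1 : (⌊(N:ℝ) * x⌋₊ : ℝ) ≤ (N:ℝ) * y := by rw [hk]; exact Nat.floor_le h0y
    have B2 : (N:ℝ) * y < (⌊(N:ℝ) * x⌋₊ : ℝ) + 1 := by rw [hk]; exact Nat.lt_floor_add_one _
    rw [abs_sub_le_iff]
    constructor <;> · rw [le_div_iff₀ hNpos]; nlinarith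
  have hprod : ∀ j : Fin m,
      |(∏ i : Fin n, θ i j (a i)) - ∏ i : Fin n, θ i j (a' i)| ≤ (n : ℝ) / N := by
    intro j
    calc |(∏ i : Fin n, θ i j (a i)) - ∏ i : Fin n, θ i j (a' i)|
        ≤ ∑ i : Fin n, |θ i j (a i) - θ i j (a' i)| :=
          abs_prod_sub_prod_le' _ _ _ (fun i => hθ i j (a i)) (fun i => hθ i j (a' i))
      _ ≤ ∑ _i : Fin n, 1 / (N:ℝ) := Finset.sum_le_sum fun i _ => hclose i j
      _ = (n : ℝ) / N := by simp [Finset.sum_const]; ring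
  have bern : (n : ℝ) / N ≤ (1 + 1 / (N : ℝ)) ^ n - 1 := by
    have h0 : (0:ℝ) ≤ 1 / (N:ℝ) := by positivity
    have := one_add_mul_le_pow (a := 1 / (N:ℝ)) (by linarith) n
    have h' : 1 + (n : ℝ) * (1 / N) ≤ (1 + 1 / (N:ℝ)) ^ n := by exact_mod_cast this
    rw [div_eq_mul_one_div]; linarith
  calc |(∑ j : Fin m, ∏ i : Fin n, θ i j (a i)) -
          (∑ j : Fin m, ∏ i : Fin n, θ i j (a' i))|
      = |∑ j : Fin m, ((∏ i : Fin n, θ i j (a i)) - ∏ i : Fin n, θ i j (a' i))| := by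
        rw [Finset.sum_sub_distrib]
    _ ≤ ∑ j : Fin m, |(∏ i : Fin n, θ i j (a i)) - ∏ i : Fin n, θ i j (a' i)| :=
        Finset.abs_sum_le_sum_abs _ _
    _ ≤ ∑ _j : Fin m, (n : ℝ) / N := Finset.sum_le_sum fun j _ => hprod j
    _ = (m : ℝ) * ((n : ℝ) / N) := by simp [Finset.sum_const]
    _ ≤ (m : ℝ) * ((1 + 1 / (N : ℝ)) ^ n - 1) := by
        gcongr
    _ ≤ ε := hNε
end

section
/- Let ε > 0, let N ≥ 1 be an integer, and let f : ℝ → ℝ be integrable on [0, 1] with 0 ≤ f(t) ≤ 1 for all t ∈ [0, 1]. Suppose there is no sequence 0 ≤ t_1 < t_1' < t_2 < t_2' < ⋯ < t_N < t_N' ≤ 1 with |f(t_i) − f(t_i')| > ε/2 for all 1 ≤ i ≤ N. Then for every integer M with M > 2N/ε, one has |(1/M) Σ_{k=0}^{M−1} f(k/M) − ∫_0^1 f(t) dt| ≤ ε. -/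
open MeasureTheory

/-- If a `[0,1]`-valued integrable function on `[0,1]` admits no `N` disjoint pairs of
points where it oscillates by more than `ε/2`, then for `M > 2N/ε` the average of `f`
over the equally spaced points `k/M` approximates `∫_0^1 f` within `ε`. -/
theorem stmt9 (ε : ℝ) (hε : 0 < ε) (N : ℕ) (hN : 1 ≤ N) (f : ℝ → ℝ)
    (hf : IntervalIntegrable f volume 0 1)
    (hf01 : ∀ t ∈ Set.Icc (0 : ℝ) 1, f t ∈ Set.Icc (0 : ℝ) 1)
    (halt : ¬ ∃ t t' : Fin N → ℝ,
      (∀ i, 0 ≤ t i) ∧ (∀ i, t' i ≤ 1) ∧ (∀ i, t i < t' i) ∧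
      (∀ i j : Fin N, i < j → t' i < t j) ∧
      (∀ i, ε / 2 < |f (t i) - f (t' i)|))
    (M : ℕ) (hM : 2 * (N : ℝ) / ε < (M : ℝ)) :
    |(1 / (M : ℝ)) * ∑ k ∈ Finset.range M, f ((k : ℝ) / (M : ℝ)) -
      ∫ t in (0 : ℝ)..1, f t| ≤ ε := by
  classical
  have hm0 : (0:ℝ) < (M:ℝ) := lt_of_le_of_lt (by positivity) hM
  have hmne : (M:ℝ) ≠ 0 := ne_of_gt hm0
  set a : ℕ → ℝ := fun k => (k:ℝ) / M with ha
  simp only [show ∀ k : ℕ, (k:ℝ)/(M:ℝ) = a k from fun _ => rfl]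
  have hamono : ∀ {k l : ℕ}, k ≤ l → a k ≤ a l := by
    intro k l h
    have : (k:ℝ) ≤ (l:ℝ) := by exact_mod_cast h
    exact div_le_div_of_nonneg_right this hm0.le
  have hIcc : ∀ k : ℕ, k ≤ M → a k ∈ Set.Icc (0:ℝ) 1 := by
    intro k hk
    constructor
    · positivity
    · rw [ha, div_le_one hm0]; exact_mod_cast hk
  have hlen : ∀ k : ℕ, a (k+1) - a k = 1 / M := by
    intro k; rw [ha]; push_cast; ring
  have hsub : ∀ k : ℕ, k < M → Set.uIcc (a k) (a (k+1)) ⊆ Set.uIcc (0:ℝ) 1 := by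
    intro k hk
    apply Set.uIcc_subset_uIcc
    · rw [Set.uIcc_of_le zero_le_one]; exact hIcc k hk.le
    · rw [Set.uIcc_of_le zero_le_one]; exact hIcc (k+1) hk
  have hint : ∀ k : ℕ, k < M → IntervalIntegrable f volume (a k) (a (k+1)) :=
    fun k hk => hf.mono_set (hsub k hk)
  have hsplit : ∑ k ∈ Finset.range M, ∫ t in a k..a (k+1), f t = ∫ t in (0:ℝ)..1, f t := by
    have h := intervalIntegral.sum_integral_adjacent_intervals hint
    have h0 : a 0 = 0 := by simp [ha]
    have h1 : a M = 1 := by rw [ha]; exact div_self hmne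
    rw [h0, h1] at h; exact h
  -- the bad set
  set Bad : ℕ → Prop := fun k => ∃ t ∈ Set.Ico (a k) (a (k+1)), ε/2 < |f (a k) - f t|
    with hBadDef
  -- counting lemma
  have hcard : ((Finset.range M).filter Bad).card < N := by
    by_contra hcon
    push_neg at hcon
    obtain ⟨S, hSsub, hScard⟩ := Finset.exists_subset_card_eq hcon
    set e := S.orderEmbOfFin hScard with he
    have hmem : ∀ i : Fin N, e i < M ∧ Bad (e i) := by
      intro i
      have := hSsub (Finset.orderEmbOfFin_mem S hScard i)
      rw [Finset.mem_filter, Finset.mem_range] at this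
      exact this
    have hwit := fun i : Fin N => (hmem i).2
    apply halt
    refine ⟨fun i => a (e i), fun i => (hwit i).choose, ?_, ?_, ?_, ?_, ?_⟩
    · intro i; exact (hIcc (e i) (hmem i).1.le).1
    · intro i
      have h1 : (hwit i).choose < a (e i + 1) := ((hwit i).choose_spec.1).2
      have h2 : a (e i + 1) ≤ a M := hamono (hmem i).1
      have h3 : a M = 1 := by rw [ha]; exact div_self hmne
      linarith
    · intro i
      have h1 : a (e i) ≤ (hwit i).choose := ((hwit i).choose_spec.1).1
      rcases h1.lt_or_eq with h | h
      · exact h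
      · exfalso
        have := (hwit i).choose_spec.2
        rw [← h, sub_self, abs_zero] at this
        linarith
    · intro i j hij
      have h1 : (hwit i).choose < a (e i + 1) := ((hwit i).choose_spec.1).2
      have h2 : e i + 1 ≤ e j := e.strictMono hij
      exact h1.trans_le (hamono h2)
    · intro i; exact (hwit i).choose_spec.2
  -- per-interval bound
  have hbound : ∀ k ∈ Finset.range M,
      |∫ t in a k..a (k+1), (f (a k) - f t)| ≤ (if Bad k then 1 else ε/2) / M := by
    intro k hk
    rw [Finset.mem_range] at hk
    have hIoc : Set.uIoc (a k) (a (k+1)) = Set.Ioc (a k) (a (k+1)) :=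
      Set.uIoc_of_le (hamono k.le_succ)
    have hsubIcc : Set.Ioc (a k) (a (k+1)) ⊆ Set.Icc (0:ℝ) 1 := by
      intro x hx
      exact ⟨le_trans (hIcc k hk.le).1 hx.1.le, le_trans hx.2 (hIcc (k+1) hk).2⟩
    have hae : ∀ᵐ x : ℝ, x ∈ Set.uIoc (a k) (a (k+1)) →
        ‖f (a k) - f x‖ ≤ (if Bad k then 1 else ε/2) := by
      by_cases hB : Bad k
      · refine Filter.Eventually.of_forall fun x hx => ?_
        rw [hIoc] at hx
        have h1 := hf01 _ (hIcc k hk.le)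
        have h2 := hf01 _ (hsubIcc hx)
        rw [if_pos hB, Real.norm_eq_abs, abs_sub_le_iff]
        constructor <;> [linarith [h1.2, h2.1]; linarith [h1.1, h2.2]]
      · have hne : ∀ᵐ x : ℝ, x ≠ a (k+1) := by
          rw [MeasureTheory.ae_iff]
          simpa using measure_singleton (a (k+1))
        filter_upwards [hne] with x hx hxI
        rw [hIoc] at hxI
        rw [if_neg hB, Real.norm_eq_abs]
        by_contra hcon
        push_neg at hcon
        exact hB ⟨x, ⟨hxI.1.le, lt_of_le_of_ne hxI.2 hx⟩, hcon⟩
    have := intervalIntegral.norm_integral_le_of_norm_le_const_ae hae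
    rw [Real.norm_eq_abs] at this
    have habs : |a (k+1) - a k| = 1 / M := by
      rw [hlen k]; exact abs_of_pos (by positivity)
    rw [habs] at this
    calc |∫ t in a k..a (k+1), (f (a k) - f t)| ≤ (if Bad k then 1 else ε/2) * (1/M) := this
      _ = (if Bad k then 1 else ε/2) / M := by ring
  -- assemble
  have key : (1 / (M:ℝ)) * ∑ k ∈ Finset.range M, f (a k) - ∫ t in (0:ℝ)..1, f t
      = ∑ k ∈ Finset.range M, ∫ t in a k..a (k+1), (f (a k) - f t) := by
    rw [← hsplit, Finset.mul_sum, ← Finset.sum_sub_distrib]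
    apply Finset.sum_congr rfl
    intro k hk
    rw [Finset.mem_range] at hk
    rw [intervalIntegral.integral_sub intervalIntegrable_const (hint k hk),
        intervalIntegral.integral_const, hlen k, smul_eq_mul]
  rw [key]
  calc |∑ k ∈ Finset.range M, ∫ t in a k..a (k+1), (f (a k) - f t)|
      ≤ ∑ k ∈ Finset.range M, |∫ t in a k..a (k+1), (f (a k) - f t)| :=
        Finset.abs_sum_le_sum_abs _ _
    _ ≤ ∑ k ∈ Finset.range M, (if Bad k then 1 else ε/2) / M := Finset.sum_le_sum hbound
    _ = (∑ k ∈ Finset.range M, (if Bad k then (1:ℝ) else ε/2)) / M := by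
        rw [Finset.sum_div]
    _ ≤ ((N:ℝ) + M * (ε/2)) / M := by
        apply div_le_div_of_nonneg_right ?_ hm0.le
        calc ∑ k ∈ Finset.range M, (if Bad k then (1:ℝ) else ε/2)
            ≤ ∑ k ∈ Finset.range M, ((if Bad k then (1:ℝ) else 0) + ε/2) := by
              apply Finset.sum_le_sum
              intro k _
              split <;> simp <;> linarith
          _ = (((Finset.range M).filter Bad).card : ℝ) + M * (ε/2) := by
              rw [Finset.sum_add_distrib, Finset.sum_boole, Finset.sum_const,
                Finset.card_range, nsmul_eq_mul]
          _ ≤ (N:ℝ) + M * (ε/2) := by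
              have : (((Finset.range M).filter Bad).card : ℝ) ≤ N := by
                exact_mod_cast hcard.le
              linarith
    _ ≤ ε := by
        rw [div_le_iff₀ hm0]
        have h2N : 2 * (N:ℝ) < M * ε := by
          rw [div_lt_iff₀ hε] at hM; linarith
        nlinarith
end

section
/- Let n ≥ 1, let (X_i, Σ_i, μ_i) be probability spaces for 1 ≤ i ≤ n, let φ : X_1 × ⋯ × X_n → ℝ be a function, and let ε > 0 and 0 < δ < 1. Call a box ∏_{i=1}^n B_i (with each B_i ⊆ X_i measurable) (φ, ε)-homogeneous if |φ(a) − φ(a')| ≤ ε for all a, a' ∈ ∏_{i=1}^n B_i. Assume that for every tuple of measurable sets A_i ⊆ X_i with μ_i(A_i) > 0 for all i, there exist measurable sets B_i ⊆ A_i with μ_i(B_i) ≥ δ·μ_i(A_i) for all i such that ∏_{i=1}^n B_i is (φ, ε)-homogeneous. Then for every 0 < γ < 1 there exists a finite partition of X_1 × ⋯ × X_n into measurable boxes, with at most (n + 1)^M pieces where M = ⌈log γ / log(1 − δ^n)⌉, such that the sum of ∏_{i=1}^n μ_i(B_i) over those boxes ∏_{i=1}^n B_i of the partition that are not (φ, ε)-homogeneous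 is at most γ. -/
open MeasureTheory
open scoped Classical


private lemma telescope_prod {n : ℕ} (b c : Fin n → ℝ) :
    ∑ j : Fin n, ∏ i : Fin n,
      (if (i : ℕ) < (j : ℕ) then c i else if (i : ℕ) = (j : ℕ) then b i - c i else b i)
      = ∏ i, b i - ∏ i, c i := by
  set g : ℕ → ℝ := fun m => ∏ i : Fin n, (if (i : ℕ) < m then c i else b i) with hg
  have key : ∀ j : Fin n,
      (∏ i : Fin n, (if (i:ℕ) < (j:ℕ) then c i else if (i:ℕ) = (j:ℕ) then b i - c i else b i))
        = g (j:ℕ) - g ((j:ℕ)+1) := by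
    intro j
    have e0 : (∏ i : Fin n, (if (i:ℕ) < (j:ℕ) then c i else if (i:ℕ) = (j:ℕ) then b i - c i else b i))
        = (b j - c j) * ∏ i ∈ Finset.univ.erase j, (if (i:ℕ) < (j:ℕ) then c i else b i) := by
      rw [← Finset.mul_prod_erase Finset.univ _ (Finset.mem_univ j)]
      simp only [lt_irrefl, if_false, if_pos rfl]
      refine congrArg _ (Finset.prod_congr rfl fun i hi => ?_)
      have hij : i ≠ j := Finset.ne_of_mem_erase hi
      by_cases h : (i:ℕ) < (j:ℕ)
      · simp [h]
      · have : (i:ℕ) ≠ (j:ℕ) := fun hh => hij (Fin.ext hh)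
        simp [h, this]
    have e1 : g (j:ℕ) = b j * ∏ i ∈ Finset.univ.erase j, (if (i:ℕ) < (j:ℕ) then c i else b i) := by
      show (∏ i : Fin n, (if (i:ℕ) < (j:ℕ) then c i else b i)) = _
      rw [← Finset.mul_prod_erase Finset.univ _ (Finset.mem_univ j)]
      simp only [lt_irrefl, if_false]
    have e2 : g ((j:ℕ)+1) = c j * ∏ i ∈ Finset.univ.erase j, (if (i:ℕ) < (j:ℕ) then c i else b i) := by
      show (∏ i : Fin n, (if (i:ℕ) < (j:ℕ)+1 then c i else b i)) = _
      rw [← Finset.mul_prod_erase Finset.univ _ (Finset.mem_univ j)]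
      simp only [Nat.lt_succ_self, if_pos]
      refine congrArg _ (Finset.prod_congr rfl fun i hi => ?_)
      have hij : i ≠ j := Finset.ne_of_mem_erase hi
      have : (i:ℕ) ≠ (j:ℕ) := fun hh => hij (Fin.ext hh)
      by_cases h : (i:ℕ) < (j:ℕ)
      · simp [h, Nat.lt_succ_of_lt h]
      · have h2 : ¬ (i:ℕ) < (j:ℕ)+1 := by omega
        simp [h, h2]
    rw [e0, e1, e2, sub_mul]
  calc ∑ j : Fin n, ∏ i : Fin n,
      (if (i : ℕ) < (j : ℕ) then c i else if (i : ℕ) = (j : ℕ) then b i - c i else b i)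
      = ∑ j : Fin n, (g (j:ℕ) - g ((j:ℕ)+1)) := Finset.sum_congr rfl fun j _ => key j
    _ = ∑ j ∈ Finset.range n, (g j - g (j+1)) := by
        rw [Fin.sum_univ_eq_sum_range (fun m => g m - g (m+1))]
    _ = g 0 - g n := Finset.sum_range_sub' g n
    _ = ∏ i, b i - ∏ i, c i := by
        have h0 : g 0 = ∏ i, b i := Finset.prod_congr rfl fun i _ => by simp
        have hnn : g n = ∏ i, c i := Finset.prod_congr rfl fun i _ => by simp [i.isLt]
        rw [h0, hnn]


private def IsHomBox {n : ℕ} {X : Fin n → Type*} (φ : (∀ i, X i) → ℝ) (ε : ℝ)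
    (S : ∀ i, Set (X i)) : Prop :=
  ∀ a a' : ∀ i, X i, (∀ i, a i ∈ S i) → (∀ i, a' i ∈ S i) → |φ a - φ a'| ≤ ε

private lemma IsHomBox.mono {n : ℕ} {X : Fin n → Type*} {φ : (∀ i, X i) → ℝ} {ε : ℝ}
    {S T : ∀ i, Set (X i)} (h : IsHomBox φ ε S) (hsub : ∀ i, T i ⊆ S i) :
    IsHomBox φ ε T :=
  fun a a' ha ha' => h a a' (fun i => hsub i (ha i)) (fun i => hsub i (ha' i))

private def childBox {n : ℕ} {X : Fin n → Type*} (Bp Cp : ∀ i, Set (X i)) (k : Fin (n+1)) :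
    ∀ i, Set (X i) := fun i =>
  if (k : ℕ) = 0 then Cp i
  else if (i : ℕ) + 1 < (k : ℕ) then Cp i
  else if (i : ℕ) + 1 = (k : ℕ) then Bp i \ Cp i
  else Bp i

private lemma childBox_subset {n : ℕ} {X : Fin n → Type*} {Bp Cp : ∀ i, Set (X i)}
    (hsub : ∀ i, Cp i ⊆ Bp i) (k : Fin (n+1)) (i : Fin n) :
    childBox Bp Cp k i ⊆ Bp i := by
  simp only [childBox]
  split_ifs
  · exact hsub i
  · exact hsub i
  · exact Set.diff_subset
  · exact subset_rfl

private lemma childBox_meas {n : ℕ} {X : Fin n → Type*} [∀ i, MeasurableSpace (X i)]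
    {Bp Cp : ∀ i, Set (X i)} (hB : ∀ i, MeasurableSet (Bp i)) (hC : ∀ i, MeasurableSet (Cp i))
    (k : Fin (n+1)) (i : Fin n) : MeasurableSet (childBox Bp Cp k i) := by
  simp only [childBox]
  split_ifs
  · exact hC i
  · exact hC i
  · exact (hB i).diff (hC i)
  · exact hB i

private lemma childBox_exists {n : ℕ} {X : Fin n → Type*} (Bp Cp : ∀ i, Set (X i))
    (x : ∀ i, X i) (hx : ∀ i, x i ∈ Bp i) :
    ∃ k : Fin (n+1), ∀ i, x i ∈ childBox Bp Cp k i := by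
  by_cases hall : ∀ i, x i ∈ Cp i
  · exact ⟨0, fun i => by simpa [childBox] using hall i⟩
  · push_neg at hall
    obtain ⟨i0, hi0⟩ := hall
    set T := Finset.univ.filter (fun i : Fin n => x i ∉ Cp i) with hT
    have hne : T.Nonempty := ⟨i0, by simp [hT, hi0]⟩
    have hj1 : x (T.min' hne) ∉ Cp (T.min' hne) := by
      have := T.min'_mem hne; simp [hT] at this; exact this
    have hj2 : ∀ i : Fin n, (i : ℕ) < ((T.min' hne : Fin n) : ℕ) → x i ∈ Cp i := by
      intro i hij
      by_contra hc
      have h1 : T.min' hne ≤ i := T.min'_le i (by simp [hT, hc])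
      have : ((T.min' hne : Fin n) : ℕ) ≤ (i : ℕ) := h1
      omega
    refine ⟨(T.min' hne).succ, fun i => ?_⟩
    simp only [childBox, Fin.val_succ]
    rw [if_neg (Nat.succ_ne_zero _)]
    by_cases h1 : (i : ℕ) + 1 < ((T.min' hne : Fin n) : ℕ) + 1
    · rw [if_pos h1]; exact hj2 i (by omega)
    · rw [if_neg h1]
      by_cases h2 : (i : ℕ) + 1 = ((T.min' hne : Fin n) : ℕ) + 1
      · rw [if_pos h2]
        exact ⟨hx i, by rw [show i = T.min' hne from Fin.ext (by omega)]; exact hj1⟩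
      · rw [if_neg h2]; exact hx i

private lemma childBox_mem_unique {n : ℕ} {X : Fin n → Type*} {Bp Cp : ∀ i, Set (X i)}
    {x : ∀ i, X i} {k k' : Fin (n+1)} (hk : ∀ i, x i ∈ childBox Bp Cp k i)
    (hk' : ∀ i, x i ∈ childBox Bp Cp k' i) : k = k' := by
  suffices h : ∀ (k k' : Fin (n+1)), (∀ i, x i ∈ childBox Bp Cp k i) →
      (∀ i, x i ∈ childBox Bp Cp k' i) → (k : ℕ) < (k' : ℕ) → False by
    rcases lt_trichotomy (k : ℕ) (k' : ℕ) with h1 | h1 | h1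
    · exact absurd (h k k' hk hk' h1) id
    · exact Fin.ext h1
    · exact absurd (h k' k hk' hk h1) id
  intro k k' hk hk' hlt
  have hk'0 : (k' : ℕ) ≠ 0 := by omega
  by_cases h0 : (k : ℕ) = 0
  · have hjn : (k' : ℕ) - 1 < n := by have := k'.isLt; omega
    have h1 := hk' ⟨(k' : ℕ) - 1, hjn⟩
    have h2 := hk ⟨(k' : ℕ) - 1, hjn⟩
    simp only [childBox] at h1 h2
    rw [if_pos h0] at h2
    rw [if_neg hk'0, if_neg (by omega), if_pos (by omega)] at h1
    exact h1.2 h2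
  · have hjn : (k : ℕ) - 1 < n := by have := k.isLt; omega
    have h1 := hk ⟨(k : ℕ) - 1, hjn⟩
    have h2 := hk' ⟨(k : ℕ) - 1, hjn⟩
    simp only [childBox] at h1 h2
    rw [if_neg h0, if_neg (by omega), if_pos (by omega)] at h1
    rw [if_neg hk'0, if_pos (by omega)] at h2
    exact h1.2 h2

private lemma step_lemma {n : ℕ} (hn : 1 ≤ n) {X : Fin n → Type*} [∀ i, MeasurableSpace (X i)]
    (μ : ∀ i, Measure (X i)) (hprob : ∀ i, IsProbabilityMeasure (μ i))
    (φ : (∀ i, X i) → ℝ) (ε : ℝ) (δ : ℝ) (hδ0 : 0 < δ) (hδ1 : δ < 1)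
    (hSEH : ∀ A : ∀ i, Set (X i), (∀ i, MeasurableSet (A i)) → (∀ i, 0 < μ i (A i)) →
      ∃ B : ∀ i, Set (X i), (∀ i, MeasurableSet (B i)) ∧ (∀ i, B i ⊆ A i) ∧
        (∀ i, ENNReal.ofReal δ * μ i (A i) ≤ μ i (B i)) ∧
        (∀ a a' : ∀ i, X i, (∀ i, a i ∈ B i) → (∀ i, a' i ∈ B i) → |φ a - φ a'| ≤ ε))
    {P : ℕ} (B : Fin P → ∀ i, Set (X i))
    (hmeas : ∀ p i, MeasurableSet (B p i))
    (hpart : ∀ x : ∀ i, X i, ∃! p : Fin P, ∀ i, x i ∈ B p i) :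
    ∃ B' : Fin (P * (n + 1)) → ∀ i, Set (X i),
      (∀ q i, MeasurableSet (B' q i)) ∧
      (∀ x : ∀ i, X i, ∃! q : Fin (P * (n + 1)), ∀ i, x i ∈ B' q i) ∧
      (∑ q, if IsHomBox φ ε (B' q) then (0:ℝ) else ∏ i, (μ i (B' q i)).toReal)
        ≤ (1 - δ ^ n) *
          (∑ p, if IsHomBox φ ε (B p) then (0:ℝ) else ∏ i, (μ i (B p i)).toReal) := by
  haveI : ∀ i, IsProbabilityMeasure (μ i) := hprob
  -- choose homogeneous sub-boxes
  have hch : ∀ p : Fin P, ∃ C : ∀ i, Set (X i),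
      (∀ i, MeasurableSet (C i)) ∧ (∀ i, C i ⊆ B p i) ∧
      ((¬ IsHomBox φ ε (B p) ∧ ∀ i, 0 < μ i (B p i)) →
        (∀ i, ENNReal.ofReal δ * μ i (B p i) ≤ μ i (C i)) ∧ IsHomBox φ ε C) ∧
      (¬ (¬ IsHomBox φ ε (B p) ∧ ∀ i, 0 < μ i (B p i)) → C = B p) := by
    intro p
    by_cases h : ¬ IsHomBox φ ε (B p) ∧ ∀ i, 0 < μ i (B p i)
    · obtain ⟨C, h1, h2, h3, h4⟩ := hSEH (B p) (hmeas p) h.2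
      exact ⟨C, h1, h2, fun _ => ⟨h3, h4⟩, fun hc => absurd h hc⟩
    · exact ⟨B p, hmeas p, fun i => subset_rfl, fun hc => absurd hc h, fun _ => rfl⟩
  choose C hCmeas hCsub hCgood hCdeg using hch
  refine ⟨fun q => childBox (B (finProdFinEquiv.symm q).1) (C (finProdFinEquiv.symm q).1)
    (finProdFinEquiv.symm q).2, fun q i => childBox_meas (hmeas _) (hCmeas _) _ i, ?_, ?_⟩
  · -- partition property
    intro x
    obtain ⟨p, hp, hpu⟩ := hpart x
    obtain ⟨k, hk⟩ := childBox_exists (B p) (C p) x hp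
    refine ⟨finProdFinEquiv (p, k), by simp [hk], ?_⟩
    intro q' hq'
    have hsubB : ∀ i, x i ∈ B (finProdFinEquiv.symm q').1 i :=
      fun i => childBox_subset (hCsub _) _ i (hq' i)
    have hp' : (finProdFinEquiv.symm q').1 = p := hpu _ hsubB
    have hq'' : ∀ i, x i ∈ childBox (B (finProdFinEquiv.symm q').1)
        (C (finProdFinEquiv.symm q').1) (finProdFinEquiv.symm q').2 i := hq'
    rw [hp'] at hq''
    have hk' : (finProdFinEquiv.symm q').2 = k := childBox_mem_unique hq'' hk
    have : finProdFinEquiv.symm q' = (p, k) := Prod.ext hp' hk'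
    calc q' = finProdFinEquiv (finProdFinEquiv.symm q') := (Equiv.apply_symm_apply _ _).symm
      _ = finProdFinEquiv (p, k) := by rw [this]
  · -- mass bound
    have hbig : ∀ p : Fin P,
        (∑ k : Fin (n+1), if IsHomBox φ ε (childBox (B p) (C p) k) then (0:ℝ)
          else ∏ i, (μ i (childBox (B p) (C p) k i)).toReal)
        ≤ (1 - δ ^ n) * (if IsHomBox φ ε (B p) then (0:ℝ) else ∏ i, (μ i (B p i)).toReal) := by
      intro p
      set b : Fin n → ℝ := fun i => (μ i (B p i)).toReal with hb
      set c : Fin n → ℝ := fun i => (μ i (C p i)).toReal with hc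
      have hb0 : ∀ i, 0 ≤ b i := fun i => ENNReal.toReal_nonneg
      have hc0 : ∀ i, 0 ≤ c i := fun i => ENNReal.toReal_nonneg
      have hcb : ∀ i, c i ≤ b i := fun i =>
        ENNReal.toReal_mono (measure_ne_top _ _) (measure_mono (hCsub p i))
      have hdiff : ∀ i, (μ i (B p i \ C p i)).toReal = b i - c i := by
        intro i
        rw [measure_diff (hCsub p i) (hCmeas p i).nullMeasurableSet (measure_ne_top _ _),
          ENNReal.toReal_sub_of_le (measure_mono (hCsub p i)) (measure_ne_top _ _)]
      have hterm_le : ∀ S : ∀ i, Set (X i),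
          (if IsHomBox φ ε S then (0:ℝ) else ∏ i, (μ i (S i)).toReal)
            ≤ ∏ i, (μ i (S i)).toReal := by
        intro S
        split_ifs
        · exact Finset.prod_nonneg fun i _ => ENNReal.toReal_nonneg
        · exact le_rfl
      -- product of succ children
      have hprodk : ∀ j : Fin n, (∏ i, (μ i (childBox (B p) (C p) j.succ i)).toReal)
          = ∏ i : Fin n, (if (i:ℕ) < (j:ℕ) then c i else if (i:ℕ) = (j:ℕ) then b i - c i
              else b i) := by
        intro j
        refine Finset.prod_congr rfl fun i _ => ?_
        simp only [childBox, Fin.val_succ]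
        rw [if_neg (Nat.succ_ne_zero _)]
        by_cases h1 : (i:ℕ) < (j:ℕ)
        · rw [if_pos (by omega), if_pos h1]
        · rw [if_neg (by omega), if_neg h1]
          by_cases h2 : (i:ℕ) = (j:ℕ)
          · rw [if_pos (by omega), if_pos h2, hdiff]
          · rw [if_neg (by omega), if_neg h2]
      have hzero : childBox (B p) (C p) 0 = C p := by
        funext i; simp [childBox]
      have hsum : (∑ k : Fin (n+1), if IsHomBox φ ε (childBox (B p) (C p) k) then (0:ℝ)
            else ∏ i, (μ i (childBox (B p) (C p) k i)).toReal)
          ≤ (if IsHomBox φ ε (C p) then (0:ℝ) else ∏ i, c i) + (∏ i, b i - ∏ i, c i) := by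
        rw [Fin.sum_univ_succ]
        have h1 : (if IsHomBox φ ε (childBox (B p) (C p) 0) then (0:ℝ)
            else ∏ i, (μ i (childBox (B p) (C p) 0 i)).toReal)
            = (if IsHomBox φ ε (C p) then (0:ℝ) else ∏ i, c i) := by rw [hzero]
        rw [h1]
        refine add_le_add le_rfl ?_
        calc (∑ j : Fin n, if IsHomBox φ ε (childBox (B p) (C p) j.succ) then (0:ℝ)
              else ∏ i, (μ i (childBox (B p) (C p) j.succ i)).toReal)
            ≤ ∑ j : Fin n, ∏ i, (μ i (childBox (B p) (C p) j.succ i)).toReal :=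
              Finset.sum_le_sum fun j _ => hterm_le _
          _ = ∑ j : Fin n, ∏ i : Fin n, (if (i:ℕ) < (j:ℕ) then c i
              else if (i:ℕ) = (j:ℕ) then b i - c i else b i) :=
              Finset.sum_congr rfl fun j _ => hprodk j
          _ = ∏ i, b i - ∏ i, c i := telescope_prod b c
      by_cases hHom : IsHomBox φ ε (B p)
      · have hCB : C p = B p := hCdeg p (fun h => h.1 hHom)
        have hCHom : IsHomBox φ ε (C p) := hCB ▸ hHom
        rw [if_pos hHom, mul_zero]
        refine le_trans hsum ?_
        rw [if_pos hCHom]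
        have : c = b := by funext i; rw [hb, hc, hCB]
        rw [this]
        simp
      · rw [if_neg hHom]
        by_cases hPos : ∀ i, 0 < μ i (B p i)
        · obtain ⟨hlow, hCHom⟩ := hCgood p ⟨hHom, hPos⟩
          have hdc : ∀ i, δ * b i ≤ c i := by
            intro i
            have := ENNReal.toReal_mono (measure_ne_top _ _) (hlow i)
            rwa [ENNReal.toReal_mul, ENNReal.toReal_ofReal hδ0.le] at this
          have hpc : δ ^ n * ∏ i, b i ≤ ∏ i, c i := by
            have h1 : (∏ i : Fin n, (δ * b i)) ≤ ∏ i, c i :=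
              Finset.prod_le_prod (fun i _ => mul_nonneg hδ0.le (hb0 i))
                (fun i _ => hdc i)
            calc δ ^ n * ∏ i, b i = ∏ i : Fin n, (δ * b i) := by
                  rw [Finset.prod_mul_distrib, Finset.prod_const, Finset.card_univ,
                    Fintype.card_fin]
              _ ≤ ∏ i, c i := h1
          refine le_trans hsum ?_
          rw [if_pos hCHom, zero_add]
          nlinarith [Finset.prod_nonneg (fun i (_ : i ∈ Finset.univ) => hb0 i)]
        · push_neg at hPos
          obtain ⟨i0, hi0⟩ := hPos
          have hbz : b i0 = 0 := by
            rw [hb]; simp [le_antisymm hi0 zero_le]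
          have hcz : c i0 = 0 := le_antisymm (hbz ▸ hcb i0) (hc0 i0)
          have hpb : (∏ i, b i) = 0 := Finset.prod_eq_zero (Finset.mem_univ i0) hbz
          have hpc : (∏ i, c i) = 0 := Finset.prod_eq_zero (Finset.mem_univ i0) hcz
          refine le_trans hsum ?_
          have h2 : (if IsHomBox φ ε (C p) then (0:ℝ) else ∏ i, c i) ≤ 0 := by
            split_ifs
            · exact le_rfl
            · rw [hpc]
          rw [hpb, hpc]
          split_ifs <;> simp
    -- sum over all q
    have hre : (∑ q : Fin (P * (n+1)), if IsHomBox φ ε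
          (childBox (B (finProdFinEquiv.symm q).1) (C (finProdFinEquiv.symm q).1)
            (finProdFinEquiv.symm q).2) then (0:ℝ)
          else ∏ i, (μ i (childBox (B (finProdFinEquiv.symm q).1)
            (C (finProdFinEquiv.symm q).1) (finProdFinEquiv.symm q).2 i)).toReal)
        = ∑ pk : Fin P × Fin (n+1), if IsHomBox φ ε (childBox (B pk.1) (C pk.1) pk.2)
          then (0:ℝ) else ∏ i, (μ i (childBox (B pk.1) (C pk.1) pk.2 i)).toReal := by
      rw [← Equiv.sum_comp finProdFinEquiv]
      simp
    rw [hre, Fintype.sum_prod_type, Finset.mul_sum]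
    exact Finset.sum_le_sum fun p _ => hbig p

private lemma partition_aux {n : ℕ} (hn : 1 ≤ n) {X : Fin n → Type*}
    [∀ i, MeasurableSpace (X i)]
    (μ : ∀ i, Measure (X i)) (hprob : ∀ i, IsProbabilityMeasure (μ i))
    (φ : (∀ i, X i) → ℝ) (ε : ℝ) (δ : ℝ) (hδ0 : 0 < δ) (hδ1 : δ < 1)
    (hSEH : ∀ A : ∀ i, Set (X i), (∀ i, MeasurableSet (A i)) → (∀ i, 0 < μ i (A i)) →
      ∃ B : ∀ i, Set (X i), (∀ i, MeasurableSet (B i)) ∧ (∀ i, B i ⊆ A i) ∧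
        (∀ i, ENNReal.ofReal δ * μ i (A i) ≤ μ i (B i)) ∧
        (∀ a a' : ∀ i, X i, (∀ i, a i ∈ B i) → (∀ i, a' i ∈ B i) → |φ a - φ a'| ≤ ε)) :
    ∀ m : ℕ, ∃ (P : ℕ) (B : Fin P → ∀ i, Set (X i)),
      P ≤ (n + 1) ^ m ∧
      (∀ p i, MeasurableSet (B p i)) ∧
      (∀ x : ∀ i, X i, ∃! p : Fin P, ∀ i, x i ∈ B p i) ∧
      (∑ p, if IsHomBox φ ε (B p) then (0:ℝ) else ∏ i, (μ i (B p i)).toReal)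
        ≤ (1 - δ ^ n) ^ m := by
  haveI : ∀ i, IsProbabilityMeasure (μ i) := hprob
  have ht0 : 0 < 1 - δ ^ n := by
    have : δ ^ n < 1 := pow_lt_one₀ hδ0.le hδ1 (by omega)
    linarith
  intro m
  induction m with
  | zero =>
    refine ⟨1, fun _ _ => Set.univ, le_refl _, fun _ _ => MeasurableSet.univ,
      fun x => ⟨0, fun i => Set.mem_univ _, fun y _ => Subsingleton.elim y 0⟩, ?_⟩
    rw [Finset.sum_const, Finset.card_univ, Fintype.card_fin, one_smul]
    split_ifs
    · norm_num
    · simp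
  | succ m ih =>
    obtain ⟨P, B, hP, hmeas, hpart, hsum⟩ := ih
    obtain ⟨B', hmeas', hpart', hsum'⟩ :=
      step_lemma hn μ hprob φ ε δ hδ0 hδ1 hSEH B hmeas hpart
    refine ⟨P * (n + 1), B', ?_, hmeas', hpart', ?_⟩
    · calc P * (n + 1) ≤ (n + 1) ^ m * (n + 1) := Nat.mul_le_mul_right _ hP
        _ = (n + 1) ^ (m + 1) := (pow_succ _ _).symm
    · calc (∑ q, if IsHomBox φ ε (B' q) then (0:ℝ) else ∏ i, (μ i (B' q i)).toReal)
          ≤ (1 - δ ^ n) * (∑ p, if IsHomBox φ ε (B p) then (0:ℝ)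
              else ∏ i, (μ i (B p i)).toReal) := hsum'
        _ ≤ (1 - δ ^ n) * (1 - δ ^ n) ^ m := by
            exact mul_le_mul_of_nonneg_left hsum ht0.le
        _ = (1 - δ ^ n) ^ (m + 1) := by ring

/-- If every tuple of positive-measure sets contains a box of relative measure `δ` in
each coordinate which is `(φ, ε)`-homogeneous, then for every `0 < γ < 1` the product
space admits a finite partition into measurable boxes, with at most `(n+1)^M` pieces
where `M = ⌈log γ / log (1 − δ^n)⌉`, such that the boxes that are not
`(φ, ε)`-homogeneous have total product mass at most `γ`. -/
theorem stmt10 {n : ℕ} (hn : 1 ≤ n) {X : Fin n → Type*} [∀ i, MeasurableSpace (X i)]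
    (μ : ∀ i, Measure (X i)) (hprob : ∀ i, IsProbabilityMeasure (μ i))
    (φ : (∀ i, X i) → ℝ) (ε : ℝ) (hε : 0 < ε) (δ : ℝ) (hδ0 : 0 < δ) (hδ1 : δ < 1)
    (hSEH : ∀ A : ∀ i, Set (X i), (∀ i, MeasurableSet (A i)) → (∀ i, 0 < μ i (A i)) →
      ∃ B : ∀ i, Set (X i), (∀ i, MeasurableSet (B i)) ∧ (∀ i, B i ⊆ A i) ∧
        (∀ i, ENNReal.ofReal δ * μ i (A i) ≤ μ i (B i)) ∧
        (∀ a a' : ∀ i, X i, (∀ i, a i ∈ B i) → (∀ i, a' i ∈ B i) → |φ a - φ a'| ≤ ε)) :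
    ∀ γ : ℝ, 0 < γ → γ < 1 →
      ∃ (P : ℕ) (B : Fin P → ∀ i, Set (X i)),
        P ≤ (n + 1) ^ (⌈Real.log γ / Real.log (1 - δ ^ n)⌉₊) ∧
        (∀ p i, MeasurableSet (B p i)) ∧
        (∀ x : ∀ i, X i, ∃! p : Fin P, ∀ i, x i ∈ B p i) ∧
        (∑ p : Fin P,
          if ∀ a a' : ∀ i, X i, (∀ i, a i ∈ B p i) → (∀ i, a' i ∈ B p i) →
              |φ a - φ a'| ≤ ε
          then 0 else ∏ i, (μ i (B p i)).toReal) ≤ γ := by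
  intro γ hγ0 hγ1
  set M := ⌈Real.log γ / Real.log (1 - δ ^ n)⌉₊ with hM
  obtain ⟨P, B, hP, hmeas, hpart, hsum⟩ :=
    partition_aux hn μ hprob φ ε δ hδ0 hδ1 hSEH M
  have ht0 : 0 < 1 - δ ^ n := by
    have : δ ^ n < 1 := pow_lt_one₀ hδ0.le hδ1 (by omega)
    linarith
  have ht1 : 1 - δ ^ n < 1 := by
    have : 0 < δ ^ n := pow_pos hδ0 n
    linarith
  have hpow : (1 - δ ^ n) ^ M ≤ γ := by
    have hlog : Real.log (1 - δ ^ n) < 0 := Real.log_neg ht0 ht1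
    have h1 : Real.log γ / Real.log (1 - δ ^ n) ≤ (M : ℝ) := Nat.le_ceil _
    rw [div_le_iff_of_neg hlog] at h1
    have h3 : Real.log ((1 - δ ^ n) ^ M) ≤ Real.log γ := by
      rw [Real.log_pow]; exact h1
    calc (1 - δ ^ n) ^ M = Real.exp (Real.log ((1 - δ ^ n) ^ M)) :=
          (Real.exp_log (pow_pos ht0 M)).symm
      _ ≤ Real.exp (Real.log γ) := Real.exp_le_exp.2 h3
      _ = γ := Real.exp_log hγ0
  exact ⟨P, B, hP, hmeas, hpart, le_trans hsum hpow⟩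
end

section
/- Let X, X_1, …, X_n be measurable spaces, p_i : X → X_i measurable maps, ω a probability measure on X, and μ_i a probability measure on X_i for each i, such that ∫_X ∏_{i=1}^n g_i(p_i(x)) dω(x) = ∏_{i=1}^n ∫_{X_i} g_i dμ_i for all measurable g_i : X_i → [0, 1]. Let φ : X → [0, 1] be measurable, let D be a nonempty finite set, and for each d ∈ D and 1 ≤ i ≤ n let ψ_{i,d} : X_i → [0, 1] be measurable, with Σ_{d ∈ D} ∏_{i=1}^n ψ_{i,d}(p_i(x)) = 1 for every x ∈ X. Fix ε, δ ≥ 0 and call d ∈ D ε-homogeneous if |φ(x) − φ(x')| ≤ ε whenever x, x' ∈ X satisfy ψ_{i,d}(p_i(x)) > 0 and ψ_{i,d}(p_i(x')) > 0 for all i; assume the sum of ∏_{i=1}^n ∫ ψ_{i,d} dμ_i over the d ∈ D that are not ε-homogeneous is at most δ. If α, β ≥ 0 satisfy α > β + δ + ε and ∫_X φ dω ≥ α, then there exists d ∈ D such that φ(x) ≥ β for every x ∈ X with ψ_{i,d}(p_i(x)) > 0 for all i, and ∫_{X_i} ψ_{i,d} dμ_i ≥ (α − β − δ − ε)/|D|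 for every i. -/
open MeasureTheory
open scoped Classical

/-- Density version of the strong Erdős–Hajnal property from a distal regularity
partition of unity: if `ω` extends the product of the `μ i`, the partition of unity
`ψ` has non-`ε`-homogeneous pieces of total mass at most `δ`, and `∫ φ dω ≥ α` with
`α > β + δ + ε`, then some piece `d` has `φ ≥ β` on its support and all its factors
have integral at least `(α − β − δ − ε)/|D|`. -/
theorem stmt11 {n : ℕ} {X : Type*} [MeasurableSpace X]
    {Xi : Fin n → Type*} [∀ i, MeasurableSpace (Xi i)]
    (p : ∀ i, X → Xi i) (hp : ∀ i, Measurable (p i))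
    (ω : Measure X) [IsProbabilityMeasure ω]
    (μ : ∀ i, Measure (Xi i)) (hprob : ∀ i, IsProbabilityMeasure (μ i))
    (hprod : ∀ g : ∀ i, Xi i → ℝ, (∀ i, Measurable (g i)) →
      (∀ i x, g i x ∈ Set.Icc (0 : ℝ) 1) →
      ∫ x, ∏ i, g i (p i x) ∂ω = ∏ i, ∫ y, g i y ∂(μ i))
    (φ : X → ℝ) (hφm : Measurable φ) (hφ01 : ∀ x, φ x ∈ Set.Icc (0 : ℝ) 1)
    {D : Type*} [Fintype D] [Nonempty D]
    (ψ : ∀ i, D → Xi i → ℝ) (hψm : ∀ i d, Measurable (ψ i d))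
    (hψ01 : ∀ i d x, ψ i d x ∈ Set.Icc (0 : ℝ) 1)
    (hpart : ∀ x : X, ∑ d : D, ∏ i, ψ i d (p i x) = 1)
    (ε δ : ℝ) (hε : 0 ≤ ε) (hδ : 0 ≤ δ)
    (hhom : (∑ d : D,
        if ∀ x x' : X, (∀ i, 0 < ψ i d (p i x)) → (∀ i, 0 < ψ i d (p i x')) →
            |φ x - φ x'| ≤ ε
        then 0 else ∏ i, ∫ y, ψ i d y ∂(μ i)) ≤ δ)
    (α β : ℝ) (hα : 0 ≤ α) (hβ : 0 ≤ β) (hαβ : β + δ + ε < α)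
    (hint : α ≤ ∫ x, φ x ∂ω) :
    ∃ d : D, (∀ x : X, (∀ i, 0 < ψ i d (p i x)) → β ≤ φ x) ∧
      ∀ i, (α - β - δ - ε) / (Fintype.card D : ℝ) ≤ ∫ y, ψ i d y ∂(μ i) := by
  classical
  set m : D → ℝ := fun d => ∏ i, ∫ y, ψ i d y ∂(μ i) with hmdef
  have hψint : ∀ i d, Integrable (ψ i d) (μ i) := by
    intro i d
    refine Integrable.mono' (integrable_const 1) (hψm i d).aestronglyMeasurable ?_
    filter_upwards with y
    rw [Real.norm_eq_abs, abs_le]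
    exact ⟨by linarith [(hψ01 i d y).1], (hψ01 i d y).2⟩
  have hψi0 : ∀ i d, 0 ≤ ∫ y, ψ i d y ∂(μ i) := fun i d =>
    integral_nonneg fun y => (hψ01 i d y).1
  have hψi1 : ∀ i d, ∫ y, ψ i d y ∂(μ i) ≤ 1 := by
    intro i d
    calc ∫ y, ψ i d y ∂(μ i) ≤ ∫ _, (1 : ℝ) ∂(μ i) :=
          integral_mono (hψint i d) (integrable_const 1) fun y => (hψ01 i d y).2
      _ = 1 := by simp
  have hm0 : ∀ d, 0 ≤ m d := fun d => Finset.prod_nonneg fun i _ => hψi0 i d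
  have hPm : ∀ d, Measurable fun x => ∏ i, ψ i d (p i x) := fun d =>
    Finset.measurable_prod _ fun i _ => (hψm i d).comp (hp i)
  have hP0 : ∀ d x, 0 ≤ ∏ i, ψ i d (p i x) := fun d x =>
    Finset.prod_nonneg fun i _ => (hψ01 i d (p i x)).1
  have hP1 : ∀ d x, ∏ i, ψ i d (p i x) ≤ 1 := fun d x =>
    Finset.prod_le_one (fun i _ => (hψ01 i d (p i x)).1)
      (fun i _ => (hψ01 i d (p i x)).2)
  have hPint : ∀ d, Integrable (fun x => ∏ i, ψ i d (p i x)) ω := by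
    intro d
    refine Integrable.mono' (integrable_const 1) (hPm d).aestronglyMeasurable ?_
    filter_upwards with x
    rw [Real.norm_eq_abs, abs_le]
    exact ⟨by linarith [hP0 d x], hP1 d x⟩
  have hPintEq : ∀ d, ∫ x, ∏ i, ψ i d (p i x) ∂ω = m d := fun d =>
    hprod (fun i => ψ i d) (fun i => hψm i d) (fun i x => hψ01 i d x)
  have hφPint : ∀ d, Integrable (fun x => φ x * ∏ i, ψ i d (p i x)) ω := by
    intro d
    refine Integrable.mono' (integrable_const 1)
      (hφm.mul (hPm d)).aestronglyMeasurable ?_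
    filter_upwards with x
    rw [Real.norm_eq_abs, abs_le]
    constructor
    · nlinarith [(hφ01 x).1, hP0 d x]
    · nlinarith [(hφ01 x).1, (hφ01 x).2, hP0 d x, hP1 d x]
  -- the masses sum to 1
  have hmsum : ∑ d, m d = 1 := by
    have : ∑ d, ∫ x, ∏ i, ψ i d (p i x) ∂ω = ∫ x, ∑ d : D, ∏ i, ψ i d (p i x) ∂ω :=
      (integral_finset_sum Finset.univ fun d _ => hPint d).symm
    simp_rw [hPintEq] at this
    rw [this]
    simp_rw [hpart]
    simp
  -- decomposition of the integral of φ
  have hdecomp : ∫ x, φ x ∂ω = ∑ d, ∫ x, φ x * ∏ i, ψ i d (p i x) ∂ω := by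
    rw [← integral_finset_sum Finset.univ fun d _ => hφPint d]
    refine integral_congr_ae (Filter.Eventually.of_forall fun x => ?_)
    show φ x = ∑ d : D, φ x * ∏ i, ψ i d (p i x)
    rw [← Finset.mul_sum, hpart, mul_one]
  -- homogeneity and goodness predicates
  set Hom : D → Prop := fun d => ∀ x x' : X, (∀ i, 0 < ψ i d (p i x)) →
      (∀ i, 0 < ψ i d (p i x')) → |φ x - φ x'| ≤ ε with hHomdef
  set Good : D → Prop := fun d => ∀ x : X, (∀ i, 0 < ψ i d (p i x)) → β ≤ φ x
    with hGooddef
  -- positivity of the product forces positivity of each factor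
  have hpos : ∀ d x, 0 < ∏ i, ψ i d (p i x) → ∀ i, 0 < ψ i d (p i x) := by
    intro d x hx i
    rcases lt_or_eq_of_le (hψ01 i d (p i x)).1 with h | h
    · exact h
    · exact absurd (Finset.prod_eq_zero (Finset.mem_univ i) h.symm) (ne_of_gt hx)
  -- basic bound
  have h1 : ∀ d, ∫ x, φ x * ∏ i, ψ i d (p i x) ∂ω ≤ m d := by
    intro d
    rw [← hPintEq d]
    refine integral_mono (hφPint d) (hPint d) fun x => ?_
    calc φ x * ∏ i, ψ i d (p i x) ≤ 1 * ∏ i, ψ i d (p i x) :=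
          mul_le_mul_of_nonneg_right (hφ01 x).2 (hP0 d x)
      _ = ∏ i, ψ i d (p i x) := one_mul _
  -- bound for homogeneous non-good pieces
  have h2 : ∀ d, Hom d → ¬ Good d →
      ∫ x, φ x * ∏ i, ψ i d (p i x) ∂ω ≤ (β + ε) * m d := by
    intro d hhd hgd
    have hgd' : ¬ ∀ x : X, (∀ i, 0 < ψ i d (p i x)) → β ≤ φ x := hgd
    push_neg at hgd'
    obtain ⟨x₀, hx₀, hφx₀⟩ := hgd'
    have hbound : ∀ x, φ x * ∏ i, ψ i d (p i x) ≤ (β + ε) * ∏ i, ψ i d (p i x) := by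
      intro x
      rcases lt_or_eq_of_le (hP0 d x) with hx | hx
      · have hall : ∀ i, 0 < ψ i d (p i x) := hpos d x hx
        have := hhd x x₀ hall hx₀
        rw [abs_le] at this
        have : φ x ≤ β + ε := by linarith
        exact mul_le_mul_of_nonneg_right this (hP0 d x)
      · rw [← hx, mul_zero, mul_zero]
    calc ∫ x, φ x * ∏ i, ψ i d (p i x) ∂ω
        ≤ ∫ x, (β + ε) * ∏ i, ψ i d (p i x) ∂ω :=
          integral_mono (hφPint d) ((hPint d).const_mul _) hbound
      _ = (β + ε) * ∫ x, ∏ i, ψ i d (p i x) ∂ω := integral_const_mul _ _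
      _ = (β + ε) * m d := by rw [hPintEq d]
  -- combine the per-piece bounds
  have hsplit : ∑ d, ∫ x, φ x * ∏ i, ψ i d (p i x) ∂ω ≤
      (∑ d, if Good d then m d else 0) + (β + ε) + δ := by
    have step1 : ∑ d, ∫ x, φ x * ∏ i, ψ i d (p i x) ∂ω ≤
        ∑ d, ((if Good d then m d else 0) + (if Hom d then (β + ε) * m d else 0) +
          (if Hom d then 0 else m d)) := by
      refine Finset.sum_le_sum fun d _ => ?_
      by_cases hg : Good d
      · rw [if_pos hg]
        by_cases hh : Hom d
        · rw [if_pos hh, if_pos hh]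
          have := h1 d
          nlinarith [hm0 d]
        · rw [if_neg hh, if_neg hh]
          have := h1 d
          linarith [hm0 d]
      · rw [if_neg hg]
        by_cases hh : Hom d
        · rw [if_pos hh, if_pos hh]
          have := h2 d hh hg
          linarith
        · rw [if_neg hh, if_neg hh]
          have := h1 d
          linarith
    have step2 : ∑ d, (if Hom d then (β + ε) * m d else 0) ≤ β + ε := by
      calc ∑ d, (if Hom d then (β + ε) * m d else 0)
          ≤ ∑ d, (β + ε) * m d := by
            refine Finset.sum_le_sum fun d _ => ?_
            by_cases hh : Hom d
            · rw [if_pos hh]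
            · rw [if_neg hh]
              nlinarith [hm0 d]
        _ = (β + ε) * ∑ d, m d := by rw [Finset.mul_sum]
        _ = β + ε := by rw [hmsum, mul_one]
    have step3 : ∑ d, (if Hom d then 0 else m d) ≤ δ := hhom
    calc ∑ d, ∫ x, φ x * ∏ i, ψ i d (p i x) ∂ω
        ≤ ∑ d, ((if Good d then m d else 0) + (if Hom d then (β + ε) * m d else 0) +
            (if Hom d then 0 else m d)) := step1
      _ = (∑ d, if Good d then m d else 0) +
            (∑ d, if Hom d then (β + ε) * m d else 0) +
            (∑ d, if Hom d then 0 else m d) := by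
          rw [Finset.sum_add_distrib, Finset.sum_add_distrib]
      _ ≤ (∑ d, if Good d then m d else 0) + (β + ε) + δ := by
          linarith [step2, step3]
  have hG : α - β - δ - ε ≤ ∑ d, if Good d then m d else 0 := by
    have := hdecomp ▸ hint
    linarith [hsplit]
  have hγpos : 0 < α - β - δ - ε := by linarith
  have hcard : (0 : ℝ) < (Fintype.card D : ℝ) := by
    exact_mod_cast Fintype.card_pos
  -- find a good piece of large mass
  have hexists : ∃ d : D, Good d ∧ (α - β - δ - ε) / (Fintype.card D : ℝ) ≤ m d := by
    by_contra hcon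
    push_neg at hcon
    have hlt : ∑ d, (if Good d then m d else 0) <
        ∑ _d : D, (α - β - δ - ε) / (Fintype.card D : ℝ) := by
      refine Finset.sum_lt_sum_of_nonempty Finset.univ_nonempty fun d _ => ?_
      by_cases hg : Good d
      · rw [if_pos hg]; exact hcon d hg
      · rw [if_neg hg]; positivity
    rw [Finset.sum_const, Finset.card_univ, nsmul_eq_mul,
      mul_div_cancel₀ _ (ne_of_gt hcard)] at hlt
    linarith
  obtain ⟨d, hgd, hmd⟩ := hexists
  refine ⟨d, hgd, fun i => ?_⟩
  refine le_trans hmd ?_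
  calc m d = (∫ y, ψ i d y ∂(μ i)) *
        ∏ j ∈ Finset.univ.erase i, ∫ y, ψ j d y ∂(μ j) :=
        (Finset.mul_prod_erase Finset.univ _ (Finset.mem_univ i)).symm
    _ ≤ (∫ y, ψ i d y ∂(μ i)) * 1 := by
        refine mul_le_mul_of_nonneg_left ?_ (hψi0 i d)
        exact Finset.prod_le_one (fun j _ => hψi0 j d) (fun j _ => hψi1 j d)
    _ = ∫ y, ψ i d y ∂(μ i) := mul_one _
end

section
/- Let X be a measurable space with a probability measure ω, let X_1, …, X_n be measurable spaces with probability measures μ_1, …, μ_n, let p_i : X → X_i be measurable maps, and let φ : X → [0, 1] be measurable. Let s ≥ 1 be an integer, δ > 0, and for each i let (ψ_{i,z})_{z ∈ Z_i} be a family of measurable functions X_i → [0, 1] indexed by a set Z_i. Assume: for every j ∈ {0, 1, …, s}, if ∫_X max(0, 1/s − |φ(x) − j/s|) dω(x) ≥ 1/(s(s+1)), then there exists d ∈ Z_1 × ⋯ × Z_n such that |φ(x) − j/s| ≤ 1/s for every x ∈ X with ψ_{i,d_i}(p_i(x)) > 0 for all i, and ∫ ψ_{i,d_i} dμ_i ≥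 δ for every i. Then there exists d ∈ Z_1 × ⋯ × Z_n such that ∫ ψ_{i,d_i} dμ_i ≥ δ for every i, and |φ(x) − φ(x')| ≤ 2/s whenever x, x' ∈ X satisfy ψ_{i,d_i}(p_i(x)) > 0 and ψ_{i,d_i}(p_i(x')) > 0 for all i. -/
open MeasureTheory

lemma key_sum (s : ℕ) (hs : 1 ≤ s) (r : ℝ) (hr0 : (0:ℝ) ≤ r) (hr1 : r ≤ 1) :
    ∑ j ∈ Finset.range (s+1), max 0 (1 / (s:ℝ) - |r - (j:ℝ)/(s:ℝ)|) = 1 / (s:ℝ) := by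
  have hs0 : (0:ℝ) < s := by exact_mod_cast hs
  set m : ℕ := (⌊r * s⌋).toNat with hm
  have hfl0 : (0:ℤ) ≤ ⌊r * s⌋ := Int.floor_nonneg.mpr (mul_nonneg hr0 hs0.le)
  have hmcast : (m : ℝ) = ((⌊r * s⌋ : ℤ) : ℝ) := by
    rw [hm]; exact_mod_cast congrArg (Int.cast : ℤ → ℝ) (Int.toNat_of_nonneg hfl0)
  set j0 : ℕ := min m (s - 1) with hj0
  have hj0le : j0 ≤ s - 1 := min_le_right _ _
  have hj1le : j0 + 1 ≤ s := by omega
  have hlow : (j0:ℝ)/s ≤ r := by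
    rw [div_le_iff₀ hs0]
    have h1 : (j0:ℝ) ≤ m := by exact_mod_cast min_le_left m (s-1)
    have h2 : (m:ℝ) ≤ r * s := by rw [hmcast]; exact Int.floor_le _
    linarith
  have hhigh : r ≤ ((j0:ℝ)+1)/s := by
    rcases le_or_gt m (s-1) with h | h
    · have hj : (j0:ℝ) = m := by exact_mod_cast congrArg Nat.cast (by omega : j0 = m)
      rw [le_div_iff₀ hs0, hj]
      have : r * s < (⌊r * s⌋ : ℝ) + 1 := Int.lt_floor_add_one _
      rw [hmcast]; linarith
    · have hj : j0 = s - 1 := by omega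
      have hc : ((j0:ℝ)+1) = s := by
        have : ((j0+1:ℕ):ℝ) = ((s:ℕ):ℝ) := by exact_mod_cast congrArg Nat.cast (by omega : j0+1 = s)
        push_cast at this; linarith
      rw [hc, div_self hs0.ne']; exact hr1
  have hzero : ∀ j ∈ Finset.range (s+1), j ∉ ({j0, j0+1} : Finset ℕ) →
      max 0 (1 / (s:ℝ) - |r - (j:ℝ)/(s:ℝ)|) = 0 := by
    intro j _ hj
    simp only [Finset.mem_insert, Finset.mem_singleton] at hj
    push_neg at hj
    have key : (1:ℝ)/s ≤ |r - (j:ℝ)/s| := by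
      rcases lt_or_gt_of_ne hj.1 with h | h
      · have hj' : (j:ℝ) + 1 ≤ j0 := by exact_mod_cast h
        have h1 : ((j:ℝ)+1)/s ≤ (j0:ℝ)/s := by gcongr
        have h2 : ((j:ℝ)+1)/s = (j:ℝ)/s + 1/s := by ring
        have h3 : (1:ℝ)/s ≤ r - (j:ℝ)/s := by linarith
        exact h3.trans (le_abs_self _)
      · have hj' : (j0:ℝ) + 2 ≤ j := by
          have : j0 + 2 ≤ j := by omega
          exact_mod_cast this
        have h1 : ((j0:ℝ)+2)/s ≤ (j:ℝ)/s := by gcongr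
        have h2 : ((j0:ℝ)+2)/s = ((j0:ℝ)+1)/s + 1/s := by ring
        have h3 : (1:ℝ)/s ≤ (j:ℝ)/s - r := by linarith
        calc (1:ℝ)/s ≤ (j:ℝ)/s - r := h3
          _ ≤ |r - (j:ℝ)/s| := by rw [abs_sub_comm]; exact le_abs_self _
    exact max_eq_left (by linarith)
  have hsubset : ({j0, j0+1} : Finset ℕ) ⊆ Finset.range (s+1) := by
    intro j hj
    simp only [Finset.mem_insert, Finset.mem_singleton] at hj
    rcases hj with rfl | rfl <;> simp only [Finset.mem_range] <;> omega
  rw [← Finset.sum_subset hsubset (fun j hj hj' => hzero j hj hj')]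
  rw [Finset.sum_pair (by omega : j0 ≠ j0 + 1)]
  have e2' : (((j0+1:ℕ)):ℝ)/s = ((j0:ℝ)+1)/s := by push_cast; ring
  have hsplit : ((j0:ℝ)+1)/s = (j0:ℝ)/s + 1/s := by ring
  have e1 : |r - (j0:ℝ)/s| = r - (j0:ℝ)/s := abs_of_nonneg (by linarith)
  have e2 : |r - ((j0+1:ℕ):ℝ)/s| = ((j0:ℝ)+1)/s - r := by
    rw [e2', abs_sub_comm]
    exact abs_of_nonneg (by linarith)
  rw [e1, e2]
  rw [max_eq_right (by linarith), max_eq_right (by linarith)]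
  ring

/-- From the density version of the strong Erdős–Hajnal property at every level `j/s`,
one obtains a tuple `d` of parameters whose functions have integral at least `δ` and
whose common positivity region is `(φ, 2/s)`-homogeneous. -/
theorem stmt12 {n : ℕ} {X : Type*} [MeasurableSpace X]
    {Xi : Fin n → Type*} [∀ i, MeasurableSpace (Xi i)]
    (ω : Measure X) [IsProbabilityMeasure ω]
    (μ : ∀ i, Measure (Xi i)) (hprob : ∀ i, IsProbabilityMeasure (μ i))
    (p : ∀ i, X → Xi i) (hp : ∀ i, Measurable (p i))
    (φ : X → ℝ) (hφm : Measurable φ) (hφ01 : ∀ x, φ x ∈ Set.Icc (0 : ℝ) 1)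
    (s : ℕ) (hs : 1 ≤ s) (δ : ℝ) (hδ : 0 < δ)
    {Z : Fin n → Type*}
    (ψ : ∀ i, Z i → Xi i → ℝ) (hψm : ∀ i z, Measurable (ψ i z))
    (hψ01 : ∀ i z x, ψ i z x ∈ Set.Icc (0 : ℝ) 1)
    (hyp : ∀ j : ℕ, j ≤ s →
      (1 / ((s : ℝ) * ((s : ℝ) + 1)) ≤
        ∫ x, max 0 (1 / (s : ℝ) - |φ x - (j : ℝ) / (s : ℝ)|) ∂ω) →
      ∃ d : ∀ i, Z i,
        (∀ x : X, (∀ i, 0 < ψ i (d i) (p i x)) → |φ x - (j : ℝ) / (s : ℝ)| ≤ 1 / (s : ℝ)) ∧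
        ∀ i, δ ≤ ∫ y, ψ i (d i) y ∂(μ i)) :
    ∃ d : ∀ i, Z i,
      (∀ i, δ ≤ ∫ y, ψ i (d i) y ∂(μ i)) ∧
      ∀ x x' : X, (∀ i, 0 < ψ i (d i) (p i x)) → (∀ i, 0 < ψ i (d i) (p i x')) →
        |φ x - φ x'| ≤ 2 / (s : ℝ) := by
  have hs0 : (0:ℝ) < s := by exact_mod_cast hs
  set f : ℕ → X → ℝ := fun j x => max 0 (1 / (s:ℝ) - |φ x - (j:ℝ)/(s:ℝ)|) with hf
  have hfm : ∀ j, Measurable (f j) := fun j =>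
    measurable_const.max (measurable_const.sub ((hφm.sub measurable_const).abs))
  have hfint : ∀ j, Integrable (f j) ω := by
    intro j
    refine Integrable.mono' (integrable_const (1/(s:ℝ))) (hfm j).aestronglyMeasurable ?_
    filter_upwards with x
    rw [Real.norm_eq_abs, abs_of_nonneg (le_max_left 0 _)]
    have := abs_nonneg (φ x - (j:ℝ)/(s:ℝ))
    exact max_le (by positivity) (by linarith)
  -- there is j with large integral
  have hexists : ∃ j ≤ s, 1 / ((s:ℝ) * ((s:ℝ) + 1)) ≤ ∫ x, f j x ∂ω := by
    by_contra hcon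
    push_neg at hcon
    have hsumlt : ∑ j ∈ Finset.range (s+1), ∫ x, f j x ∂ω <
        ∑ j ∈ Finset.range (s+1), 1 / ((s:ℝ) * ((s:ℝ) + 1)) := by
      apply Finset.sum_lt_sum_of_nonempty (by simp)
      intro j hj
      exact hcon j (by simpa [Nat.lt_succ_iff] using Finset.mem_range.mp hj)
    rw [Finset.sum_const, Finset.card_range] at hsumlt
    have hconst : ((s:ℝ)+1) • (1 / ((s:ℝ) * ((s:ℝ) + 1))) = 1/(s:ℝ) := by
      rw [smul_eq_mul]; field_simp
    have hcast : ((s+1:ℕ):ℝ) = (s:ℝ)+1 := by push_cast; ring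
    have hsum : ∑ j ∈ Finset.range (s+1), ∫ x, f j x ∂ω = 1/(s:ℝ) := by
      rw [← integral_finset_sum _ (fun j _ => hfint j)]
      have : ∀ x : X, ∑ j ∈ Finset.range (s+1), f j x = 1/(s:ℝ) := fun x =>
        key_sum s hs (φ x) (hφ01 x).1 (hφ01 x).2
      simp only [this]
      simp [measure_univ]
    rw [hsum] at hsumlt
    have : ((s+1:ℕ):ℝ) • (1 / ((s:ℝ) * ((s:ℝ) + 1))) = 1/(s:ℝ) := by
      rw [hcast]; exact hconst
    rw [← Nat.cast_smul_eq_nsmul ℝ] at hsumlt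
    rw [this] at hsumlt
    exact lt_irrefl _ hsumlt
  obtain ⟨j, hjs, hjint⟩ := hexists
  obtain ⟨d, hd1, hd2⟩ := hyp j hjs hjint
  refine ⟨d, hd2, fun x x' hx hx' => ?_⟩
  have h1 := hd1 x hx
  have h2 := hd1 x' hx'
  have : |φ x - φ x'| ≤ |φ x - (j:ℝ)/s| + |φ x' - (j:ℝ)/s| := by
    rw [abs_sub_comm (φ x') _]
    exact abs_sub_le _ _ _ |>.trans (by rw [abs_sub_comm ((j:ℝ)/s) (φ x')])
  have : |φ x - φ x'| ≤ 1/(s:ℝ) + 1/(s:ℝ) := by linarith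
  have h3 : (1:ℝ)/s + 1/s = 2/s := by ring
  linarith [this]
end

section
/- Let n ≥ 1 be an integer and ε > 0. Let V be a set of vectors v = (v_1, …, v_n) with all v_i ∈ [0, 1], and let C be a finite set of vectors in ℝ^n such that for every v ∈ V there is c ∈ C with |v_i − c_i| ≤ ε/4 for all 1 ≤ i ≤ n. Then the number of sign vectors σ ∈ {−1, 1}^n for which there exists v ∈ V with |Σ_{i=1}^n σ_i v_i| > nε/2 is at most 2^{n+1} · |C| · exp(−nε²/32). -/
open scoped Classical

open Finset

private lemma tail_bound (n : ℕ) (c : Fin n → ℝ) (hc : ∀ i, c i ∈ Set.Icc (0:ℝ) 1)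
    (t a : ℝ) (ht : 0 ≤ t) :
    ((univ.filter (fun σ : Fin n → Bool =>
        a < ∑ i, (if σ i then (1:ℝ) else -1) * c i)).card : ℝ)
      ≤ 2 ^ n * Real.exp ((n : ℝ) * t ^ 2 / 2 - t * a) := by
  have h1 : ((univ.filter (fun σ : Fin n → Bool =>
        a < ∑ i, (if σ i then (1:ℝ) else -1) * c i)).card : ℝ)
      ≤ ∑ σ : Fin n → Bool,
          Real.exp (t * ((∑ i, (if σ i then (1:ℝ) else -1) * c i) - a)) := by
    rw [Finset.card_eq_sum_ones, Nat.cast_sum]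
    calc ∑ σ ∈ univ.filter (fun σ : Fin n → Bool =>
            a < ∑ i, (if σ i then (1:ℝ) else -1) * c i), ((1:ℕ):ℝ)
        ≤ ∑ σ ∈ univ.filter (fun σ : Fin n → Bool =>
            a < ∑ i, (if σ i then (1:ℝ) else -1) * c i),
            Real.exp (t * ((∑ i, (if σ i then (1:ℝ) else -1) * c i) - a)) := by
          apply Finset.sum_le_sum
          intro σ hσ
          have h := (Finset.mem_filter.mp hσ).2
          simp only [Nat.cast_one]
          exact Real.one_le_exp (mul_nonneg ht (by linarith))
      _ ≤ _ := Finset.sum_le_sum_of_subset_of_nonneg (Finset.filter_subset _ _)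
            (fun _ _ _ => (Real.exp_pos _).le)
  have h2 : ∑ σ : Fin n → Bool,
        Real.exp (t * ((∑ i, (if σ i then (1:ℝ) else -1) * c i) - a))
      = Real.exp (-(t*a)) * ∑ σ : Fin n → Bool,
          ∏ i, Real.exp (t * ((if σ i then (1:ℝ) else -1) * c i)) := by
    rw [Finset.mul_sum]
    refine Finset.sum_congr rfl fun σ _ => ?_
    rw [← Real.exp_sum, ← Real.exp_add]
    congr 1
    rw [mul_sub, Finset.mul_sum]
    ring
  have h3 : ∑ σ : Fin n → Bool,
        ∏ i, Real.exp (t * ((if σ i then (1:ℝ) else -1) * c i))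
      = ∏ i : Fin n, ∑ b : Bool, Real.exp (t * ((if b then (1:ℝ) else -1) * c i)) := by
    rw [Finset.prod_univ_sum, Fintype.piFinset_univ]
  have h4 : ∀ i : Fin n, ∑ b : Bool, Real.exp (t * ((if b then (1:ℝ) else -1) * c i))
      ≤ 2 * Real.exp (t ^ 2 / 2) := by
    intro i
    rw [Fintype.sum_bool]
    have e1 : t * ((if true = true then (1:ℝ) else -1) * c i) = t * c i := by norm_num
    have e2 : t * ((if false = true then (1:ℝ) else -1) * c i) = -(t * c i) := by norm_num
    rw [e1, e2]
    have hcosh : Real.exp (t * c i) + Real.exp (-(t * c i))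
        = 2 * Real.cosh (t * c i) := by
      rw [Real.cosh_eq]; ring
    rw [hcosh]
    have hle : Real.cosh (t * c i) ≤ Real.exp (t ^ 2 / 2) := by
      refine (Real.cosh_le_exp_half_sq _).trans (Real.exp_le_exp.2 ?_)
      have h0 := (hc i).1
      have h1' := (hc i).2
      have hc2 : (c i) ^ 2 ≤ 1 := by nlinarith
      have : (t * c i) ^ 2 ≤ t ^ 2 := by
        calc (t * c i) ^ 2 = t ^ 2 * (c i) ^ 2 := by ring
          _ ≤ t ^ 2 * 1 := mul_le_mul_of_nonneg_left hc2 (sq_nonneg t)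
          _ = t ^ 2 := by ring
      linarith
    linarith
  have h5 : ∏ i : Fin n, (2 * Real.exp (t ^ 2 / 2))
      = 2 ^ n * Real.exp ((n : ℝ) * t ^ 2 / 2) := by
    rw [Finset.prod_const, Finset.card_univ, Fintype.card_fin, mul_pow,
      ← Real.exp_nat_mul]
    ring_nf
  have h6 : ∏ i : Fin n, ∑ b : Bool, Real.exp (t * ((if b then (1:ℝ) else -1) * c i))
      ≤ 2 ^ n * Real.exp ((n : ℝ) * t ^ 2 / 2) := by
    rw [← h5]
    refine Finset.prod_le_prod (fun i _ => ?_) (fun i _ => h4 i)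
    rw [Fintype.sum_bool]
    positivity
  calc ((univ.filter (fun σ : Fin n → Bool =>
        a < ∑ i, (if σ i then (1:ℝ) else -1) * c i)).card : ℝ)
      ≤ Real.exp (-(t*a)) * (2 ^ n * Real.exp ((n : ℝ) * t ^ 2 / 2)) := by
        rw [h2, h3] at h1
        refine h1.trans ?_
        exact mul_le_mul_of_nonneg_left h6 (Real.exp_pos _).le
    _ = 2 ^ n * Real.exp ((n : ℝ) * t ^ 2 / 2 - t * a) := by
        rw [Real.exp_sub, Real.exp_neg]
        field_simp

private lemma abs_tail_bound (n : ℕ) (c : Fin n → ℝ) (hc : ∀ i, c i ∈ Set.Icc (0:ℝ) 1)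
    (t a : ℝ) (ht : 0 ≤ t) :
    ((univ.filter (fun σ : Fin n → Bool =>
        a < |∑ i, (if σ i then (1:ℝ) else -1) * c i|)).card : ℝ)
      ≤ 2 ^ (n + 1) * Real.exp ((n : ℝ) * t ^ 2 / 2 - t * a) := by
  have hneg : ∀ σ : Fin n → Bool,
      (∑ i, (if (!σ i) then (1:ℝ) else -1) * c i)
        = -∑ i, (if σ i then (1:ℝ) else -1) * c i := by
    intro σ
    rw [← Finset.sum_neg_distrib]
    exact Finset.sum_congr rfl fun i _ => by cases h : σ i <;> simp [h]
  have hcardneg : (univ.filter (fun σ : Fin n → Bool =>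
        a < -∑ i, (if σ i then (1:ℝ) else -1) * c i)).card
      = (univ.filter (fun σ : Fin n → Bool =>
        a < ∑ i, (if σ i then (1:ℝ) else -1) * c i)).card := by
    apply Finset.card_bij' (fun σ _ => fun i => !σ i) (fun σ _ => fun i => !σ i)
    · intro σ hσ
      simp only [Finset.mem_filter, Finset.mem_univ, true_and] at hσ ⊢
      rw [hneg σ]
      linarith
    · intro σ hσ
      simp only [Finset.mem_filter, Finset.mem_univ, true_and] at hσ ⊢
      rw [hneg σ]
      linarith
    · intro σ _; funext i; simp
    · intro σ _; funext i; simp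
  have hsplit : (univ.filter (fun σ : Fin n → Bool =>
        a < |∑ i, (if σ i then (1:ℝ) else -1) * c i|))
      ⊆ (univ.filter (fun σ : Fin n → Bool =>
          a < ∑ i, (if σ i then (1:ℝ) else -1) * c i))
        ∪ (univ.filter (fun σ : Fin n → Bool =>
          a < -∑ i, (if σ i then (1:ℝ) else -1) * c i)) := by
    intro σ hσ
    simp only [Finset.mem_filter, Finset.mem_univ, true_and, Finset.mem_union] at hσ ⊢
    rcases lt_abs.mp hσ with h | h
    · exact Or.inl h
    · exact Or.inr h
  have hcard := (Finset.card_le_card hsplit).trans (Finset.card_union_le _ _)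
  rw [hcardneg] at hcard
  have htb := tail_bound n c hc t a ht
  calc ((univ.filter (fun σ : Fin n → Bool =>
        a < |∑ i, (if σ i then (1:ℝ) else -1) * c i|)).card : ℝ)
      ≤ ((univ.filter (fun σ : Fin n → Bool =>
          a < ∑ i, (if σ i then (1:ℝ) else -1) * c i)).card : ℝ)
        + ((univ.filter (fun σ : Fin n → Bool =>
          a < ∑ i, (if σ i then (1:ℝ) else -1) * c i)).card : ℝ) := by
        exact_mod_cast hcard
    _ ≤ 2 ^ n * Real.exp ((n : ℝ) * t ^ 2 / 2 - t * a)
        + 2 ^ n * Real.exp ((n : ℝ) * t ^ 2 / 2 - t * a) := add_le_add htb htb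
    _ = 2 ^ (n + 1) * Real.exp ((n : ℝ) * t ^ 2 / 2 - t * a) := by ring

/-- Counting estimate: if `C` is an `ℓ∞` `ε/4`-cover of a set `V` of `[0,1]`-valued
vectors, then the number of sign vectors `σ ∈ {−1,1}^n` realizing `|σ · v| > nε/2` for
some `v ∈ V` is at most `2^{n+1} · |C| · exp(−nε²/32)`. -/
theorem stmt15 (n : ℕ) (hn : 1 ≤ n) (ε : ℝ) (hε : 0 < ε)
    (V : Set (Fin n → ℝ)) (hV : ∀ v ∈ V, ∀ i, v i ∈ Set.Icc (0 : ℝ) 1)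
    (C : Finset (Fin n → ℝ))
    (hC : ∀ v ∈ V, ∃ c ∈ C, ∀ i, |v i - c i| ≤ ε / 4) :
    ((Finset.univ.filter (fun σ : Fin n → Bool =>
        ∃ v ∈ V, (n : ℝ) * ε / 2 < |∑ i, (if σ i then (1 : ℝ) else -1) * v i|)).card : ℝ)
      ≤ 2 ^ (n + 1) * (C.card : ℝ) * Real.exp (-(n : ℝ) * ε ^ 2 / 32) := by
  set cl : (Fin n → ℝ) → (Fin n → ℝ) := fun c i => max 0 (min 1 (c i)) with hcl
  have hclamp : ∀ v ∈ V, ∀ c : Fin n → ℝ, (∀ i, |v i - c i| ≤ ε / 4) →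
      ∀ i, |v i - cl c i| ≤ ε / 4 := by
    intro v hv c hc i
    have h0 := (hV v hv i).1
    have h1 := (hV v hv i).2
    have h := hc i
    rw [abs_le] at h ⊢
    rcases le_total (c i) 0 with h2 | h2
    · have hcc : cl c i = 0 := by
        simp only [hcl]
        rw [min_eq_right (h2.trans zero_le_one), max_eq_left h2]
      rw [hcc]
      constructor <;> linarith [h.1, h.2]
    · rcases le_total (c i) 1 with h3 | h3
      · have hcc : cl c i = c i := by
          simp only [hcl]
          rw [min_eq_right h3, max_eq_right h2]
        rw [hcc]
        exact ⟨h.1, h.2⟩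
      · have hcc : cl c i = 1 := by
          simp only [hcl]
          rw [min_eq_left h3, max_eq_right zero_le_one]
        rw [hcc]
        constructor <;> linarith [h.1, h.2]
  have hsub : (Finset.univ.filter (fun σ : Fin n → Bool =>
      ∃ v ∈ V, (n : ℝ) * ε / 2 < |∑ i, (if σ i then (1:ℝ) else -1) * v i|))
      ⊆ C.biUnion (fun c => Finset.univ.filter (fun σ : Fin n → Bool =>
        (n : ℝ) * ε / 4 < |∑ i, (if σ i then (1:ℝ) else -1) * cl c i|)) := by
    intro σ hσ
    simp only [Finset.mem_filter, Finset.mem_univ, true_and] at hσ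
    obtain ⟨v, hv, hbig⟩ := hσ
    obtain ⟨c, hcC, hcov⟩ := hC v hv
    rw [Finset.mem_biUnion]
    refine ⟨c, hcC, Finset.mem_filter.mpr ⟨Finset.mem_univ _, ?_⟩⟩
    have hdiff : |(∑ i, (if σ i then (1:ℝ) else -1) * v i)
        - ∑ i, (if σ i then (1:ℝ) else -1) * cl c i| ≤ (n : ℝ) * (ε / 4) := by
      rw [← Finset.sum_sub_distrib]
      calc |∑ i, ((if σ i then (1:ℝ) else -1) * v i
              - (if σ i then (1:ℝ) else -1) * cl c i)|
          ≤ ∑ i, |(if σ i then (1:ℝ) else -1) * v i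
              - (if σ i then (1:ℝ) else -1) * cl c i| :=
            Finset.abs_sum_le_sum_abs _ _
        _ ≤ ∑ _i : Fin n, (ε / 4) := by
            apply Finset.sum_le_sum
            intro i _
            have he : (if σ i then (1:ℝ) else -1) * v i
                - (if σ i then (1:ℝ) else -1) * cl c i
                = (if σ i then (1:ℝ) else -1) * (v i - cl c i) := by ring
            rw [he, abs_mul]
            have hs : |(if σ i then (1:ℝ) else -1)| = 1 := by cases h : σ i <;> simp [h]
            rw [hs, one_mul]
            exact hclamp v hv c hcov i
        _ = (n : ℝ) * (ε / 4) := by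
            rw [Finset.sum_const, Finset.card_univ, Fintype.card_fin, nsmul_eq_mul]
    have habs := abs_sub_abs_le_abs_sub (∑ i, (if σ i then (1:ℝ) else -1) * v i)
        (∑ i, (if σ i then (1:ℝ) else -1) * cl c i)
    linarith [hbig, hdiff, habs]
  have hcount : ∀ c ∈ C, ((Finset.univ.filter (fun σ : Fin n → Bool =>
      (n : ℝ) * ε / 4 < |∑ i, (if σ i then (1:ℝ) else -1) * cl c i|)).card : ℝ)
      ≤ 2 ^ (n + 1) * Real.exp (-(n : ℝ) * ε ^ 2 / 32) := by
    intro c _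
    have hb := abs_tail_bound n (cl c)
      (fun i => ⟨le_max_left _ _, max_le zero_le_one (min_le_left _ _)⟩)
      (ε / 4) ((n : ℝ) * ε / 4) (by linarith)
    have harg : (n : ℝ) * (ε/4) ^ 2 / 2 - (ε/4) * ((n : ℝ) * ε / 4)
        = -(n : ℝ) * ε ^ 2 / 32 := by ring
    rwa [harg] at hb
  calc ((Finset.univ.filter (fun σ : Fin n → Bool =>
        ∃ v ∈ V, (n : ℝ) * ε / 2 < |∑ i, (if σ i then (1:ℝ) else -1) * v i|)).card : ℝ)
      ≤ ((C.biUnion (fun c => Finset.univ.filter (fun σ : Fin n → Bool =>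
          (n : ℝ) * ε / 4 < |∑ i, (if σ i then (1:ℝ) else -1) * cl c i|))).card : ℝ) :=
        Nat.cast_le.2 (Finset.card_le_card hsub)
    _ ≤ ∑ c ∈ C, ((Finset.univ.filter (fun σ : Fin n → Bool =>
          (n : ℝ) * ε / 4 < |∑ i, (if σ i then (1:ℝ) else -1) * cl c i|)).card : ℝ) := by
        exact_mod_cast Finset.card_biUnion_le
    _ ≤ ∑ _c ∈ C, 2 ^ (n + 1) * Real.exp (-(n : ℝ) * ε ^ 2 / 32) :=
        Finset.sum_le_sum hcount
    _ = (C.card : ℝ) * (2 ^ (n + 1) * Real.exp (-(n : ℝ) * ε ^ 2 / 32)) := by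
        rw [Finset.sum_const, nsmul_eq_mul]
    _ = 2 ^ (n + 1) * (C.card : ℝ) * Real.exp (-(n : ℝ) * ε ^ 2 / 32) := by ring
end

section
/- Let (Ω, 𝒜, μ) be a probability space, n ≥ 1 an integer, ε > 0, F a nonempty finite set of measurable functions Ω → [0, 1], and 𝒩 a positive integer such that for every (x_1, …, x_n) ∈ Ω^n there is a set C ⊆ ℝ^n with |C| ≤ 𝒩 such that for every f ∈ F some c ∈ C satisfies |f(x_k) − c_k| ≤ ε/4 for all 1 ≤ k ≤ n. Then, with respect to the 2n-fold product measure μ^{⊗2n} on Ω^{2n}, the measure of the set { (x_1, …, x_n, x_1', …, x_n') : max_{f ∈ F} |(1/n) Σ_{k=1}^n f(x_k) − (1/n) Σ_{k=1}^n f(x_k')| > ε } is at most 4 · 𝒩 · exp(−nε²/32). -/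
open MeasureTheory Finset
open scoped ENNReal

noncomputable section

open scoped Classical

/-- sign attached to a boolean: `true ↦ -1`, `false ↦ 1`. -/
def sg (b : Bool) : ℝ := if b then -1 else 1

lemma sg_abs (b : Bool) : |sg b| = 1 := by cases b <;> simp [sg]

lemma clamp_mem (b : ℝ) : max 0 (min 1 b) ∈ Set.Icc (0:ℝ) 1 :=
  ⟨le_max_left _ _, max_le zero_le_one (min_le_left _ _)⟩

lemma clamp_close {a b : ℝ} (ha0 : 0 ≤ a) (ha1 : a ≤ 1) :
    |a - max 0 (min 1 b)| ≤ |a - b| := by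
  rcases le_total b 0 with hb | hb
  · rw [min_eq_right (hb.trans zero_le_one), max_eq_left hb, sub_zero,
      abs_of_nonneg ha0, abs_of_nonneg (by linarith)]
    linarith
  · rcases le_total 1 b with hb1 | hb1
    · rw [min_eq_left hb1, max_eq_right zero_le_one, abs_of_nonpos (by linarith),
        abs_of_nonpos (by linarith)]
      linarith
    · rw [min_eq_right hb1, max_eq_right hb]

lemma hoeff_one (n : ℕ) (hn : 1 ≤ n) (c : Fin n → ℝ) (hc : ∀ k, |c k| ≤ 1)
    (t : ℝ) (ht : 0 < t) :
    (((Finset.univ.filter fun σ : Fin n → Bool => t < ∑ k, sg (σ k) * c k).card : ℝ))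
      ≤ 2 ^ n * Real.exp (-t ^ 2 / (2 * n)) := by
  have hn0 : (0:ℝ) < n := by exact_mod_cast hn
  set s : ℝ := t / n with hs
  have hs0 : 0 < s := div_pos ht hn0
  set A := Finset.univ.filter fun σ : Fin n → Bool => t < ∑ k, sg (σ k) * c k with hA
  have key : (A.card : ℝ) * Real.exp (s * t) ≤ 2 ^ n * Real.exp (n * (s ^ 2 / 2)) := by
    calc (A.card : ℝ) * Real.exp (s * t)
        ≤ ∑ σ ∈ A, Real.exp (s * ∑ k, sg (σ k) * c k) := by
          rw [← nsmul_eq_mul]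
          refine Finset.card_nsmul_le_sum _ _ _ fun σ hσ => ?_
          have hσ' := (Finset.mem_filter.1 hσ).2
          exact Real.exp_le_exp.2 (mul_le_mul_of_nonneg_left hσ'.le hs0.le)
      _ ≤ ∑ σ : Fin n → Bool, Real.exp (s * ∑ k, sg (σ k) * c k) :=
          Finset.sum_le_sum_of_subset_of_nonneg (Finset.filter_subset _ _)
            (fun _ _ _ => (Real.exp_pos _).le)
      _ = ∑ σ : Fin n → Bool, ∏ k, Real.exp (s * (sg (σ k) * c k)) := by
          simp_rw [Finset.mul_sum, Real.exp_sum]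
      _ = ∏ k, ∑ b : Bool, Real.exp (s * (sg b * c k)) := by
          rw [Finset.prod_univ_sum]
          rw [Fintype.piFinset_univ]
      _ ≤ ∏ k : Fin n, 2 * Real.exp (s ^ 2 / 2) := by
          refine Finset.prod_le_prod (fun k _ => ?_) (fun k _ => ?_)
          · positivity
          · have : ∑ b : Bool, Real.exp (s * (sg b * c k))
                = 2 * Real.cosh (s * c k) := by
              rw [Fintype.sum_bool, Real.cosh_eq]
              simp [sg]
              ring
            rw [this]
            have h1 : Real.cosh (s * c k) ≤ Real.exp ((s * c k) ^ 2 / 2) :=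
              Real.cosh_le_exp_half_sq _
            have h2 : (s * c k) ^ 2 / 2 ≤ s ^ 2 / 2 := by
              have hck : (c k) ^ 2 ≤ 1 := by
                nlinarith [sq_abs (c k), hc k, abs_nonneg (c k)]
              nlinarith [mul_pow s (c k) 2, sq_nonneg s]
            nlinarith [Real.exp_le_exp.2 h2, Real.cosh_pos (s * c k)]
      _ = 2 ^ n * Real.exp (n * (s ^ 2 / 2)) := by
          rw [Finset.prod_const, Finset.card_univ, Fintype.card_fin, mul_pow,
            ← Real.exp_nat_mul]
  have hcard : (A.card : ℝ) ≤ 2 ^ n * Real.exp (n * (s ^ 2 / 2) - s * t) := by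
    have := (le_div_iff₀ (Real.exp_pos (s * t))).2 key
    rwa [mul_div_assoc, ← Real.exp_sub] at this
  have hexp : (n : ℝ) * (s ^ 2 / 2) - s * t = -t ^ 2 / (2 * n) := by
    rw [hs]; field_simp; ring
  rwa [hexp] at hcard

lemma hoeff_abs (n : ℕ) (hn : 1 ≤ n) (c : Fin n → ℝ) (hc : ∀ k, |c k| ≤ 1)
    (t : ℝ) (ht : 0 < t) :
    (((Finset.univ.filter fun σ : Fin n → Bool => t < |∑ k, sg (σ k) * c k|).card : ℝ))
      ≤ 2 ^ n * 2 * Real.exp (-t ^ 2 / (2 * n)) := by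
  have h1 := hoeff_one n hn c hc t ht
  have h2 := hoeff_one n hn (fun k => -(c k)) (fun k => by rw [abs_neg]; exact hc k) t ht
  have hsub : (Finset.univ.filter fun σ : Fin n → Bool => t < |∑ k, sg (σ k) * c k|)
      ⊆ (Finset.univ.filter fun σ : Fin n → Bool => t < ∑ k, sg (σ k) * c k)
        ∪ (Finset.univ.filter fun σ : Fin n → Bool => t < ∑ k, sg (σ k) * (-(c k))) := by
    intro σ hσ
    have hσ' := (Finset.mem_filter.1 hσ).2
    rcases lt_abs.1 hσ' with h | h
    · exact Finset.mem_union_left _ (Finset.mem_filter.2 ⟨Finset.mem_univ _, h⟩)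
    · refine Finset.mem_union_right _ (Finset.mem_filter.2 ⟨Finset.mem_univ _, ?_⟩)
      simpa [mul_neg, ← Finset.sum_neg_distrib] using h
  have hcard := Finset.card_le_card hsub
  have hcu := Finset.card_union_le
    (Finset.univ.filter fun σ : Fin n → Bool => t < ∑ k, sg (σ k) * c k)
    (Finset.univ.filter fun σ : Fin n → Bool => t < ∑ k, sg (σ k) * (-(c k)))
  have : (((Finset.univ.filter fun σ : Fin n → Bool =>
      t < |∑ k, sg (σ k) * c k|).card : ℝ)) ≤
      ((Finset.univ.filter fun σ : Fin n → Bool => t < ∑ k, sg (σ k) * c k).card : ℝ)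
      + ((Finset.univ.filter fun σ : Fin n → Bool => t < ∑ k, sg (σ k) * (-(c k))).card : ℝ) := by
    exact_mod_cast hcard.trans hcu
  linarith

lemma comb (n : ℕ) (hn : 1 ≤ n) (ε : ℝ) (hε : 0 < ε) {ι : Type*} [Fintype ι]
    (a b : ι → Fin n → ℝ)
    (C C' : Finset (Fin n → ℝ))
    (hCv : ∀ c ∈ C, ∀ k, |c k| ≤ 1) (hC'v : ∀ c ∈ C', ∀ k, |c k| ≤ 1)
    (hra : ∀ i, ∃ c ∈ C, ∀ k, |a i k - c k| ≤ ε / 4)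
    (hrb : ∀ i, ∃ c ∈ C', ∀ k, |b i k - c k| ≤ ε / 4) :
    ((Finset.univ.filter fun σ : Fin n → Bool =>
        ∃ i, (n : ℝ) * ε < |∑ k, sg (σ k) * (a i k - b i k)|).card : ℝ)
      ≤ ((C.card + C'.card : ℕ) : ℝ)
        * (2 ^ n * 2 * Real.exp (-((n : ℝ) * ε / 4) ^ 2 / (2 * n))) := by
  have hn0 : (0:ℝ) < n := by exact_mod_cast hn
  have ht : (0:ℝ) < n * ε / 4 := by positivity
  set t : ℝ := n * ε / 4 with htdef
  set B : Finset (Fin n → Bool) := Finset.univ.filter fun σ : Fin n → Bool =>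
      ∃ i, (n : ℝ) * ε < |∑ k, sg (σ k) * (a i k - b i k)| with hB
  have hsub : B ⊆ (C ∪ C').biUnion (fun c =>
      Finset.univ.filter fun σ : Fin n → Bool => t < |∑ k, sg (σ k) * c k|) := by
    intro σ hσ
    obtain ⟨i, hi⟩ := (Finset.mem_filter.1 hσ).2
    obtain ⟨c, hcC, hcd⟩ := hra i
    obtain ⟨c', hc'C, hc'd⟩ := hrb i
    set S := ∑ k, sg (σ k) * (a i k - b i k) with hS
    set Sc := ∑ k, sg (σ k) * c k with hSc
    set Sc' := ∑ k, sg (σ k) * c' k with hSc'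
    set T1 := ∑ k, sg (σ k) * (a i k - c k) with hT1
    set T2 := ∑ k, sg (σ k) * (b i k - c' k) with hT2
    have hid : S = Sc - Sc' + T1 - T2 := by
      rw [hS, hSc, hSc', hT1, hT2, ← Finset.sum_sub_distrib, ← Finset.sum_add_distrib,
        ← Finset.sum_sub_distrib]
      exact Finset.sum_congr rfl fun k _ => by ring
    have hT1b : |T1| ≤ (n : ℝ) * (ε / 4) := by
      calc |T1| ≤ ∑ k, |sg (σ k) * (a i k - c k)| := Finset.abs_sum_le_sum_abs _ _
        _ ≤ ∑ _k : Fin n, (ε / 4) := Finset.sum_le_sum fun k _ => by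
            rw [abs_mul, sg_abs, one_mul]; exact hcd k
        _ = (n : ℝ) * (ε / 4) := by
            rw [Finset.sum_const, Finset.card_univ, Fintype.card_fin, nsmul_eq_mul]
    have hT2b : |T2| ≤ (n : ℝ) * (ε / 4) := by
      calc |T2| ≤ ∑ k, |sg (σ k) * (b i k - c' k)| := Finset.abs_sum_le_sum_abs _ _
        _ ≤ ∑ _k : Fin n, (ε / 4) := Finset.sum_le_sum fun k _ => by
            rw [abs_mul, sg_abs, one_mul]; exact hc'd k
        _ = (n : ℝ) * (ε / 4) := by
            rw [Finset.sum_const, Finset.card_univ, Fintype.card_fin, nsmul_eq_mul]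
    have hbig : t < |Sc| ∨ t < |Sc'| := by
      by_contra hcon
      push_neg at hcon
      have h1 : |S| ≤ |Sc| + |Sc'| + (|T1| + |T2|) := by
        rw [hid]
        calc |Sc - Sc' + T1 - T2| ≤ |Sc - Sc' + T1| + |T2| := abs_sub _ _
          _ ≤ (|Sc - Sc'| + |T1|) + |T2| := by
              have := abs_add_le (Sc - Sc') T1; linarith
          _ ≤ (|Sc| + |Sc'| + |T1|) + |T2| := by
              have := abs_sub Sc Sc'; linarith
          _ = |Sc| + |Sc'| + (|T1| + |T2|) := by ring
      have := hi
      rw [htdef] at hcon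
      linarith [hcon.1, hcon.2, hT1b, hT2b, h1]
    rcases hbig with h | h
    · exact Finset.mem_biUnion.2 ⟨c, Finset.mem_union_left _ hcC,
        Finset.mem_filter.2 ⟨Finset.mem_univ _, h⟩⟩
    · exact Finset.mem_biUnion.2 ⟨c', Finset.mem_union_right _ hc'C,
        Finset.mem_filter.2 ⟨Finset.mem_univ _, h⟩⟩
  calc (B.card : ℝ)
      ≤ (((C ∪ C').biUnion (fun c => Finset.univ.filter fun σ : Fin n → Bool =>
          t < |∑ k, sg (σ k) * c k|)).card : ℝ) := by
        exact_mod_cast Finset.card_le_card hsub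
    _ ≤ ((∑ c ∈ C ∪ C', (Finset.univ.filter fun σ : Fin n → Bool =>
          t < |∑ k, sg (σ k) * c k|).card : ℕ) : ℝ) := by
        exact_mod_cast Finset.card_biUnion_le
    _ = ∑ c ∈ C ∪ C', ((Finset.univ.filter fun σ : Fin n → Bool =>
          t < |∑ k, sg (σ k) * c k|).card : ℝ) := by push_cast; rfl
    _ ≤ ∑ _c ∈ C ∪ C', 2 ^ n * 2 * Real.exp (-t ^ 2 / (2 * n)) := by
        refine Finset.sum_le_sum fun c hc => ?_
        rcases Finset.mem_union.1 hc with h | h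
        · exact hoeff_abs n hn c (hCv c h) t ht
        · exact hoeff_abs n hn c (hC'v c h) t ht
    _ = ((C ∪ C').card : ℝ) * (2 ^ n * 2 * Real.exp (-t ^ 2 / (2 * n))) := by
        rw [Finset.sum_const, nsmul_eq_mul]
    _ ≤ ((C.card + C'.card : ℕ) : ℝ)
        * (2 ^ n * 2 * Real.exp (-((n : ℝ) * ε / 4) ^ 2 / (2 * n))) := by
        rw [htdef]
        refine mul_le_mul_of_nonneg_right ?_ (by positivity)
        exact_mod_cast Finset.card_union_le C C'

/-- the coordinate-swapping map on a double sample. -/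
def swp (n : ℕ) {Ω : Type*} (σ : Fin n → Bool) (q : (Fin n → Ω) × (Fin n → Ω)) :
    (Fin n → Ω) × (Fin n → Ω) :=
  (fun k => if σ k then q.2 k else q.1 k, fun k => if σ k then q.1 k else q.2 k)

lemma swp_measurePreserving {Ω : Type*} [MeasurableSpace Ω] (μ : Measure Ω)
    [IsProbabilityMeasure μ] (n : ℕ) (σ : Fin n → Bool) :
    MeasurePreserving (swp n (Ω := Ω) σ)
      ((Measure.pi fun _ : Fin n => μ).prod (Measure.pi fun _ : Fin n => μ))
      ((Measure.pi fun _ : Fin n => μ).prod (Measure.pi fun _ : Fin n => μ)) := by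
  set e := MeasurableEquiv.arrowProdEquivProdArrow Ω Ω (Fin n) with he
  have h2 : MeasurePreserving e (Measure.pi fun _ : Fin n => μ.prod μ)
      ((Measure.pi fun _ : Fin n => μ).prod (Measure.pi fun _ : Fin n => μ)) :=
    measurePreserving_arrowProdEquivProdArrow Ω Ω (Fin n) (fun _ => μ) (fun _ => μ)
  have h1 : MeasurePreserving (fun (g : Fin n → Ω × Ω) (k : Fin n) =>
      (if σ k then Prod.swap else id) (g k))
      (Measure.pi fun _ : Fin n => μ.prod μ) (Measure.pi fun _ : Fin n => μ.prod μ) :=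
    measurePreserving_pi _ _ (fun k => by
      cases hk : σ k
      · simpa [hk] using MeasurePreserving.id (μ.prod μ)
      · simpa [hk] using MeasureTheory.Measure.measurePreserving_swap (μ := μ) (ν := μ))
  have hcomp := (h2.comp h1).comp (MeasurePreserving.symm e h2)
  have heq : swp n (Ω := Ω) σ
      = ⇑e ∘ (fun (g : Fin n → Ω × Ω) (k : Fin n) => (if σ k then Prod.swap else id) (g k))
        ∘ ⇑e.symm := by
    funext q
    apply Prod.ext <;> funext k <;>
      simp only [swp, Function.comp_apply, he, MeasurableEquiv.arrowProdEquivProdArrow,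
        Equiv.arrowProdEquivProdArrow, MeasurableEquiv.coe_mk, Equiv.coe_fn_mk,
        MeasurableEquiv.symm_mk, Equiv.coe_fn_symm_mk] <;>
      cases σ k <;> simp
  rw [heq]; exact hcomp

/-- VC-type deviation inequality: if the family `f i` admits `ℓ∞` `ε/4`-covers of size
at most `𝒩` on every `n`-tuple of points, then with respect to the `2n`-fold product
measure, the probability that some `f i` has empirical averages over the two halves
differing by more than `ε` is at most `4 · 𝒩 · exp(−nε²/32)`. -/
theorem stmt16 {Ω : Type*} [MeasurableSpace Ω] (μ : Measure Ω) [IsProbabilityMeasure μ]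
    (n : ℕ) (hn : 1 ≤ n) (ε : ℝ) (hε : 0 < ε)
    {ι : Type*} [Fintype ι] [Nonempty ι]
    (f : ι → Ω → ℝ) (hfm : ∀ i, Measurable (f i))
    (hf01 : ∀ i x, f i x ∈ Set.Icc (0 : ℝ) 1)
    (𝒩 : ℕ) (h𝒩 : 0 < 𝒩)
    (hcov : ∀ x : Fin n → Ω, ∃ C : Finset (Fin n → ℝ), C.card ≤ 𝒩 ∧
      ∀ i : ι, ∃ c ∈ C, ∀ k, |f i (x k) - c k| ≤ ε / 4) :
    ((Measure.pi fun _ : Fin n => μ).prod (Measure.pi fun _ : Fin n => μ))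
      {q : (Fin n → Ω) × (Fin n → Ω) |
        ∃ i : ι, ε < |(1 / (n : ℝ)) * ∑ k, f i (q.1 k) -
          (1 / (n : ℝ)) * ∑ k, f i (q.2 k)|}
      ≤ ENNReal.ofReal (4 * (𝒩 : ℝ) * Real.exp (-(n : ℝ) * ε ^ 2 / 32)) := by
  have hn0 : (0:ℝ) < n := by exact_mod_cast hn
  set ν := Measure.pi fun _ : Fin n => μ with hν
  set P := ν.prod ν with hP
  set E := {q : (Fin n → Ω) × (Fin n → Ω) |
      ∃ i : ι, ε < |(1 / (n : ℝ)) * ∑ k, f i (q.1 k) -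
        (1 / (n : ℝ)) * ∑ k, f i (q.2 k)|} with hEdef
  have hgm : ∀ i : ι, Measurable fun q : (Fin n → Ω) × (Fin n → Ω) =>
      (1 / (n : ℝ)) * ∑ k, f i (q.1 k) - (1 / (n : ℝ)) * ∑ k, f i (q.2 k) := by
    intro i
    apply Measurable.sub <;> apply Measurable.const_mul
    · exact Finset.measurable_sum _ fun k _ =>
        (hfm i).comp ((measurable_pi_apply k).comp measurable_fst)
    · exact Finset.measurable_sum _ fun k _ =>
        (hfm i).comp ((measurable_pi_apply k).comp measurable_snd)
  have hE : MeasurableSet E := by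
    have : E = ⋃ i : ι, {q : (Fin n → Ω) × (Fin n → Ω) |
        ε < |(1 / (n : ℝ)) * ∑ k, f i (q.1 k) - (1 / (n : ℝ)) * ∑ k, f i (q.2 k)|} := by
      ext q; simp [hEdef, Set.mem_iUnion]
    rw [this]
    exact MeasurableSet.iUnion fun i => measurableSet_lt measurable_const (hgm i).abs
  -- pointwise counting bound
  have hpoint : ∀ q : (Fin n → Ω) × (Fin n → Ω),
      ((Finset.univ.filter fun σ : Fin n → Bool => swp n σ q ∈ E).card : ℝ)
        ≤ 2 ^ n * (4 * (𝒩 : ℝ) * Real.exp (-(n : ℝ) * ε ^ 2 / 32)) := by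
    intro q
    obtain ⟨C0, hC0card, hC0⟩ := hcov q.1
    obtain ⟨C0', hC0'card, hC0'⟩ := hcov q.2
    set cl : (Fin n → ℝ) → (Fin n → ℝ) := fun c k => max 0 (min 1 (c k)) with hcl
    set C := C0.image cl with hC
    set C' := C0'.image cl with hC'
    have hCv : ∀ c ∈ C, ∀ k, |c k| ≤ 1 := by
      intro c hc k
      obtain ⟨c0, _, rfl⟩ := Finset.mem_image.1 hc
      have h := clamp_mem (c0 k)
      rw [abs_le]; exact ⟨by linarith [h.1], h.2⟩
    have hC'v : ∀ c ∈ C', ∀ k, |c k| ≤ 1 := by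
      intro c hc k
      obtain ⟨c0, _, rfl⟩ := Finset.mem_image.1 hc
      have h := clamp_mem (c0 k)
      rw [abs_le]; exact ⟨by linarith [h.1], h.2⟩
    have hra : ∀ i : ι, ∃ c ∈ C, ∀ k, |f i (q.1 k) - c k| ≤ ε / 4 := by
      intro i
      obtain ⟨c0, hc0, hc0d⟩ := hC0 i
      exact ⟨cl c0, Finset.mem_image_of_mem _ hc0, fun k =>
        (clamp_close (hf01 i (q.1 k)).1 (hf01 i (q.1 k)).2).trans (hc0d k)⟩
    have hrb : ∀ i : ι, ∃ c ∈ C', ∀ k, |f i (q.2 k) - c k| ≤ ε / 4 := by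
      intro i
      obtain ⟨c0, hc0, hc0d⟩ := hC0' i
      exact ⟨cl c0, Finset.mem_image_of_mem _ hc0, fun k =>
        (clamp_close (hf01 i (q.2 k)).1 (hf01 i (q.2 k)).2).trans (hc0d k)⟩
    have hcomb := comb n hn ε hε (fun i k => f i (q.1 k)) (fun i k => f i (q.2 k))
      C C' hCv hC'v hra hrb
    have hiff : ∀ σ : Fin n → Bool, (swp n σ q ∈ E ↔
        ∃ i : ι, (n : ℝ) * ε < |∑ k, sg (σ k) * (f i (q.1 k) - f i (q.2 k))|) := by
      intro σ
      simp only [hEdef, Set.mem_setOf_eq]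
      refine exists_congr fun i => ?_
      have hsum : (1 / (n : ℝ)) * ∑ k, f i ((swp n σ q).1 k)
          - (1 / (n : ℝ)) * ∑ k, f i ((swp n σ q).2 k)
          = (1 / (n : ℝ)) * ∑ k, sg (σ k) * (f i (q.1 k) - f i (q.2 k)) := by
        rw [← mul_sub, ← Finset.sum_sub_distrib]
        refine congrArg _ (Finset.sum_congr rfl fun k _ => ?_)
        simp only [swp]
        cases σ k <;> simp [sg] <;> ring
      rw [hsum, abs_mul, abs_of_nonneg (by positivity : (0:ℝ) ≤ 1 / (n : ℝ))]
      rw [show (1 / (n : ℝ)) * |∑ k, sg (σ k) * (f i (q.1 k) - f i (q.2 k))|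
            = |∑ k, sg (σ k) * (f i (q.1 k) - f i (q.2 k))| / n by ring,
        lt_div_iff₀ hn0, mul_comm]
    have hfilter : (Finset.univ.filter fun σ : Fin n → Bool => swp n σ q ∈ E)
        = Finset.univ.filter fun σ : Fin n → Bool =>
            ∃ i : ι, (n : ℝ) * ε < |∑ k, sg (σ k) * (f i (q.1 k) - f i (q.2 k))| :=
      Finset.filter_congr fun σ _ => hiff σ
    rw [hfilter]
    refine hcomb.trans ?_
    have hexp : -((n : ℝ) * ε / 4) ^ 2 / (2 * n) = -(n : ℝ) * ε ^ 2 / 32 := by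
      field_simp; ring
    rw [hexp]
    have hcards : ((C.card + C'.card : ℕ) : ℝ) ≤ 2 * (𝒩 : ℝ) := by
      have h1 : C.card ≤ 𝒩 := (Finset.card_image_le).trans hC0card
      have h2 : C'.card ≤ 𝒩 := (Finset.card_image_le).trans hC0'card
      have h1' : (C.card : ℝ) ≤ (𝒩 : ℝ) := Nat.cast_le.2 h1
      have h2' : (C'.card : ℝ) ≤ (𝒩 : ℝ) := Nat.cast_le.2 h2
      push_cast
      linarith
    calc ((C.card + C'.card : ℕ) : ℝ)
          * (2 ^ n * 2 * Real.exp (-(n : ℝ) * ε ^ 2 / 32))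
        ≤ 2 * (𝒩 : ℝ) * (2 ^ n * 2 * Real.exp (-(n : ℝ) * ε ^ 2 / 32)) :=
          mul_le_mul_of_nonneg_right hcards (by positivity)
      _ = 2 ^ n * (4 * (𝒩 : ℝ) * Real.exp (-(n : ℝ) * ε ^ 2 / 32)) := by ring
  -- measure-theoretic part
  have hTm : ∀ σ : Fin n → Bool, Measurable (swp n (Ω := Ω) σ) := fun σ =>
    (swp_measurePreserving μ n σ).measurable
  have key : ∀ σ : Fin n → Bool,
      ∫⁻ q, E.indicator (1 : ((Fin n → Ω) × (Fin n → Ω)) → ℝ≥0∞) (swp n σ q) ∂P = P E := by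
    intro σ
    rw [← MeasureTheory.lintegral_indicator_one hE]
    exact (swp_measurePreserving μ n σ).lintegral_comp (measurable_one.indicator hE)
  have hsum : (2 ^ n : ℝ≥0∞) * P E
      = ∫⁻ q, ∑ σ : Fin n → Bool, E.indicator (1 : ((Fin n → Ω) × (Fin n → Ω)) → ℝ≥0∞) (swp n σ q) ∂P := by
    rw [lintegral_finset_sum _ (fun σ _ => by exact (measurable_one.indicator hE).comp (hTm σ))]
    simp_rw [key]
    rw [Finset.sum_const, Finset.card_univ]
    have hcard2 : Fintype.card (Fin n → Bool) = 2 ^ n := by simp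
    rw [hcard2, nsmul_eq_mul]
    push_cast
    ring
  have hbound : ∫⁻ q, (∑ σ : Fin n → Bool, E.indicator (1 : ((Fin n → Ω) × (Fin n → Ω)) → ℝ≥0∞) (swp n σ q)) ∂P
      ≤ (2 ^ n : ℝ≥0∞) * ENNReal.ofReal (4 * (𝒩 : ℝ) * Real.exp (-(n : ℝ) * ε ^ 2 / 32)) := by
    have hpw : ∀ q : (Fin n → Ω) × (Fin n → Ω),
        (∑ σ : Fin n → Bool, E.indicator (1 : ((Fin n → Ω) × (Fin n → Ω)) → ℝ≥0∞) (swp n σ q))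
          ≤ (2 ^ n : ℝ≥0∞) * ENNReal.ofReal (4 * (𝒩 : ℝ) * Real.exp (-(n : ℝ) * ε ^ 2 / 32)) := by
      intro q
      have hcount : (∑ σ : Fin n → Bool, E.indicator (1 : ((Fin n → Ω) × (Fin n → Ω)) → ℝ≥0∞) (swp n σ q))
          = (((Finset.univ.filter fun σ : Fin n → Bool => swp n σ q ∈ E).card : ℕ) : ℝ≥0∞) := by
        simp only [Set.indicator_apply, Pi.one_apply]
        rw [Finset.card_filter, Nat.cast_sum]
        exact Finset.sum_congr rfl fun σ _ => by split <;> simp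
      rw [hcount]
      calc (((Finset.univ.filter fun σ : Fin n → Bool => swp n σ q ∈ E).card : ℕ) : ℝ≥0∞)
          = ENNReal.ofReal
            (((Finset.univ.filter fun σ : Fin n → Bool => swp n σ q ∈ E).card : ℕ) : ℝ) :=
            (ENNReal.ofReal_natCast _).symm
        _ ≤ ENNReal.ofReal (2 ^ n * (4 * (𝒩 : ℝ) * Real.exp (-(n : ℝ) * ε ^ 2 / 32))) :=
            ENNReal.ofReal_le_ofReal (hpoint q)
        _ = (2 ^ n : ℝ≥0∞) * ENNReal.ofReal (4 * (𝒩 : ℝ) * Real.exp (-(n : ℝ) * ε ^ 2 / 32)) := by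
            rw [ENNReal.ofReal_mul (by positivity)]
            congr 1
            rw [ENNReal.ofReal_pow (by norm_num)]
            norm_num
    calc ∫⁻ q, (∑ σ : Fin n → Bool, E.indicator (1 : ((Fin n → Ω) × (Fin n → Ω)) → ℝ≥0∞) (swp n σ q)) ∂P
        ≤ ∫⁻ _q, (2 ^ n : ℝ≥0∞)
            * ENNReal.ofReal (4 * (𝒩 : ℝ) * Real.exp (-(n : ℝ) * ε ^ 2 / 32)) ∂P :=
          lintegral_mono hpw
      _ = (2 ^ n : ℝ≥0∞) * ENNReal.ofReal (4 * (𝒩 : ℝ) * Real.exp (-(n : ℝ) * ε ^ 2 / 32)) := by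
          rw [lintegral_const, measure_univ, mul_one]
  have hfin : (2 ^ n : ℝ≥0∞) * P E
      ≤ (2 ^ n : ℝ≥0∞) * ENNReal.ofReal (4 * (𝒩 : ℝ) * Real.exp (-(n : ℝ) * ε ^ 2 / 32)) := by
    rw [hsum]; exact hbound
  exact (ENNReal.mul_le_mul_iff_right (pow_ne_zero _ (by norm_num)) (ENNReal.pow_ne_top ENNReal.ofNat_ne_top)).1 hfin

end
end
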